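/- arXiv:2309.12227 — 9 statements merged into one kernel-verified Lean document; each statement's English description precedes it below -/
import Mathlib

section
/- Let F be a graph and let W be an induced subgraph of F isomorphic to a subdivision of K₄ with at most one unsubdivided edge. Then for every vertex w of W, the graph obtained from W by deleting the closed neighborhood of w (within W) is connected. -/
/-!
Every edge at an internal vertex of a branch path lies on that path, and branch paths are
induced. So the closed neighbourhood `N[w]` meets a branch path through `w` in a segment
around `w`, and any other branch path only in endpoints. Hence every vertex outside `N[w]`
walks along its branch path to a branch vertex outside `N[w]`, and those branch vertices are
pairwise joined by branch paths avoiding `N[w]`. If `w` is internal to the path from `b i` to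
`b j`, the other branch vertices lie outside `N[w]`; if `w` is a branch vertex, it is
adjacent to at most one other branch vertex, since adjacent branch vertices span an
unsubdivided edge.
-/

namespace SimpleGraph

variable {α : Type*} {G : SimpleGraph α}

def closedNbhdCompl (G : SimpleGraph α) (w : α) : Set α := {v | v ≠ w ∧ ¬G.Adj w v}

lemma notMem_closedNbhdCompl {w v : α} : v ∉ G.closedNbhdCompl w ↔ v = w ∨ G.Adj w v := by
  simp [closedNbhdCompl, or_iff_not_imp_left]

lemma Walk.reachable_induce_of_support_subset {s : Set α} {x y u v : α} (p : G.Walk x y)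
    (hp : ∀ z ∈ p.support, z ∈ s) (hu : u ∈ p.support) (hv : v ∈ p.support) :
    (G.induce s).Reachable ⟨u, hp u hu⟩ ⟨v, hp v hv⟩ :=
  (p.connected_induce_support.preconnected ⟨u, hu⟩ ⟨v, hv⟩).map (G.induceHomOfLE hp).toHom

lemma induce_connected_of_reachable_range {ι : Type*} (b : ι → α) {s : Set α} (t₀ : ι)
    (ht₀ : b t₀ ∈ s)
    (hbranch : ∀ t (ht : b t ∈ s), (G.induce s).Reachable ⟨b t, ht⟩ ⟨b t₀, ht₀⟩)
    (hvert : ∀ u (hu : u ∈ s),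
      ∃ t, ∃ ht : b t ∈ s, (G.induce s).Reachable ⟨u, hu⟩ ⟨b t, ht⟩) :
    (G.induce s).Connected := by
  rw [connected_iff_exists_forall_reachable]
  refine ⟨⟨b t₀, ht₀⟩, fun ⟨u, hu⟩ => ?_⟩
  obtain ⟨t, ht, h⟩ := hvert u hu
  exact (h.trans (hbranch t ht)).symm

namespace Walk.IsPath

lemma exists_reachable_induce_end_of_compl_subset_start {s : Set α} {x y u : α}
    {p : G.Walk x y} (hp : p.IsPath)
    (hs : ∀ z ∈ p.support, z ∉ s → z = x) (hu : u ∈ p.support) (hus : u ∈ s) :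
    ∃ hy : y ∈ s, (G.induce s).Reachable ⟨u, hus⟩ ⟨y, hy⟩ := by
  suffices ∃ (z : α) (q : G.Walk z y), u ∈ q.support ∧ ∀ z ∈ q.support, z ∈ s by
    obtain ⟨z, q, huq, hq⟩ := this
    exact ⟨hq y q.end_mem_support,
      q.reachable_induce_of_support_subset hq huq q.end_mem_support⟩
  by_cases hxs : x ∈ s
  · exact ⟨x, p, hu, fun z hz => by_contra fun h => h (hs z hz h ▸ hxs)⟩
  cases p with
  | nil => exact absurd (by simpa using hu) (ne_of_mem_of_not_mem hus hxs)
  | cons h q =>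
    have hxq : x ∉ q.support := (Walk.cons_isPath_iff _ _).1 hp |>.2
    refine ⟨_, q, ?_, fun z hz => by_contra fun h => hxq (hs z (by simp [hz]) h ▸ hz)⟩
    simpa [ne_of_mem_of_not_mem hus hxs] using hu

lemma reachable_induce_of_compl_subset_ends {s : Set α} {x y u z : α} {p : G.Walk x y}
    (hp : p.IsPath) (hs : ∀ v ∈ p.support, v ∉ s → v = x ∨ v = y) (hu : u ∈ p.support)
    (hus : u ∈ s) (hz : z = x ∨ z = y) (hzs : z ∈ s) :
    (G.induce s).Reachable ⟨u, hus⟩ ⟨z, hzs⟩ := by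
  rcases hz with rfl | rfl
  · refine (hp.reverse.exists_reachable_induce_end_of_compl_subset_start (fun v hv hvs => ?_)
      (by simpa using hu) hus).2
    exact ((hs v (by simpa using hv) hvs).resolve_left fun h => hvs (h ▸ hzs))
  · refine (hp.exists_reachable_induce_end_of_compl_subset_start (fun v hv hvs => ?_)
      hu hus).2
    exact ((hs v hv hvs).resolve_right fun h => hvs (h ▸ hzs))

lemma exists_reachable_induce_of_compl_subset_ends {s : Set α} {x y u : α} {p : G.Walk x y}
    (hp : p.IsPath) (hs : ∀ v ∈ p.support, v ∉ s → v = x ∨ v = y) (hu : u ∈ p.support)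
    (hus : u ∈ s) (hxy : x ∈ s ∨ y ∈ s) :
    (∃ hx : x ∈ s, (G.induce s).Reachable ⟨u, hus⟩ ⟨x, hx⟩) ∨
      ∃ hy : y ∈ s, (G.induce s).Reachable ⟨u, hus⟩ ⟨y, hy⟩ :=
  hxy.imp (fun hx => ⟨hx, hp.reachable_induce_of_compl_subset_ends hs hu hus (.inl rfl) hx⟩)
    (fun hy => ⟨hy, hp.reachable_induce_of_compl_subset_ends hs hu hus (.inr rfl) hy⟩)

lemma exists_reachable_induce_closedNbhdCompl_end {w y u : α} {p : G.Walk w y} (hp : p.IsPath)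
    (hchord : ∀ v ∈ p.support, G.Adj w v → s(w, v) ∈ p.edges) (hu : u ∈ p.support)
    (hus : u ∈ G.closedNbhdCompl w) :
    ∃ hy : y ∈ G.closedNbhdCompl w, (G.induce _).Reachable ⟨u, hus⟩ ⟨y, hy⟩ := by
  cases p with
  | nil => exact absurd (by simpa using hu) hus.1
  | @cons _ c _ h q =>
    have hwq : w ∉ q.support := (Walk.cons_isPath_iff _ _).1 hp |>.2
    refine ((Walk.cons_isPath_iff _ _).1 hp).1.exists_reachable_induce_end_of_compl_subset_start
      (fun z hz hzs => ?_) (by simpa [hus.1] using hu) hus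
    obtain rfl | hwz := notMem_closedNbhdCompl.1 hzs
    · exact absurd hz hwq
    have hedge := hchord z (by simp [hz]) hwz
    rw [edges_cons, List.mem_cons] at hedge
    obtain hedge | hedge := hedge
    · exact Sym2.congr_right.1 hedge
    · exact absurd (q.fst_mem_support_of_mem_edges hedge) hwq

lemma exists_reachable_induce_closedNbhdCompl {w x y u : α} {p : G.Walk x y} (hp : p.IsPath)
    (hw : w ∈ p.support) (hchord : ∀ v ∈ p.support, G.Adj w v → s(w, v) ∈ p.edges)
    (hu : u ∈ p.support) (hus : u ∈ G.closedNbhdCompl w) :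
    (∃ hx : x ∈ G.closedNbhdCompl w, (G.induce _).Reachable ⟨u, hus⟩ ⟨x, hx⟩) ∨
      ∃ hy : y ∈ G.closedNbhdCompl w, (G.induce _).Reachable ⟨u, hus⟩ ⟨y, hy⟩ := by
  obtain ⟨p₁, p₂, hp₁, hp₂, rfl⟩ := hp.mem_support_iff_exists_append.1 hw
  have hmeet : ∀ v, G.Adj w v → v ∈ p₁.support → v ∈ p₂.support → False :=
    fun v hwv hv₁ hv₂ => hp.ne_of_mem_support_of_append hwv.ne' hv₁ hv₂ rfl
  rcases (mem_support_append_iff _ _).1 hu with hu | hu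
  · refine .inl (hp₁.reverse.exists_reachable_induce_closedNbhdCompl_end (fun v hv hwv => ?_)
      (by simpa using hu) hus)
    rw [support_reverse, List.mem_reverse] at hv
    have hedge := hchord v (by simp [hv]) hwv
    rw [edges_append, List.mem_append] at hedge
    rcases hedge with h | h
    · simpa using h
    · exact (hmeet v hwv hv (p₂.snd_mem_support_of_mem_edges h)).elim
  · refine .inr (hp₂.exists_reachable_induce_closedNbhdCompl_end (fun v hv hwv => ?_) hu hus)
    have hedge := hchord v (by simp [hv]) hwv
    rw [edges_append, List.mem_append] at hedge
    rcases hedge with h | h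
    · exact (hmeet v hwv (p₁.snd_mem_support_of_mem_edges h) hv).elim
    · exact h

end Walk.IsPath

lemma Walk.mem_support_tail_dropLast_of_ne {x y v : α} (p : G.Walk x y) (hv : v ∈ p.support)
    (hx : v ≠ x) (hy : v ≠ y) : v ∈ p.support.tail.dropLast := by
  have ht : v ∈ p.support.tail := by
    rw [← p.cons_tail_support] at hv
    exact (List.mem_cons.1 hv).resolve_left hx
  exact List.mem_dropLast_of_mem_of_ne_getLast ht (by rwa [List.getLast_tail, getLast_support])

/-- `G` is a subdivision of the complete graph on `ι`: `b` gives the branch vertices and `P i j`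
the path replacing the edge `ij`, whose internal vertices are `(P i j _).support.tail.dropLast`. -/
structure IsCompleteSubdivision {ι : Type*} [LinearOrder ι] (G : SimpleGraph α) (b : ι → α)
    (P : ∀ i j : ι, i < j → G.Walk (b i) (b j)) : Prop where
  injective : Function.Injective b
  isPath : ∀ (i j : ι) (hij : i < j), (P i j hij).IsPath
  internal_notMem_support : ∀ (i j : ι) (hij : i < j) (k l : ι) (hkl : k < l),
    (i, j) ≠ (k, l) → ∀ v ∈ (P i j hij).support.tail.dropLast, v ∉ (P k l hkl).support
  internal_ne_branch : ∀ (i j : ι) (hij : i < j),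
    ∀ v ∈ (P i j hij).support.tail.dropLast, ∀ k : ι, v ≠ b k
  support_cover : ∀ v : α, ∃ (i j : ι) (hij : i < j), v ∈ (P i j hij).support
  edges_cover : ∀ e ∈ G.edgeSet, ∃ (i j : ι) (hij : i < j), e ∈ (P i j hij).edges

def AtMostOneUnsubdivided {ι : Type*} [LinearOrder ι] {b : ι → α}
    (P : ∀ i j : ι, i < j → G.Walk (b i) (b j)) : Prop :=
  ∀ (i j : ι) (hij : i < j) (k l : ι) (hkl : k < l),
    (P i j hij).length = 1 → (P k l hkl).length = 1 → (i, j) = (k, l)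

namespace IsCompleteSubdivision

variable {ι : Type*} [LinearOrder ι] {b : ι → α}
  {P : ∀ i j : ι, i < j → G.Walk (b i) (b j)} (hG : G.IsCompleteSubdivision b P)
  {i j k l : ι} {hij : i < j} {hkl : k < l}
include hG

lemma eq_or_eq_of_branch_mem_support {m : ι} (hm : b m ∈ (P i j hij).support) :
    m = i ∨ m = j := by
  by_contra! h
  exact hG.internal_ne_branch i j hij _ ((P i j hij).mem_support_tail_dropLast_of_ne hm
    (hG.injective.ne h.1) (hG.injective.ne h.2)) m rfl

lemma eq_or_eq_of_mem_support_of_mem_support {v : α} (hv : v ∈ (P i j hij).support)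
    (hv' : v ∈ (P k l hkl).support) (hne : (i, j) ≠ (k, l)) : v = b i ∨ v = b j := by
  by_contra! h
  exact hG.internal_notMem_support i j hij k l hkl hne v
    ((P i j hij).mem_support_tail_dropLast_of_ne hv h.1 h.2) hv'

lemma mem_edges_of_adj_of_ne {v x : α} (hv : v ∈ (P i j hij).support) (hvi : v ≠ b i)
    (hvj : v ≠ b j) (hadj : G.Adj v x) : s(v, x) ∈ (P i j hij).edges := by
  obtain ⟨k, l, hkl, he⟩ := hG.edges_cover _ (G.mem_edgeSet.2 hadj)
  by_cases hne : (i, j) = (k, l)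
  · obtain ⟨rfl, rfl⟩ := Prod.ext_iff.1 hne
    exact he
  · have := hG.eq_or_eq_of_mem_support_of_mem_support hv
      ((P k l hkl).fst_mem_support_of_mem_edges he) hne
    tauto

lemma mem_edges_of_adj {v x : α} (hv : v ∈ (P i j hij).support) (hx : x ∈ (P i j hij).support)
    (hadj : G.Adj v x) : s(v, x) ∈ (P i j hij).edges := by
  obtain ⟨k, l, hkl, he⟩ := hG.edges_cover _ (G.mem_edgeSet.2 hadj)
  by_cases hne : (i, j) = (k, l)
  · obtain ⟨rfl, rfl⟩ := Prod.ext_iff.1 hne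
    exact he
  have hv' := (P k l hkl).fst_mem_support_of_mem_edges he
  have hx' := (P k l hkl).snd_mem_support_of_mem_edges he
  have hvkl := hG.eq_or_eq_of_mem_support_of_mem_support hv' hv (Ne.symm hne)
  have hxkl := hG.eq_or_eq_of_mem_support_of_mem_support hx' hx (Ne.symm hne)
  have hvx := hadj.ne
  rcases hG.eq_or_eq_of_mem_support_of_mem_support hv hv' hne with rfl | rfl <;>
  rcases hG.eq_or_eq_of_mem_support_of_mem_support hx hx' hne with rfl | rfl <;>
  simp only [hG.injective.eq_iff, ne_eq] at hvkl hxkl hvx <;> grind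

lemma exists_length_eq_one_of_adj {a c : ι} (hadj : G.Adj (b a) (b c)) :
    ∃ (k l : ι) (hkl : k < l), (P k l hkl).length = 1 ∧ s(k, l) = s(a, c) := by
  rcases lt_trichotomy a c with h | rfl | h
  · exact ⟨a, c, h, (hG.isPath a c h).length_eq_one_of_mem_edges
      (hG.mem_edges_of_adj (P a c h).start_mem_support (P a c h).end_mem_support hadj), rfl⟩
  · exact (hadj.ne rfl).elim
  · exact ⟨c, a, h, (hG.isPath c a h).length_eq_one_of_mem_edges
      (hG.mem_edges_of_adj (P c a h).start_mem_support (P c a h).end_mem_support hadj.symm),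
      Sym2.eq_swap⟩

lemma eq_of_adj_of_adj (hone : AtMostOneUnsubdivided P)
    {m t t' : ι} (h : G.Adj (b m) (b t)) (h' : G.Adj (b m) (b t')) : t = t' := by
  obtain ⟨k, l, hkl, hlen, hkl_eq⟩ := hG.exists_length_eq_one_of_adj h
  obtain ⟨k', l', hkl', hlen', hkl_eq'⟩ := hG.exists_length_eq_one_of_adj h'
  obtain ⟨rfl, rfl⟩ := Prod.ext_iff.1 (hone k l hkl k' l' hkl' hlen hlen')
  exact Sym2.congr_right.1 (hkl_eq.symm.trans hkl_eq')

lemma induce_closedNbhdCompl_connected_of_internal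
    (hthird : ∀ i j : ι, ∃ t, t ≠ i ∧ t ≠ j) {w : α} (hw : w ∈ (P i j hij).support)
    (hwi : w ≠ b i) (hwj : w ≠ b j) :
    (G.induce (G.closedNbhdCompl w)).Connected := by
  set s := G.closedNbhdCompl w
  have hchord : ∀ v, G.Adj w v → s(w, v) ∈ (P i j hij).edges :=
    fun v => hG.mem_edges_of_adj_of_ne hw hwi hwj
  have hcompl : ∀ v ∉ s, v ∈ (P i j hij).support := fun v hv => by
    rcases notMem_closedNbhdCompl.1 hv with rfl | hadj
    exacts [hw, (P i j hij).snd_mem_support_of_mem_edges (hchord v hadj)]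
  have hbranch : ∀ t, t ≠ i → t ≠ j → b t ∈ s := fun t hti htj => by_contra fun h =>
    (hG.eq_or_eq_of_branch_mem_support (hcompl _ h)).elim hti htj
  have hends : ∀ k l (hkl : k < l), (i, j) ≠ (k, l) →
      ∀ v ∈ (P k l hkl).support, v ∉ s → v = b k ∨ v = b l := fun k l hkl hne v hv hvs =>
    hG.eq_or_eq_of_mem_support_of_mem_support hv (hcompl v hvs) (Ne.symm hne)
  obtain ⟨t₀, ht₀i, ht₀j⟩ := hthird i j
  have ht₀ := hbranch t₀ ht₀i ht₀j
  refine induce_connected_of_reachable_range b t₀ ht₀ (fun t ht => ?_) (fun u hu => ?_)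
  · rcases eq_or_ne t t₀ with rfl | htt₀
    · rfl
    rcases htt₀.lt_or_gt with h | h
    · exact (hG.isPath t t₀ h).reachable_induce_of_compl_subset_ends
        (hends t t₀ h (by grind)) (P t t₀ h).start_mem_support ht (.inr rfl) ht₀
    · exact (hG.isPath t₀ t h).reachable_induce_of_compl_subset_ends
        (hends t₀ t h (by grind)) (P t₀ t h).end_mem_support ht (.inl rfl) ht₀
  obtain ⟨k, l, hkl, hu'⟩ := hG.support_cover u
  suffices (∃ hk : b k ∈ s, (G.induce s).Reachable ⟨u, hu⟩ ⟨b k, hk⟩) ∨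
      ∃ hl : b l ∈ s, (G.induce s).Reachable ⟨u, hu⟩ ⟨b l, hl⟩ by
    rcases this with ⟨hk, h⟩ | ⟨hl, h⟩
    exacts [⟨k, hk, h⟩, ⟨l, hl, h⟩]
  by_cases hne : (i, j) = (k, l)
  · obtain ⟨rfl, rfl⟩ := Prod.ext_iff.1 hne
    exact (hG.isPath i j hkl).exists_reachable_induce_closedNbhdCompl hw (fun v _ => hchord v)
      hu' hu
  refine (hG.isPath k l hkl).exists_reachable_induce_of_compl_subset_ends (hends k l hkl hne)
    hu' hu ?_
  by_contra! h
  have := hG.eq_or_eq_of_branch_mem_support (hcompl _ h.1)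
  have := hG.eq_or_eq_of_branch_mem_support (hcompl _ h.2)
  grind

lemma induce_closedNbhdCompl_connected_branch (hone : AtMostOneUnsubdivided P)
    (hthird : ∀ i j : ι, ∃ t, t ≠ i ∧ t ≠ j) (m : ι) :
    (G.induce (G.closedNbhdCompl (b m))).Connected := by
  set s := G.closedNbhdCompl (b m)
  have hends : ∀ i j (hij : i < j), m ≠ i → m ≠ j →
      ∀ v ∈ (P i j hij).support, v ∉ s → v = b i ∨ v = b j := by
    intro i j hij hmi hmj v hv hvs
    by_contra! h
    have hm : b m ∈ (P i j hij).support := by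
      rcases notMem_closedNbhdCompl.1 hvs with rfl | hadj
      · exact hv
      · exact (P i j hij).snd_mem_support_of_mem_edges
          (hG.mem_edges_of_adj_of_ne hv h.1 h.2 hadj.symm)
    exact (hG.eq_or_eq_of_branch_mem_support hm).elim hmi hmj
  have hbranch : ∀ t, t ≠ m → ¬G.Adj (b m) (b t) → b t ∈ s :=
    fun t ht h => ⟨hG.injective.ne ht, h⟩
  obtain ⟨t₁, ht₁, -⟩ := hthird m m
  obtain ⟨t₂, ht₂, ht₂₁⟩ := hthird m t₁
  obtain ⟨t₀, ht₀m, ht₀⟩ : ∃ t₀, t₀ ≠ m ∧ b t₀ ∈ s := by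
    by_cases h : G.Adj (b m) (b t₁)
    · exact ⟨t₂, ht₂, hbranch t₂ ht₂ fun h₂ =>
        ht₂₁ (hG.eq_of_adj_of_adj hone h₂ h)⟩
    · exact ⟨t₁, ht₁, hbranch t₁ ht₁ h⟩
  refine induce_connected_of_reachable_range b t₀ ht₀ (fun t ht => ?_) (fun u hu => ?_)
  · have htm : m ≠ t := fun h => ht.1 (h ▸ rfl)
    rcases eq_or_ne t t₀ with rfl | htt₀
    · rfl
    rcases htt₀.lt_or_gt with h | h
    · exact (hG.isPath t t₀ h).reachable_induce_of_compl_subset_ends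
        (hends t t₀ h htm ht₀m.symm) (P t t₀ h).start_mem_support ht (.inr rfl) ht₀
    · exact (hG.isPath t₀ t h).reachable_induce_of_compl_subset_ends
        (hends t₀ t h ht₀m.symm htm) (P t₀ t h).end_mem_support ht (.inl rfl) ht₀
  obtain ⟨i, j, hij, hu'⟩ := hG.support_cover u
  suffices (∃ hi : b i ∈ s, (G.induce s).Reachable ⟨u, hu⟩ ⟨b i, hi⟩) ∨
      ∃ hj : b j ∈ s, (G.induce s).Reachable ⟨u, hu⟩ ⟨b j, hj⟩ by
    rcases this with ⟨hi, h⟩ | ⟨hj, h⟩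
    exacts [⟨i, hi, h⟩, ⟨j, hj, h⟩]
  by_cases hm : m = i ∨ m = j
  · have hbm : b m ∈ (P i j hij).support := by
      rcases hm with rfl | rfl
      exacts [(P m j hij).start_mem_support, (P i m hij).end_mem_support]
    exact (hG.isPath i j hij).exists_reachable_induce_closedNbhdCompl hbm
      (fun v hv => hG.mem_edges_of_adj hbm hv) hu' hu
  push Not at hm
  refine (hG.isPath i j hij).exists_reachable_induce_of_compl_subset_ends
    (hends i j hij hm.1 hm.2) hu' hu ?_
  by_contra! h
  have hi := (notMem_closedNbhdCompl.1 h.1).resolve_left (hG.injective.ne hm.1.symm)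
  have hj := (notMem_closedNbhdCompl.1 h.2).resolve_left (hG.injective.ne hm.2.symm)
  exact hij.ne (hG.eq_of_adj_of_adj hone hi hj)

end IsCompleteSubdivision

end SimpleGraph

theorem stmt2_general (α : Type) (W : SimpleGraph α)
    (b : Fin 4 → α) (hb : Function.Injective b)
    (P : ∀ i j : Fin 4, i < j → W.Walk (b i) (b j))
    (hpath : ∀ (i j : Fin 4) (hij : i < j), (P i j hij).IsPath)
    (hint : ∀ (i j : Fin 4) (hij : i < j) (k l : Fin 4) (hkl : k < l),
      (i, j) ≠ (k, l) →
      ∀ v ∈ (P i j hij).support.tail.dropLast, v ∉ (P k l hkl).support)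
    (hintb : ∀ (i j : Fin 4) (hij : i < j),
      ∀ v ∈ (P i j hij).support.tail.dropLast, ∀ k : Fin 4, v ≠ b k)
    (hverts : ∀ v : α, ∃ (i j : Fin 4) (hij : i < j), v ∈ (P i j hij).support)
    (hedges : ∀ e ∈ W.edgeSet, ∃ (i j : Fin 4) (hij : i < j), e ∈ (P i j hij).edges)
    (hone : ∀ (i j : Fin 4) (hij : i < j) (k l : Fin 4) (hkl : k < l),
      (P i j hij).length = 1 → (P k l hkl).length = 1 → (i, j) = (k, l)) :
    ∀ w : α, (W.induce {v : α | v ≠ w ∧ ¬ W.Adj w v}).Connected := by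
  have hW : W.IsCompleteSubdivision b P := ⟨hb, hpath, hint, hintb, hverts, hedges⟩
  have hthird : ∀ i j : Fin 4, ∃ t, t ≠ i ∧ t ≠ j := by decide
  intro w
  obtain ⟨i, j, hij, hw⟩ := hverts w
  by_cases hwi : w = b i
  · exact hwi ▸ hW.induce_closedNbhdCompl_connected_branch hone hthird i
  by_cases hwj : w = b j
  · exact hwj ▸ hW.induce_closedNbhdCompl_connected_branch hone hthird j
  exact hW.induce_closedNbhdCompl_connected_of_internal hthird hw hwi hwj

/-- If `W` is (isomorphic to) a subdivision of `K₄` with at most one unsubdivided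
edge — given by branch vertices `b 0, b 1, b 2, b 3` and internally disjoint
replacing paths `P i j` covering all vertices and edges of `W`, at most one of
which has length `1` — then for every vertex `w` of `W`, deleting the closed
neighborhood of `w` leaves a connected graph. -/
theorem stmt2 (α : Type) [Fintype α] (W : SimpleGraph α)
    (b : Fin 4 → α) (hb : Function.Injective b)
    (P : ∀ i j : Fin 4, i < j → W.Walk (b i) (b j))
    (hpath : ∀ (i j : Fin 4) (hij : i < j), (P i j hij).IsPath)
    (hlen : ∀ (i j : Fin 4) (hij : i < j), 0 < (P i j hij).length)
    (hint : ∀ (i j : Fin 4) (hij : i < j) (k l : Fin 4) (hkl : k < l),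
      (i, j) ≠ (k, l) →
      ∀ v ∈ (P i j hij).support.tail.dropLast, v ∉ (P k l hkl).support)
    (hintb : ∀ (i j : Fin 4) (hij : i < j),
      ∀ v ∈ (P i j hij).support.tail.dropLast, ∀ k : Fin 4, v ≠ b k)
    (hverts : ∀ v : α, ∃ (i j : Fin 4) (hij : i < j), v ∈ (P i j hij).support)
    (hedges : ∀ e ∈ W.edgeSet, ∃ (i j : Fin 4) (hij : i < j), e ∈ (P i j hij).edges)
    (hone : ∀ (i j : Fin 4) (hij : i < j) (k l : Fin 4) (hkl : k < l),
      (P i j hij).length = 1 → (P k l hkl).length = 1 → (i, j) = (k, l)) :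
    ∀ w : α, (W.induce {v : α | v ≠ w ∧ ¬ W.Adj w v}).Connected :=
  stmt2_general α W b hb P hpath hint hintb hverts hedges hone
end

section
/- For every positive integer s, the graph PD_s contains the complete bipartite graph K_{s,s} as a minor, and consequently PD_s has treewidth at least s. -/
open SimpleGraph

universe u

variable {V : Type u}

/-- `H` is a minor of `G`: branch sets that are nonempty, connected,
pairwise disjoint, with an edge of `G` between the branch sets of any
two adjacent vertices of `H`. -/
def IsMinor {W : Type*} (H : SimpleGraph W) (G : SimpleGraph V) : Prop :=
  ∃ B : W → Set V,
    (∀ w, (B w).Nonempty) ∧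
    (∀ w, (G.induce (B w)).Connected) ∧
    (∀ w w' : W, w ≠ w' → Disjoint (B w) (B w')) ∧
    (∀ w w' : W, H.Adj w w' → ∃ u ∈ B w, ∃ v ∈ B w', G.Adj u v)

/-- `TreewidthLe G w` : `G` has treewidth at most `w`, via a tree decomposition. -/
def TreewidthLe (G : SimpleGraph V) (w : ℕ) : Prop :=
  ∃ (ι : Type u) (T : SimpleGraph ι), T.IsAcyclic ∧ T.Connected ∧
    ∃ t : V → Set ι,
      (∀ v, (t v).Nonempty) ∧
      (∀ v, (T.induce (t v)).Connected) ∧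
      (∀ u v : V, G.Adj u v → (t u ∩ t v).Nonempty) ∧
      (∀ x : ι, {v : V | x ∈ t v}.ncard ≤ w + 1)

/-- The Pohoata–Davies graph `PD s`: a stable set `{x_j : j}` (the `Sum.inl`
vertices) together with `s` pairwise anticomplete `s`-vertex paths
`L_i = u^i_1 - ⋯ - u^i_s` (vertex `u^i_{k+1}` is `Sum.inr (i, k)`), where
`x_j` is adjacent exactly to `u^i_j` in each `L_i`. -/
def PD (s : ℕ) : SimpleGraph (Fin s ⊕ Fin s × Fin s) :=
  SimpleGraph.fromRel (fun a b =>
    match a, b with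
    | Sum.inr (i, k), Sum.inr (i', k') => i = i' ∧ (k : ℕ) + 1 = (k' : ℕ)
    | Sum.inl j, Sum.inr (_, k) => k = j
    | _, _ => False)

/-!
The singletons `{xⱼ}` and the paths `Lᵢ` are the branch sets of a `K_{s,s}` minor. Keeping `x₀`
and `L₀` apart and merging `xᵢ` with `Lᵢ` for `i ≠ 0` gives instead `s + 1` pairwise touching
connected sets, a `K_{s+1}` minor. In a tree decomposition, the bags of each such set form a
subtree, these subtrees pairwise intersect, so by the Helly property of subtrees one bag meets
all `s + 1` sets and has at least `s + 1` vertices.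
-/

namespace SimpleGraph

variable {ι : Type*} {T : SimpleGraph ι}

lemma exists_isPath_of_preconnected_induce {S : Set ι} (hS : (T.induce S).Preconnected)
    {a b : ι} (ha : a ∈ S) (hb : b ∈ S) :
    ∃ p : T.Walk a b, p.IsPath ∧ ∀ z ∈ p.support, z ∈ S := by
  classical
  obtain ⟨q⟩ := hS ⟨a, ha⟩ ⟨b, hb⟩
  let p : T.Walk a b := q.map (Embedding.induce S).toHom
  refine ⟨p.toPath, p.toPath.2, fun z hz => ?_⟩
  obtain ⟨z', -, rfl⟩ :=
    List.mem_map.mp (Walk.support_map _ q ▸ p.support_toPath_subset_support hz)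
  exact z'.2

lemma induce_singleton_connected (x : ι) : (T.induce {x}).Connected :=
  (connected_iff _).mpr ⟨Preconnected.of_subsingleton, ⟨⟨x, rfl⟩⟩⟩

end SimpleGraph

namespace SimpleGraph.IsAcyclic

variable {ι : Type*} {T : SimpleGraph ι}

theorem induce_inter_connected (hT : T.IsAcyclic) {A B : Set ι}
    (hA : (T.induce A).Connected) (hB : (T.induce B).Connected) (hAB : (A ∩ B).Nonempty) :
    (T.induce (A ∩ B)).Connected := by
  refine (connected_iff _).mpr ⟨fun u v => ?_, hAB.to_subtype⟩
  obtain ⟨p, hp, hpA⟩ := exists_isPath_of_preconnected_induce hA.preconnected u.2.1 v.2.1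
  obtain ⟨q, hq, hqB⟩ := exists_isPath_of_preconnected_induce hB.preconnected u.2.2 v.2.2
  have hpq : p = q := congrArg Subtype.val ((hT.subsingleton_path _ _).allEq ⟨p, hp⟩ ⟨q, hq⟩)
  subst hpq
  exact ⟨p.induce (A ∩ B) fun z hz => ⟨hpA z hz, hqB z hz⟩⟩

theorem exists_median (hT : T.IsAcyclic) {a b c : ι}
    (p : T.Walk a b) (hp : p.IsPath) (q : T.Walk b c) (hq : q.IsPath)
    (r : T.Walk a c) (hr : r.IsPath) :
    ∃ m, m ∈ p.support ∧ m ∈ q.support ∧ m ∈ r.support := by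
  classical
  induction p with
  | nil => exact ⟨_, by simp, q.start_mem_support, r.start_mem_support⟩
  | @cons u v b h p ih =>
    have hp' : p.IsPath := hp.of_cons
    by_cases hu : u ∈ q.support
    · exact ⟨u, by simp, hu, r.start_mem_support⟩
    by_cases hv : v ∈ r.support
    · obtain ⟨m, h1, h2, h3⟩ := ih hp' q hq (r.dropUntil v hv) (hr.dropUntil hv)
      exact ⟨m, by simp [h1], h2, r.support_dropUntil_subset_support hv h3⟩
    have hr' : (Walk.cons h.symm r).IsPath := hr.cons hv
    obtain ⟨m, h1, h2, h3⟩ := ih hp' q hq (Walk.cons h.symm r) hr'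
    rcases List.mem_cons.mp (Walk.support_cons _ _ ▸ h3) with rfl | h3
    · -- the tail of `q` from `v` is the path `v - u - r` to `c`, so `u` would lie on `q`
      have hqr : q.dropUntil _ h2 = Walk.cons h.symm r :=
        congrArg Subtype.val ((hT.subsingleton_path _ _).allEq ⟨_, hq.dropUntil h2⟩ ⟨_, hr'⟩)
      exact absurd (q.support_dropUntil_subset_support h2 (hqr ▸ by simp)) hu
    · exact ⟨m, by simp [h1], h2, h3⟩

theorem exists_mem_inter_inter (hT : T.IsAcyclic) {A B C : Set ι}
    (hA : (T.induce A).Connected) (hB : (T.induce B).Connected) (hC : (T.induce C).Connected)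
    (hAB : (A ∩ B).Nonempty) (hBC : (B ∩ C).Nonempty) (hAC : (A ∩ C).Nonempty) :
    (A ∩ B ∩ C).Nonempty := by
  obtain ⟨a, haA, haB⟩ := hAB
  obtain ⟨b, hbB, hbC⟩ := hBC
  obtain ⟨c, hcA, hcC⟩ := hAC
  obtain ⟨p, hp, hpB⟩ := exists_isPath_of_preconnected_induce hB.preconnected haB hbB
  obtain ⟨q, hq, hqC⟩ := exists_isPath_of_preconnected_induce hC.preconnected hbC hcC
  obtain ⟨r, hr, hrA⟩ := exists_isPath_of_preconnected_induce hA.preconnected haA hcA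
  obtain ⟨m, hmp, hmq, hmr⟩ := hT.exists_median p hp q hq r hr
  exact ⟨m, ⟨hrA m hmr, hpB m hmp⟩, hqC m hmq⟩

/-- Helly property of subtrees. -/
theorem exists_forall_mem_of_pairwise_inter_nonempty (hT : T.IsAcyclic) {W : Type*}
    {s : Finset W} (hs : s.Nonempty) (F : W → Set ι)
    (hconn : ∀ i ∈ s, (T.induce (F i)).Connected)
    (hpair : ∀ i ∈ s, ∀ j ∈ s, (F i ∩ F j).Nonempty) :
    ∃ x, ∀ i ∈ s, x ∈ F i := by
  induction hs using Finset.Nonempty.cons_induction generalizing F with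
  | singleton a =>
    obtain ⟨x, hx, -⟩ := hpair a (Finset.mem_singleton_self a) a (Finset.mem_singleton_self a)
    exact ⟨x, fun i hi => Finset.mem_singleton.mp hi ▸ hx⟩
  | cons a s ha hs ih =>
    have has : a ∈ s.cons a ha := Finset.mem_cons_self a s
    have hsub : ∀ i ∈ s, i ∈ s.cons a ha := fun i hi => Finset.mem_cons_of_mem hi
    obtain ⟨x, hx⟩ := ih (fun i => F i ∩ F a)
      (fun i hi => hT.induce_inter_connected (hconn i (hsub i hi)) (hconn a has)
        (hpair i (hsub i hi) a has))
      (fun i hi j hj => by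
        obtain ⟨x, ⟨hxi, hxj⟩, hxa⟩ := hT.exists_mem_inter_inter (hconn i (hsub i hi))
          (hconn j (hsub j hj)) (hconn a has) (hpair i (hsub i hi) j (hsub j hj))
          (hpair j (hsub j hj) a has) (hpair i (hsub i hi) a has)
        exact ⟨x, ⟨hxi, hxa⟩, hxj, hxa⟩)
    obtain ⟨i₀, hi₀⟩ := hs
    refine ⟨x, fun i hi => ?_⟩
    rcases Finset.mem_cons.mp hi with rfl | hi
    · exact (hx i₀ hi₀).2
    · exact (hx i hi).1

end SimpleGraph.IsAcyclic

section TreeDecomposition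

variable {ι : Type*} {G : SimpleGraph V} {T : SimpleGraph ι} {t : V → Set ι}

lemma SimpleGraph.Walk.induce_biUnion_support_connected (ht : ∀ v, (T.induce (t v)).Connected)
    (hadj : ∀ u v, G.Adj u v → (t u ∩ t v).Nonempty) {a b : V} (p : G.Walk a b) :
    (T.induce (⋃ z ∈ p.support, t z)).Connected := by
  induction p with
  | @nil u =>
    have hunion : ⋃ z ∈ (Walk.nil : G.Walk u u).support, t z = t u := by ext; simp
    exact hunion ▸ ht u
  | @cons u v b h p ih =>
    have hunion : ⋃ z ∈ (p.cons h).support, t z = t u ∪ ⋃ z ∈ p.support, t z := by ext; simp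
    rw [hunion]
    obtain ⟨y, hyu, hyv⟩ := hadj u v h
    exact induce_union_connected (ht u).preconnected ih.preconnected
      ⟨y, hyu, Set.mem_biUnion p.start_mem_support hyv⟩

lemma induce_biUnion_connected (htne : ∀ v, (t v).Nonempty)
    (ht : ∀ v, (T.induce (t v)).Connected) (hadj : ∀ u v, G.Adj u v → (t u ∩ t v).Nonempty)
    {X : Set V} (hX : (G.induce X).Connected) :
    (T.induce (⋃ v ∈ X, t v)).Connected := by
  obtain ⟨⟨u, hu⟩⟩ := hX.nonempty
  obtain ⟨y₀, hy₀⟩ := htne u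
  refine induce_connected_of_patches y₀ (Set.mem_biUnion hu hy₀) fun {y} hy => ?_
  obtain ⟨v, hv, hyv⟩ := Set.mem_iUnion₂.mp hy
  obtain ⟨q⟩ := hX.preconnected ⟨u, hu⟩ ⟨v, hv⟩
  let p : G.Walk u v := q.map (Embedding.induce X).toHom
  have hpX : ∀ z ∈ p.support, z ∈ X := fun z hz => by
    obtain ⟨z', -, rfl⟩ := List.mem_map.mp (Walk.support_map _ q ▸ hz)
    exact z'.2
  refine ⟨⋃ z ∈ p.support, t z, Set.biUnion_mono hpX fun _ _ => le_rfl,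
    Set.mem_biUnion p.start_mem_support hy₀, Set.mem_biUnion p.end_mem_support hyv, ?_⟩
  exact (p.induce_biUnion_support_connected ht hadj).preconnected _ _

end TreeDecomposition

theorem IsMinor.card_le_of_treewidthLe {W : Type*} [Fintype W] [Finite V] {G : SimpleGraph V}
    {w : ℕ} (hK : IsMinor (⊤ : SimpleGraph W) G) (htw : TreewidthLe G w) :
    Fintype.card W ≤ w + 1 := by
  obtain ⟨B, hBne, hBconn, hBdisj, hBadj⟩ := hK
  obtain ⟨ι, T, hT, -, t, htne, htconn, htadj, hbag⟩ := htw
  rcases isEmpty_or_nonempty W with _ | _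
  · simp
  have hpair : ∀ a b, ((⋃ v ∈ B a, t v) ∩ ⋃ v ∈ B b, t v).Nonempty := by
    intro a b
    by_cases hab : a = b
    · obtain ⟨v, hv⟩ := hBne a
      obtain ⟨y, hy⟩ := htne v
      exact ⟨y, Set.mem_biUnion hv hy, hab ▸ Set.mem_biUnion hv hy⟩
    · obtain ⟨u, hu, v, hv, huv⟩ := hBadj a b hab
      obtain ⟨y, hyu, hyv⟩ := htadj u v huv
      exact ⟨y, Set.mem_biUnion hu hyu, Set.mem_biUnion hv hyv⟩
  obtain ⟨x, hx⟩ := hT.exists_forall_mem_of_pairwise_inter_nonempty Finset.univ_nonempty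
    (fun a => ⋃ v ∈ B a, t v)
    (fun a _ => induce_biUnion_connected htne htconn htadj (hBconn a))
    (fun a _ b _ => hpair a b)
  choose g hgB hgx using fun a => Set.mem_iUnion₂.mp (hx a (Finset.mem_univ a))
  have hg : Function.Injective fun a => (⟨g a, hgx a⟩ : {v | x ∈ t v}) := fun a b hab => by
    by_contra hne
    exact (hBdisj a b hne).ne_of_mem (hgB a) (hgB b) (congrArg Subtype.val hab)
  calc Fintype.card W = Nat.card W := Nat.card_eq_fintype_card.symm
    _ ≤ Nat.card {v | x ∈ t v} := Nat.card_le_card_of_injective _ hg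
    _ = {v | x ∈ t v}.ncard := Nat.card_coe_set_eq _
    _ ≤ w + 1 := hbag x

/-- Branch sets: that of `inr a` alone, and for each `i` the union of those of `inl i` and
`inr i` (only `inl a` for `i = a`). -/
theorem IsMinor.top_option_of_completeBipartiteGraph {α : Type*} [DecidableEq α]
    {G : SimpleGraph V} (a : α) (h : IsMinor (completeBipartiteGraph α α) G) :
    IsMinor (⊤ : SimpleGraph (Option α)) G := by
  obtain ⟨B, hne, hconn, hdisj, hadj⟩ := h
  have touch : ∀ i j, ∃ u ∈ B (.inl i), ∃ v ∈ B (.inr j), G.Adj u v :=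
    fun i j => hadj _ _ (by simp)
  refine ⟨fun o => o.elim (B (.inr a)) fun i => B (.inl i) ∪ if i = a then ∅ else B (.inr i),
    ?_, ?_, ?_, ?_⟩ <;> beta_reduce
  · rintro (_ | i)
    · exact hne _
    · exact (hne _).mono Set.subset_union_left
  · rintro (_ | i)
    · exact hconn _
    · by_cases hi : i = a
      · rw [Option.elim_some, if_pos hi, Set.union_empty]
        exact hconn _
      · rw [Option.elim_some, if_neg hi]
        obtain ⟨u, hu, v, hv, huv⟩ := touch i i
        exact connected_induce_union (hconn _).preconnected (hconn _).preconnected hu hv huv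
  · rintro (_ | i) (_ | j) hij
    · exact absurd rfl hij
    all_goals
      simp only [Option.elim]
      split_ifs <;>
        simp only [Set.disjoint_union_left, Set.disjoint_union_right, Set.disjoint_empty,
          Set.empty_disjoint, and_true] <;>
        and_intros <;> exact hdisj _ _ (by grind)
  · rintro (_ | i) (_ | j) hij
    · exact absurd hij (by simp)
    · obtain ⟨u, hu, v, hv, huv⟩ := touch j a
      exact ⟨v, hv, u, Set.mem_union_left _ hu, huv.symm⟩
    · obtain ⟨u, hu, v, hv, huv⟩ := touch i a
      exact ⟨u, Set.mem_union_left _ hu, v, hv, huv⟩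
    · have hij : i ≠ j := fun h => by simp [h] at hij
      by_cases hj : j = a
      · have hi : i ≠ a := hj ▸ hij
        obtain ⟨u, hu, v, hv, huv⟩ := touch j i
        exact ⟨v, Set.mem_union_right _ (by simpa [hi] using hv), u, Set.mem_union_left _ hu,
          huv.symm⟩
      · obtain ⟨u, hu, v, hv, huv⟩ := touch i j
        exact ⟨u, Set.mem_union_left _ hu, v, Set.mem_union_right _ (by simpa [hj] using hv), huv⟩

namespace PD

variable {s : ℕ}

lemma adj_inl_inr (j i k : Fin s) : (PD s).Adj (.inl j) (.inr (i, k)) ↔ k = j := by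
  simp [PD, fromRel_adj]

lemma adj_inr_inr (i i' k k' : Fin s) :
    (PD s).Adj (.inr (i, k)) (.inr (i', k')) ↔ i = i' ∧ (pathGraph s).Adj k k' := by
  simp only [PD, fromRel_adj, pathGraph_adj]
  grind

/-- The path `Lᵢ`. -/
def line (i : Fin s) : pathGraph s ↪g PD s where
  toFun k := .inr (i, k)
  inj' _ _ h := (Prod.mk.inj (Sum.inr.inj h)).2
  map_rel_iff' {k k'} := (adj_inr_inr i i k k').trans (and_iff_right rfl)

@[simp]
lemma line_apply (i k : Fin s) : line i k = .inr (i, k) := rfl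

lemma induce_range_line_connected (i : Fin s) :
    ((PD s).induce (Set.range (line i))).Connected :=
  (connected_iff _).mpr
    ⟨(line i).isoInduceRange.preconnected_iff.mp (pathGraph_preconnected s), ⟨⟨_, i, rfl⟩⟩⟩

theorem isMinor_completeBipartiteGraph (s : ℕ) :
    IsMinor (completeBipartiteGraph (Fin s) (Fin s)) (PD s) := by
  refine ⟨Sum.elim (fun j => {.inl j}) fun i => Set.range (line i), ?_, ?_, ?_, ?_⟩
  · rintro (j | i)
    · exact Set.singleton_nonempty _
    · exact Set.range_nonempty_iff_nonempty.mpr ⟨i⟩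
  · rintro (j | i)
    · exact induce_singleton_connected _
    · exact induce_range_line_connected i
  · rintro (j | i) (j' | i') h <;> simp [Set.disjoint_left, eq_comm] at h ⊢ <;> grind
  · rintro (j | i) (j' | i') h
    · simp at h
    · exact ⟨.inl j, rfl, .inr (i', j), ⟨j, rfl⟩, (adj_inl_inr j i' j).mpr rfl⟩
    · exact ⟨.inr (i, j'), ⟨j', rfl⟩, .inl j', rfl, ((adj_inl_inr j' i j').mpr rfl).symm⟩
    · simp at h

end PD

/-- `PD s` contains `K_{s,s}` as a minor and hence has treewidth at least `s`. -/
theorem stmt3 (s : ℕ) (hs : 0 < s) :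
    IsMinor (completeBipartiteGraph (Fin s) (Fin s)) (PD s) ∧
    ∀ w : ℕ, TreewidthLe (PD s) w → s ≤ w := by
  have hminor := PD.isMinor_completeBipartiteGraph s
  refine ⟨hminor, fun w hw => ?_⟩
  simpa using (hminor.top_option_of_completeBipartiteGraph ⟨0, hs⟩).card_le_of_treewidthLe hw
end

section
/- For every positive integer s with s ≥ 4, the graph PD_s is not 2-pinched; that is, PD_s contains two induced cycles passing through a common vertex, otherwise vertex-disjoint and with no edges between them. -/
open SimpleGraph

universe u

variable {V : Type u}

/-- An induced cycle in `G`, presented as an injective map from `ZMod n`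
(`n ≥ 3`) whose adjacencies in `G` are exactly the consecutive ones. -/
structure IndCycle (G : SimpleGraph V) where
  n : ℕ
  hn : 3 ≤ n
  f : ZMod n → V
  inj : Function.Injective f
  adj : ∀ i j : ZMod n, G.Adj (f i) (f j) ↔ (i = j + 1 ∨ j = i + 1)

/-- `G` is `(c,h)`-pinched: there do not exist `c` induced cycles of length at
least `h + 2`, all through one common vertex and otherwise pairwise disjoint
and anticomplete. (`c`-pinched is `(c,1)`-pinched.) -/
def Pinched (c h : ℕ) (G : SimpleGraph V) : Prop :=
  ¬ ∃ (x : V) (C : Fin c → IndCycle G),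
      (∀ i, h + 2 ≤ (C i).n) ∧
      (∀ i, (C i).f 0 = x) ∧
      (∀ i j : Fin c, i ≠ j →
        (Set.range (C i).f ∩ Set.range (C j).f = {x}) ∧
        (∀ u ∈ Set.range (C i).f, ∀ v ∈ Set.range (C j).f,
          u ≠ x → v ≠ x → ¬ G.Adj u v))

/-! ### Auxiliary machinery -/

/-- A 6-cycle in `PD s`: `x_a, u^p_a, u^p_b, x_b, u^q_b, u^q_a` where
`a, b` are consecutive positions and `p ≠ q` are two paths. -/
def cyc6 {s : ℕ} (a b p q : Fin s) : ZMod 6 → Fin s ⊕ Fin s × Fin s :=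
  ![Sum.inl a, Sum.inr (p, a), Sum.inr (p, b), Sum.inl b, Sum.inr (q, b), Sum.inr (q, a)]

lemma zmod6_cases : ∀ i : ZMod 6, i = 0 ∨ i = 1 ∨ i = 2 ∨ i = 3 ∨ i = 4 ∨ i = 5 := by
  decide

variable {s : ℕ} {a b c p q r t : Fin s}

lemma c6_0 : cyc6 a b p q 0 = Sum.inl a := rfl
lemma c6_1 : cyc6 a b p q 1 = Sum.inr (p, a) := rfl
lemma c6_2 : cyc6 a b p q 2 = Sum.inr (p, b) := rfl
lemma c6_3 : cyc6 a b p q 3 = Sum.inl b := rfl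
lemma c6_4 : cyc6 a b p q 4 = Sum.inr (q, b) := rfl
lemma c6_5 : cyc6 a b p q 5 = Sum.inr (q, a) := rfl

lemma PD_ll (j j' : Fin s) : (PD s).Adj (Sum.inl j) (Sum.inl j') ↔ False := by simp [PD]

lemma PD_lr (j i k : Fin s) : (PD s).Adj (Sum.inl j) (Sum.inr (i, k)) ↔ k = j := by
  simp [PD]

lemma PD_rl (j i k : Fin s) : (PD s).Adj (Sum.inr (i, k)) (Sum.inl j) ↔ k = j := by
  rw [adj_comm]; exact PD_lr j i k

lemma PD_rr (i k i' k' : Fin s) :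
    (PD s).Adj (Sum.inr (i, k)) (Sum.inr (i', k')) ↔
      i = i' ∧ ((k:ℕ) + 1 = (k':ℕ) ∨ (k':ℕ) + 1 = (k:ℕ)) := by
  simp only [PD, fromRel_adj]
  constructor
  · rintro ⟨hne, h | h⟩ <;> exact ⟨h.1.symm ▸ h.1 ▸ (by tauto), by tauto⟩
  · rintro ⟨rfl, h⟩
    refine ⟨by simp [Fin.ext_iff]; omega, ?_⟩
    rcases h with h | h
    · exact Or.inl ⟨rfl, h⟩
    · exact Or.inr ⟨rfl, h⟩

lemma cyc6_inj (hab : (a:ℕ) ≠ (b:ℕ)) (hpq : (p:ℕ) ≠ (q:ℕ)) :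
    Function.Injective (cyc6 a b p q) := by
  intro i j h
  rcases zmod6_cases i with rfl|rfl|rfl|rfl|rfl|rfl <;>
    rcases zmod6_cases j with rfl|rfl|rfl|rfl|rfl|rfl <;>
    simp only [c6_0, c6_1, c6_2, c6_3, c6_4, c6_5, Sum.inl.injEq, Sum.inr.injEq,
      Prod.mk.injEq, Fin.ext_iff, and_true, true_and, reduceCtorEq] at h ⊢ <;>
    first | rfl | decide | omega | (exfalso; omega) | exact h.elim

lemma cyc6_adj (hab : (a:ℕ) + 1 = (b:ℕ) ∨ (b:ℕ) + 1 = (a:ℕ)) (hpq : (p:ℕ) ≠ (q:ℕ))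
    (i j : ZMod 6) :
    (PD s).Adj (cyc6 a b p q i) (cyc6 a b p q j) ↔ (i = j + 1 ∨ j = i + 1) := by
  rcases zmod6_cases i with rfl|rfl|rfl|rfl|rfl|rfl <;>
    rcases zmod6_cases j with rfl|rfl|rfl|rfl|rfl|rfl <;>
    simp only [c6_0, c6_1, c6_2, c6_3, c6_4, c6_5, PD_ll, PD_lr, PD_rl, PD_rr,
      Fin.ext_iff, and_true, true_and] <;>
    constructor <;> intro h <;>
    first | decide | omega | exact h.elim | exact absurd h (by decide) |
      exact absurd h (by omega)

lemma cyc6_range : Set.range (cyc6 a b p q) =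
    {Sum.inl a, Sum.inr (p, a), Sum.inr (p, b), Sum.inl b, Sum.inr (q, b), Sum.inr (q, a)} := by
  ext v
  simp only [Set.mem_range, Set.mem_insert_iff, Set.mem_singleton_iff]
  constructor
  · rintro ⟨i, rfl⟩
    rcases zmod6_cases i with rfl|rfl|rfl|rfl|rfl|rfl <;>
      simp [c6_0, c6_1, c6_2, c6_3, c6_4, c6_5]
  · rintro (rfl|rfl|rfl|rfl|rfl|rfl)
    exacts [⟨0, c6_0⟩, ⟨1, c6_1⟩, ⟨2, c6_2⟩, ⟨3, c6_3⟩, ⟨4, c6_4⟩, ⟨5, c6_5⟩]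

lemma cyc6_inter (hab : (a:ℕ) ≠ b) (hac : (a:ℕ) ≠ c) (hbc : (b:ℕ) ≠ c)
    (hpr : (p:ℕ) ≠ r) (hpt : (p:ℕ) ≠ t) (hqr : (q:ℕ) ≠ r) (hqt : (q:ℕ) ≠ t) :
    Set.range (cyc6 a b p q) ∩ Set.range (cyc6 a c r t) = {Sum.inl a} := by
  ext v
  simp only [Set.mem_inter_iff, cyc6_range, Set.mem_insert_iff, Set.mem_singleton_iff]
  constructor
  · rintro ⟨h1, h2⟩
    rcases h1 with rfl|rfl|rfl|rfl|rfl|rfl <;>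
      rcases h2 with h|h|h|h|h|h <;>
      first
        | rfl
        | (exfalso;
           (simp only [Sum.inl.injEq, Sum.inr.injEq, Prod.mk.injEq, Fin.ext_iff,
             reduceCtorEq] at h) <;> omega)
  · rintro rfl
    exact ⟨Or.inl rfl, Or.inl rfl⟩

lemma cyc6_anti (hab : (a:ℕ) ≠ b) (hac : (a:ℕ) ≠ c) (hbc : (b:ℕ) ≠ c)
    (hpr : (p:ℕ) ≠ r) (hpt : (p:ℕ) ≠ t) (hqr : (q:ℕ) ≠ r) (hqt : (q:ℕ) ≠ t) :
    ∀ u ∈ Set.range (cyc6 a b p q), ∀ v ∈ Set.range (cyc6 a c r t),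
      u ≠ Sum.inl a → v ≠ Sum.inl a → ¬ (PD s).Adj u v := by
  intro u hu v hv hu' hv'
  rw [cyc6_range] at hu hv
  simp only [Set.mem_insert_iff, Set.mem_singleton_iff] at hu hv
  rcases hu with rfl|rfl|rfl|rfl|rfl|rfl <;>
    rcases hv with rfl|rfl|rfl|rfl|rfl|rfl <;>
    first
      | exact absurd rfl hu'
      | exact absurd rfl hv'
      | (simp only [PD_ll, PD_lr, PD_rl, PD_rr, Fin.ext_iff]; omega)
      | (simp only [PD_ll, PD_lr, PD_rl, PD_rr, Fin.ext_iff]; exact id)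

/-- For `s ≥ 4`, `PD s` is not `2`-pinched: it contains two induced cycles
through a common vertex, otherwise disjoint and anticomplete. -/
theorem stmt4 (s : ℕ) (hs : 4 ≤ s) : ¬ Pinched 2 1 (PD s) := by
  rw [Pinched, not_not]
  have h0 : (0:ℕ) < s := by omega
  have h1 : (1:ℕ) < s := by omega
  have h2 : (2:ℕ) < s := by omega
  have h3 : (3:ℕ) < s := by omega
  -- common vertex x₁; cycle A uses x₁, x₀ and paths 0,1;
  -- cycle B uses x₁, x₂ and paths 2,3.
  refine ⟨Sum.inl ⟨1, h1⟩,
    ![⟨6, by omega, cyc6 ⟨1, h1⟩ ⟨0, h0⟩ ⟨0, h0⟩ ⟨1, h1⟩,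
        cyc6_inj (by simp) (by simp), cyc6_adj (by simp) (by simp)⟩,
      ⟨6, by omega, cyc6 ⟨1, h1⟩ ⟨2, h2⟩ ⟨2, h2⟩ ⟨3, h3⟩,
        cyc6_inj (by simp) (by simp), cyc6_adj (by simp) (by simp)⟩],
    ?_, ?_, ?_⟩
  · intro i; fin_cases i <;> norm_num
  · intro i; fin_cases i <;> rfl
  · have hI : Set.range (cyc6 (⟨1, h1⟩ : Fin s) ⟨0, h0⟩ ⟨0, h0⟩ ⟨1, h1⟩) ∩
        Set.range (cyc6 (⟨1, h1⟩ : Fin s) ⟨2, h2⟩ ⟨2, h2⟩ ⟨3, h3⟩) =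
        {Sum.inl ⟨1, h1⟩} :=
      cyc6_inter (by simp) (by simp) (by simp) (by simp) (by simp) (by simp) (by simp)
    have hA := cyc6_anti (s := s)
      (a := ⟨1, h1⟩) (b := ⟨0, h0⟩) (c := ⟨2, h2⟩)
      (p := ⟨0, h0⟩) (q := ⟨1, h1⟩) (r := ⟨2, h2⟩) (t := ⟨3, h3⟩)
      (by simp) (by simp) (by simp) (by simp) (by simp) (by simp) (by simp)
    intro i j hij
    fin_cases i <;> fin_cases j <;> simp only [Matrix.cons_val_zero, Matrix.cons_val_one,
      Matrix.head_cons] at hij ⊢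
    · exact absurd rfl hij
    · exact ⟨hI, hA⟩
    · refine ⟨by rw [Set.inter_comm]; exact hI, ?_⟩
      intro u hu v hv hu' hv' hadj
      exact hA v hv u hu hv' hu' hadj.symm
    · exact absurd rfl hij
end

section
/- Let G be a graph, let L₀ be an induced path in G, and let S₀ be a set of vertices of G disjoint from L₀, each having a neighbor in L₀. For x ∈ S₀ let L_x denote the minimal subpath of L₀ containing all neighbors of x, with ends u_x (first neighbor from a fixed end u of L₀) and v_x (last neighbor). Choose Y ⊆ S₀ maximal such that the paths {L_y : y ∈ Y} are pairwise disjoint, and subject to that with the sum over y ∈ Y of the distance along L₀ from u to u_y as large as possible. Then for every x ∈ S₀, the subpath L_x contains some vertex of W = {u_y : y ∈ Y}. -/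
open SimpleGraph

universe u

variable {V : Type u}

/-- An induced path in `G`, presented as an injective map from `Fin n` whose
adjacencies in `G` are exactly the consecutive ones. -/
structure IndPath (G : SimpleGraph V) where
  n : ℕ
  npos : 0 < n
  f : Fin n → V
  inj : Function.Injective f
  adj : ∀ i j : Fin n, G.Adj (f i) (f j) ↔ ((i : ℕ) + 1 = j ∨ (j : ℕ) + 1 = i)

def IndPath.verts {G : SimpleGraph V} (L : IndPath G) : Set V := Set.range L.f

/-- Setup: `L` is an induced path in `G` (traversed from the end `L.f 0 = u`),
`S₀` a set of vertices off `L` each with a neighbor in `L`; for `x ∈ S₀`,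
`a x` and `b x` are the positions on `L` of the first and last neighbors of
`x`, so `L_x` is the subpath of positions `[a x, b x]` and `u_x = L.f (a x)`.
If `Y ⊆ S₀` has the subpaths `{L_y : y ∈ Y}` pairwise disjoint, with `|Y|`
maximum and, subject to that, `∑_{y ∈ Y} a y` maximum, then every `L_x`
(`x ∈ S₀`) contains some vertex of `W = {u_y : y ∈ Y}`. -/
theorem stmt6 (V : Type u) (G : SimpleGraph V) (L : IndPath G) (S₀ : Finset V)
    (hoff : ∀ x ∈ S₀, x ∉ L.verts)
    (a b : V → Fin L.n)
    (hab : ∀ x ∈ S₀, a x ≤ b x)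
    (hfirst : ∀ x ∈ S₀, G.Adj x (L.f (a x)))
    (hlast : ∀ x ∈ S₀, G.Adj x (L.f (b x)))
    (hcover : ∀ x ∈ S₀, ∀ p : Fin L.n, G.Adj x (L.f p) → a x ≤ p ∧ p ≤ b x)
    (Y : Finset V) (hY : Y ⊆ S₀)
    (hYdisj : ∀ y ∈ Y, ∀ y' ∈ Y, y ≠ y' → (b y < a y' ∨ b y' < a y))
    (hmax : ∀ Y' : Finset V, Y' ⊆ S₀ →
      (∀ y ∈ Y', ∀ y' ∈ Y', y ≠ y' → (b y < a y' ∨ b y' < a y)) →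
      Y'.card ≤ Y.card ∧
        (Y'.card = Y.card → ∑ y ∈ Y', (a y : ℕ) ≤ ∑ y ∈ Y, (a y : ℕ))) :
    ∀ x ∈ S₀, ∃ y ∈ Y, a x ≤ a y ∧ a y ≤ b x := by
  classical
  intro x hx
  by_contra h
  push_neg at h
  have hxY : x ∉ Y := fun hxY => absurd (hab x hx) (not_le.mpr (h x hxY le_rfl))
  have hkey : ∀ y ∈ Y, a y < a x ∨ b x < a y := by
    intro y hy
    rcases lt_or_ge (a y) (a x) with h1 | h1
    · exact Or.inl h1
    · exact Or.inr (h y hy h1)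
  by_cases hc : ∃ y₀ ∈ Y, a y₀ < a x ∧ a x ≤ b y₀
  · obtain ⟨y₀, hy₀Y, hy₀1, hy₀2⟩ := hc
    set Y' := insert x (Y.erase y₀) with hY'
    have hxe : x ∉ Y.erase y₀ := fun hc => hxY (Finset.mem_of_mem_erase hc)
    have hxz : ∀ z ∈ Y.erase y₀, b x < a z ∨ b z < a x := by
      intro z hz
      have hzY := Finset.mem_of_mem_erase hz
      have hzne := Finset.ne_of_mem_erase hz
      rcases hkey z hzY with h1 | h1
      · right
        rcases hYdisj z hzY y₀ hy₀Y hzne with h2 | h2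
        · exact lt_trans h2 hy₀1
        · exact absurd hy₀2 (not_le.mpr (lt_trans h2 h1))
      · exact Or.inl h1
    have hsub : Y' ⊆ S₀ := by
      intro z hz
      rcases Finset.mem_insert.mp hz with rfl | hz
      · exact hx
      · exact hY (Finset.mem_of_mem_erase hz)
    have hdisj : ∀ y ∈ Y', ∀ y' ∈ Y', y ≠ y' → (b y < a y' ∨ b y' < a y) := by
      intro y hy y' hy' hne
      rcases Finset.mem_insert.mp hy with rfl | hy2
      · rcases Finset.mem_insert.mp hy' with rfl | hy'2
        · exact absurd rfl hne
        · exact hxz y' hy'2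
      · rcases Finset.mem_insert.mp hy' with rfl | hy'2
        · exact (hxz y hy2).symm
        · exact hYdisj y (Finset.mem_of_mem_erase hy2) y' (Finset.mem_of_mem_erase hy'2) hne
    have hcard : Y'.card = Y.card := by
      have hpos : 0 < Y.card := Finset.card_pos.mpr ⟨y₀, hy₀Y⟩
      rw [hY', Finset.card_insert_of_notMem hxe, Finset.card_erase_of_mem hy₀Y]
      omega
    have hsum : ∑ y ∈ Y', (a y : ℕ) > ∑ y ∈ Y, (a y : ℕ) := by
      rw [hY', Finset.sum_insert hxe]
      have h2 : ∑ y ∈ Y.erase y₀, (a y : ℕ) + (a y₀ : ℕ) = ∑ y ∈ Y, (a y : ℕ) :=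
        Finset.sum_erase_add Y (fun y => (a y : ℕ)) hy₀Y
      have hlt : (a y₀ : ℕ) < (a x : ℕ) := hy₀1
      omega
    exact absurd ((hmax Y' hsub hdisj).2 hcard) (not_le.mpr hsum)
  · push_neg at hc
    set Y' := insert x Y with hY'
    have hsub : Y' ⊆ S₀ := by
      intro z hz
      rcases Finset.mem_insert.mp hz with rfl | hz
      · exact hx
      · exact hY hz
    have hxz : ∀ z ∈ Y, b x < a z ∨ b z < a x := by
      intro z hz
      rcases hkey z hz with h1 | h1
      · exact Or.inr (lt_of_not_ge fun hle => absurd (hc z hz h1) (not_lt.mpr hle))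
      · exact Or.inl h1
    have hdisj : ∀ y ∈ Y', ∀ y' ∈ Y', y ≠ y' → (b y < a y' ∨ b y' < a y) := by
      intro y hy y' hy' hne
      rcases Finset.mem_insert.mp hy with rfl | hy2
      · rcases Finset.mem_insert.mp hy' with rfl | hy'2
        · exact absurd rfl hne
        · exact hxz y' hy'2
      · rcases Finset.mem_insert.mp hy' with rfl | hy'2
        · exact (hxz y hy2).symm
        · exact hYdisj y hy2 y' hy'2 hne
    have := (hmax Y' hsub hdisj).1
    rw [hY', Finset.card_insert_of_notMem hxY] at this
    omega
end

section
/- Let a, d, s, l be positive integers and let G be a graph. Suppose there is a d-meager (a^{l-1}(s + d(l-1)), 1)-constellation (S₀, L₀) in G. Then either (a) there exists an a-alignment (S, L, π) in G with S ⊆ S₀ and L a subpath of L₀, or (b) there exists a plain (s, l)-constellation (S, 𝓛) in G with S ⊆ S₀ and every path in 𝓛 a subpath of L₀. -/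
/-!
Sweep `L₀` from the left, recording for each vertex of `S₀` the positions of its neighbours. Let
`p` be the least position by which some vertex `x` has seen all its neighbours. Every vertex has a
neighbour at or after `p`, so either many vertices also have one at or before `p`, or we keep `x`,
discard those few and repeat on the rest: everything `x` sees precedes everything the rest sees,
and `a` rounds give an alignment. In the first case meagerness leaves all but `d` of these
vertices nonadjacent to `p` itself, so each of the others sees both `L₀[0, p)` and `L₀(p, end)`.
Recursing in `L₀[0, p)` with one window fewer and adding `L₀(p, end)` as a last window yields `l`
windows pairwise at distance at least two, i.e. anticomplete subpaths; each round costs a factor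
`a` and `d` vertices, whence the bound `a ^ (l - 1) * (s + d * (l - 1))`.
-/

open SimpleGraph

universe u

variable {V : Type u}

def IndPath.length {G : SimpleGraph V} (L : IndPath G) : ℕ := L.n - 1

structure Constellation (G : SimpleGraph V) (s l : ℕ) where
  S : Finset V
  card_S : S.card = s
  stable : ∀ x ∈ S, ∀ y ∈ S, ¬ G.Adj x y
  P : Fin l → IndPath G
  disj : ∀ i j : Fin l, i ≠ j → Disjoint (P i).verts (P j).verts
  sep : ∀ x ∈ S, ∀ i : Fin l, x ∉ (P i).verts
  nbr : ∀ x ∈ S, ∀ i : Fin l, ∃ v ∈ (P i).verts, G.Adj x v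

def Constellation.Plain {G : SimpleGraph V} {s l : ℕ} (c : Constellation G s l) : Prop :=
  ∀ i j : Fin l, i ≠ j → ∀ u ∈ (c.P i).verts, ∀ v ∈ (c.P j).verts, ¬ G.Adj u v

def Constellation.Meager {G : SimpleGraph V} {s l : ℕ} (c : Constellation G s l) (d : ℕ) : Prop :=
  ∀ i : Fin l, ∀ p : Fin (c.P i).n, ((↑c.S : Set V) ∩ {x | G.Adj x ((c.P i).f p)}).ncard ≤ d

def Constellation.Hollow {G : SimpleGraph V} {s l : ℕ} (c : Constellation G s l) (h : ℕ) : Prop :=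
  ∀ x ∈ c.S, ∀ i : Fin l, ∀ p q : Fin (c.P i).n, (p : ℕ) < q →
    G.Adj x ((c.P i).f p) → G.Adj x ((c.P i).f q) →
    (∀ r : Fin (c.P i).n, (p : ℕ) < r → (r : ℕ) < q → ¬ G.Adj x ((c.P i).f r)) →
    (q : ℕ) - p < h

structure PathAlignment (G : SimpleGraph V) (s : ℕ) extends Constellation G s 1 where
  π : Fin s → V
  π_inj : Function.Injective π
  π_mem : ∀ i, π i ∈ S
  order : ∃ rev : Bool, ∀ i j : Fin s, i < j →
    ∀ p q : Fin (P 0).n, G.Adj (π i) ((P 0).f p) → G.Adj (π j) ((P 0).f q) →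
      (if rev then (q : ℕ) < p else (p : ℕ) < q)

structure PDArray (G : SimpleGraph V) (s h : ℕ) extends Constellation G s s where
  plain : toConstellation.Plain
  hollow : toConstellation.Hollow h
  π : Fin s → V
  π_inj : Function.Injective π
  π_mem : ∀ i, π i ∈ S
  aligned : ∀ k : Fin s, ∃ rev : Bool, ∀ i j : Fin s, i < j →
    ∀ p q : Fin (P k).n, G.Adj (π i) ((P k).f p) → G.Adj (π j) ((P k).f q) →
      (if rev then (q : ℕ) < p else (p : ℕ) < q)

def PDArray.verts {G : SimpleGraph V} {s h : ℕ} (A : PDArray G s h) : Set V :=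
  (↑A.S : Set V) ∪ ⋃ i : Fin s, (A.P i).verts

open Finset

section Sweep

variable {α : Type*}

def IsAlignedIn (R : α → ℕ → Prop) (I : Set ℕ) {m : ℕ} (x : Fin m → α) : Prop :=
  (∀ i, ∃ p ∈ I, R (x i) p) ∧
    ∀ ⦃i j⦄, i < j → ∀ p ∈ I, ∀ q ∈ I, R (x i) p → R (x j) q → p < q

/-- Windows are half-open, `[wlo i, whi i)`, so `whi i < wlo j` leaves at least one position
between them: this is what makes the corresponding subpaths anticomplete. -/
def SeesSeparatedWindows (R : α → ℕ → Prop) (T : Finset α) (hi : ℕ) {l : ℕ}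
    (wlo whi : Fin l → ℕ) : Prop :=
  (∀ i, whi i ≤ hi) ∧ (∀ ⦃i j⦄, i < j → whi i < wlo j) ∧
    ∀ x ∈ T, ∀ i, ∃ p ∈ Set.Ico (wlo i) (whi i), R x p

variable {R : α → ℕ → Prop}

theorem IsAlignedIn.injective {I : Set ℕ} {m : ℕ} {x : Fin m → α} (hx : IsAlignedIn R I x) :
    Function.Injective x := by
  intro i j hij
  by_contra hne
  obtain ⟨p, hp, hRp⟩ := hx.1 i
  rcases lt_or_gt_of_ne hne with h | h
  · exact lt_irrefl p (hx.2 h p hp p hp hRp (hij ▸ hRp))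
  · exact lt_irrefl p (hx.2 h p hp p hp (hij ▸ hRp) hRp)

theorem IsAlignedIn.cons {I : Set ℕ} {m : ℕ} {x₀ : α} {x : Fin m → α} (hx : IsAlignedIn R I x)
    (h₀ : ∃ p ∈ I, R x₀ p) (hlt : ∀ j, ∀ p ∈ I, ∀ q ∈ I, R x₀ p → R (x j) q → p < q) :
    IsAlignedIn R I (Fin.cons x₀ x : Fin (m + 1) → α) := by
  refine ⟨Fin.cases h₀ hx.1, fun i j hij => ?_⟩
  induction j using Fin.cases with
  | zero => exact absurd hij (Fin.not_lt_zero i)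
  | succ j =>
    induction i using Fin.cases with
    | zero => simpa using hlt j
    | succ i => simpa using hx.2 (Fin.succ_lt_succ_iff.mp hij)

theorem SeesSeparatedWindows.snoc {T : Finset α} {hi pp : ℕ} {l : ℕ} {wlo whi : Fin l → ℕ}
    (hw : SeesSeparatedWindows R T pp wlo whi) (hpp : pp ≤ hi)
    (hT : ∀ x ∈ T, ∃ p ∈ Set.Ico (pp + 1) hi, R x p) :
    SeesSeparatedWindows R T hi (Fin.snoc wlo (pp + 1) : Fin (l + 1) → ℕ)
      (Fin.snoc whi hi : Fin (l + 1) → ℕ) := by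
  refine ⟨fun i => ?_, fun i j hij => ?_, fun x hx i => ?_⟩
  · induction i using Fin.lastCases with
    | last => simp
    | cast i => simpa using (hw.1 i).trans hpp
  · induction j using Fin.lastCases with
    | last =>
      induction i using Fin.lastCases with
      | last => exact absurd hij (lt_irrefl _)
      | cast i => simpa [Nat.lt_succ_iff] using hw.1 i
    | cast j =>
      induction i using Fin.lastCases with
      | last => exact absurd hij (not_lt.mpr (Fin.le_last _))
      | cast i => simpa using hw.2.1 (Fin.castSucc_lt_castSucc_iff.mp hij)
  · induction i using Fin.lastCases with
    | last => simpa using hT x hx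
    | cast i => simpa using hw.2.2 x hx i

theorem exists_earliest_last_neighbour {S : Finset α} {hi : ℕ} (hS : S.Nonempty)
    (hsee : ∀ x ∈ S, ∃ p < hi, R x p) :
    ∃ p₀, ∃ x₀ ∈ S, (∀ q < hi, R x₀ q → q ≤ p₀) ∧ ∀ x ∈ S, ∃ q ∈ Set.Ico p₀ hi, R x q := by
  classical
  have hex : ∃ p, ∃ x ∈ S, ∀ q < hi, R x q → q ≤ p :=
    ⟨hi, hS.choose, hS.choose_spec, fun q hq _ => hq.le⟩
  obtain ⟨x₀, hx₀, hle⟩ := Nat.find_spec hex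
  refine ⟨Nat.find hex, x₀, hx₀, hle, fun x hx => ?_⟩
  by_contra hnone
  have hlt : ∀ q < hi, R x q → q < Nat.find hex := fun q hq hRq =>
    not_le.mp fun h => hnone ⟨q, ⟨h, hq⟩, hRq⟩
  obtain ⟨p, hp, hRp⟩ := hsee x hx
  have hpos := hlt p hp hRp
  exact Nat.find_min hex (Nat.sub_lt (by omega) one_pos)
    ⟨x, hx, fun q hq hRq => Nat.le_sub_one_of_lt (hlt q hq hRq)⟩

theorem exists_aligned_or_straddling (hi k : ℕ) :
    ∀ (m : ℕ) (S : Finset α), (∀ x ∈ S, ∃ p < hi, R x p) → m * k ≤ #S →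
      (∃ x : Fin m → α, (∀ i, x i ∈ S) ∧ IsAlignedIn R (Set.Iio hi) x) ∨
      ∃ pp, ∃ C ⊆ S, k ≤ #C ∧ ∀ x ∈ C, (∃ p ≤ pp, R x p) ∧ ∃ p ∈ Set.Ico pp hi, R x p := by
  classical
  intro m
  induction m with
  | zero =>
    exact fun _ _ _ => Or.inl ⟨Fin.elim0, fun i => i.elim0, fun i => i.elim0, fun i => i.elim0⟩
  | succ m ih =>
    intro S hsee hcard
    rcases S.eq_empty_or_nonempty with rfl | hS
    · refine Or.inr ⟨0, ∅, empty_subset _, ?_, by simp⟩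
      simpa using hcard
    obtain ⟨p₀, x₀, hx₀, hlast, hcut⟩ := exists_earliest_last_neighbour hS hsee
    set C := S.filter fun x => ∃ p ≤ p₀, R x p
    have hCS : C ⊆ S := filter_subset _ _
    by_cases hC : k ≤ #C
    · exact Or.inr ⟨p₀, C, hCS, hC,
        fun x hx => ⟨(mem_filter.mp hx).2, hcut x (mem_filter.mp hx).1⟩⟩
    have hrest : m * k ≤ #(S \ C) := by
      have := card_sdiff_add_card_eq_card hCS
      rw [Nat.succ_mul] at hcard
      omega
    rcases ih (S \ C) (fun x hx => hsee x (mem_sdiff.mp hx).1) hrest with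
      ⟨x, hxS, hx⟩ | ⟨pp, C', hC'S, hC', hC'see⟩
    · refine Or.inl ⟨Fin.cons x₀ x, Fin.cases hx₀ fun i => (mem_sdiff.mp (hxS i)).1,
        hx.cons (hsee x₀ hx₀) fun j p hp q hq hRp hRq => ?_⟩
      have hq₀ : p₀ < q := not_le.mp fun h =>
        (mem_sdiff.mp (hxS j)).2 (mem_filter.mpr ⟨(mem_sdiff.mp (hxS j)).1, q, h, hRq⟩)
      exact (hlast p hp hRp).trans_lt hq₀
    · exact Or.inr ⟨pp, C', hC'S.trans sdiff_subset, hC', hC'see⟩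

theorem mul_add_le_pow_succ_mul (a d s l : ℕ) :
    a * (a ^ l * (s + d * l) + d) ≤ a ^ (l + 1) * (s + d * (l + 1)) :=
  calc a * (a ^ l * (s + d * l) + d)
      ≤ a * (a ^ l * (s + d * l)) + a ^ (l + 1) * d := by
        rw [mul_add]; gcongr; exact Nat.le_self_pow (Nat.succ_ne_zero l) a
    _ = a ^ (l + 1) * (s + d * (l + 1)) := by ring

theorem exists_aligned_or_separated_windows {a d s : ℕ} (ha : 0 < a) (hs : 0 < s) (l : ℕ) :
    ∀ (S : Finset α) (hi : ℕ), (∀ p, ∀ D ⊆ S, (∀ x ∈ D, R x p) → #D ≤ d) →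
      (∀ x ∈ S, ∃ p < hi, R x p) → a ^ l * (s + d * l) ≤ #S →
      (∃ hi' ≤ hi, ∃ x : Fin a → α, (∀ i, x i ∈ S) ∧ IsAlignedIn R (Set.Iio hi') x) ∨
      ∃ T ⊆ S, #T = s ∧ ∃ wlo whi : Fin (l + 1) → ℕ, SeesSeparatedWindows R T hi wlo whi := by
  classical
  induction l with
  | zero =>
    intro S hi _ hsee hcard
    obtain ⟨T, hTS, hT⟩ := exists_subset_card_eq (show s ≤ #S by simpa using hcard)
    refine Or.inr ⟨T, hTS, hT, fun _ => 0, fun _ => hi, fun _ => le_rfl,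
      fun i j hij => absurd hij (by omega), fun x hx _ => ?_⟩
    obtain ⟨p, hp, hRp⟩ := hsee x (hTS hx)
    exact ⟨p, ⟨p.zero_le, hp⟩, hRp⟩
  | succ l ih =>
    intro S hi hmeager hsee hcard
    rcases exists_aligned_or_straddling hi _ a S hsee
        ((mul_add_le_pow_succ_mul a d s l).trans hcard) with
      ⟨x, hxS, hx⟩ | ⟨pp, C, hCS, hC, hCsee⟩
    · exact Or.inl ⟨hi, le_rfl, x, hxS, hx⟩
    set D := C.filter (R · pp)
    have hDC : D ⊆ C := filter_subset _ _
    have hD : #D ≤ d := hmeager pp D (hDC.trans hCS) fun x hx => (mem_filter.mp hx).2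
    have hC'S : C \ D ⊆ S := sdiff_subset.trans hCS
    have hC'card : a ^ l * (s + d * l) ≤ #(C \ D) := by
      have := card_sdiff_add_card_eq_card hDC
      omega
    have hC'see : ∀ x ∈ C \ D, (∃ p < pp, R x p) ∧ ∃ p ∈ Set.Ico (pp + 1) hi, R x p := by
      intro x hx
      obtain ⟨hxC, hxD⟩ := mem_sdiff.mp hx
      have hne : ∀ p, R x p → p ≠ pp := by
        rintro p hRp rfl
        exact hxD (mem_filter.mpr ⟨hxC, hRp⟩)
      obtain ⟨⟨p, hp, hRp⟩, ⟨q, hq, hRq⟩⟩ := hCsee x hxC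
      exact ⟨⟨p, lt_of_le_of_ne hp (hne p hRp), hRp⟩,
        ⟨q, ⟨lt_of_le_of_ne hq.1 (hne q hRq).symm, hq.2⟩, hRq⟩⟩
    obtain ⟨y, hy⟩ : (C \ D).Nonempty :=
      card_pos.mp (lt_of_lt_of_le (by positivity) hC'card)
    have hpp : pp ≤ hi := by
      obtain ⟨q, hq, -⟩ := (hC'see y hy).2
      exact (Nat.le_succ pp).trans (hq.1.trans hq.2.le)
    rcases ih (C \ D) pp (fun p D' hD' => hmeager p D' (hD'.trans hC'S))
        (fun x hx => (hC'see x hx).1) hC'card with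
      ⟨hi', hhi', x, hxS, hx⟩ | ⟨T, hTS, hT, wlo, whi, hw⟩
    · exact Or.inl ⟨hi', hhi'.trans hpp, x, fun i => hC'S (hxS i), hx⟩
    · exact Or.inr ⟨T, hTS.trans hC'S, hT, _, _, hw.snoc hpp fun x hx => (hC'see x (hTS hx)).2⟩

end Sweep

namespace IndPath

variable {G : SimpleGraph V}

def AdjAt (L : IndPath G) (x : V) (p : ℕ) : Prop :=
  ∃ h : p < L.n, G.Adj x (L.f ⟨p, h⟩)

def sub (L : IndPath G) (lo hi : ℕ) (hlt : lo < hi) (hle : hi ≤ L.n) : IndPath G where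
  n := hi - lo
  npos := Nat.sub_pos_of_lt hlt
  f i := L.f ⟨lo + i, by omega⟩
  inj i j h := Fin.ext (by simpa using L.inj h)
  adj i j := by rw [L.adj]; dsimp only; omega

variable {L : IndPath G} {lo hi : ℕ} {hlt : lo < hi} {hle : hi ≤ L.n}

theorem mem_sub_verts {v : V} :
    v ∈ (L.sub lo hi hlt hle).verts ↔ ∃ p : Fin L.n, lo ≤ p ∧ (p : ℕ) < hi ∧ L.f p = v := by
  constructor
  · rintro ⟨i, rfl⟩
    have := i.2
    simp only [sub] at this
    exact ⟨_, Nat.le_add_right _ _, by dsimp only; omega, rfl⟩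
  · rintro ⟨p, hlo, hhi, rfl⟩
    exact ⟨⟨p - lo, by simp only [sub]; omega⟩, by simp only [sub]; congr; omega⟩

theorem sub_verts_subset : (L.sub lo hi hlt hle).verts ⊆ L.verts := by
  rintro v ⟨i, rfl⟩
  exact ⟨_, rfl⟩

theorem exists_adj_of_adjAt {x : V} {p : ℕ} (hp : p ∈ Set.Ico lo hi) (h : L.AdjAt x p) :
    ∃ v ∈ (L.sub lo hi hlt hle).verts, G.Adj x v := by
  obtain ⟨hpn, hadj⟩ := h
  exact ⟨_, mem_sub_verts.mpr ⟨⟨p, hpn⟩, hp.1, hp.2, rfl⟩, hadj⟩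

theorem adjAt_of_adj_sub {x : V} {p : Fin (L.sub lo hi hlt hle).n}
    (h : G.Adj x ((L.sub lo hi hlt hle).f p)) : lo + p ∈ Set.Ico lo hi ∧ L.AdjAt x (lo + p) := by
  have := p.2
  dsimp only [sub] at this
  exact ⟨⟨Nat.le_add_right _ _, by omega⟩, _, h⟩

theorem disjoint_sub_verts {lo' hi' : ℕ} {hlt' : lo' < hi'} {hle' : hi' ≤ L.n} (h : hi ≤ lo') :
    Disjoint (L.sub lo hi hlt hle).verts (L.sub lo' hi' hlt' hle').verts := by
  rw [Set.disjoint_left]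
  rintro v hv hv'
  obtain ⟨p, -, hp, rfl⟩ := mem_sub_verts.mp hv
  obtain ⟨q, hq, -, hqp⟩ := mem_sub_verts.mp hv'
  have := L.inj hqp
  omega

theorem not_adj_of_mem_sub_verts {lo' hi' : ℕ} {hlt' : lo' < hi'} {hle' : hi' ≤ L.n}
    (h : hi < lo') {u v : V} (hu : u ∈ (L.sub lo hi hlt hle).verts)
    (hv : v ∈ (L.sub lo' hi' hlt' hle').verts) : ¬ G.Adj u v := by
  obtain ⟨p, -, hp, rfl⟩ := mem_sub_verts.mp hu
  obtain ⟨q, hq, -, rfl⟩ := mem_sub_verts.mp hv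
  rw [L.adj]
  omega

end IndPath

namespace Constellation

variable {G : SimpleGraph V} {s₀ l : ℕ}

theorem exists_adjAt (c : Constellation G s₀ l) {x : V} (hx : x ∈ c.S) (i : Fin l) :
    ∃ p < (c.P i).n, (c.P i).AdjAt x p := by
  obtain ⟨_, ⟨p, rfl⟩, hadj⟩ := c.nbr x hx i
  exact ⟨p, p.2, p.2, hadj⟩

theorem Meager.card_le {c : Constellation G s₀ l} {d : ℕ} (hm : c.Meager d) (i : Fin l) (p : ℕ)
    {D : Finset V} (hD : D ⊆ c.S) (hadj : ∀ x ∈ D, (c.P i).AdjAt x p) : #D ≤ d := by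
  rcases D.eq_empty_or_nonempty with rfl | ⟨y, hy⟩
  · simp
  obtain ⟨hp, -⟩ := hadj y hy
  calc #D = (D : Set V).ncard := (Set.ncard_coe_finset D).symm
    _ ≤ ((c.S : Set V) ∩ {x | G.Adj x ((c.P i).f ⟨p, hp⟩)}).ncard :=
      Set.ncard_le_ncard (fun x hx => ⟨hD hx, (hadj x hx).2⟩) (c.S.finite_toSet.inter_of_left _)
    _ ≤ d := hm i ⟨p, hp⟩

theorem exists_pathAlignment (c₀ : Constellation G s₀ 1) {a hi : ℕ} (ha : 0 < a)
    (hhi : hi ≤ (c₀.P 0).n) {x : Fin a → V} (hxS : ∀ i, x i ∈ c₀.S)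
    (hx : IsAlignedIn (c₀.P 0).AdjAt (Set.Iio hi) x) :
    ∃ A : PathAlignment G a, A.S ⊆ c₀.S ∧ (A.P 0).verts ⊆ (c₀.P 0).verts := by
  obtain ⟨p₀, hp₀, -⟩ := hx.1 ⟨0, ha⟩
  have hpos : 0 < hi := p₀.zero_le.trans_lt hp₀
  have hS : univ.map ⟨x, hx.injective⟩ ⊆ c₀.S := by
    simpa [Finset.subset_iff] using hxS
  refine ⟨{ S := univ.map ⟨x, hx.injective⟩
            card_S := by simp
            stable := fun u hu v hv => c₀.stable u (hS hu) v (hS hv)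
            P := fun _ => (c₀.P 0).sub 0 hi hpos hhi
            disj := fun i j hij => absurd (Subsingleton.elim i j) hij
            sep := fun u hu _ hv => c₀.sep u (hS hu) 0 (IndPath.sub_verts_subset hv)
            nbr := fun u hu _ => ?_
            π := x
            π_inj := hx.injective
            π_mem := fun i => mem_map_of_mem _ (mem_univ i)
            order := ⟨false, fun i j hij p q hp hq => ?_⟩ },
    hS, IndPath.sub_verts_subset (hlt := hpos) (hle := hhi)⟩
  · obtain ⟨i, -, rfl⟩ := mem_map.mp hu
    obtain ⟨p, hp, hadj⟩ := hx.1 i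
    exact IndPath.exists_adj_of_adjAt ⟨p.zero_le, hp⟩ hadj
  · obtain ⟨hp', hadjp⟩ := IndPath.adjAt_of_adj_sub hp
    obtain ⟨hq', hadjq⟩ := IndPath.adjAt_of_adj_sub hq
    simpa using hx.2 hij _ hp'.2 _ hq'.2 hadjp hadjq

theorem exists_plain_of_seesSeparatedWindows (c₀ : Constellation G s₀ 1) {s l : ℕ}
    {T : Finset V} (hTS : T ⊆ c₀.S) (hT : #T = s) (hTne : T.Nonempty) {wlo whi : Fin l → ℕ}
    (hw : SeesSeparatedWindows (c₀.P 0).AdjAt T (c₀.P 0).n wlo whi) :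
    ∃ c : Constellation G s l, c.Plain ∧ c.S ⊆ c₀.S ∧ ∀ i, (c.P i).verts ⊆ (c₀.P 0).verts := by
  obtain ⟨hhi, hsep, hsee⟩ := hw
  obtain ⟨y, hy⟩ := hTne
  have hlt : ∀ i, wlo i < whi i := fun i => by
    obtain ⟨p, hp, -⟩ := hsee y hy i
    exact hp.1.trans_lt hp.2
  let P i := (c₀.P 0).sub (wlo i) (whi i) (hlt i) (hhi i)
  have hsub : ∀ i, (P i).verts ⊆ (c₀.P 0).verts := fun _ => IndPath.sub_verts_subset
  have hdisj : ∀ ⦃i j⦄, i < j → Disjoint (P i).verts (P j).verts :=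
    fun i j h => IndPath.disjoint_sub_verts (hsep h).le
  have hanti : ∀ ⦃i j⦄, i < j → ∀ u ∈ (P i).verts, ∀ v ∈ (P j).verts, ¬ G.Adj u v :=
    fun i j h _ hu _ hv => IndPath.not_adj_of_mem_sub_verts (hsep h) hu hv
  refine ⟨{ S := T
            card_S := hT
            stable := fun u hu v hv => c₀.stable u (hTS hu) v (hTS hv)
            P := P
            disj := fun i j hij => (lt_or_gt_of_ne hij).elim (hdisj ·) (hdisj · |>.symm)
            sep := fun u hu i hv => c₀.sep u (hTS hu) 0 (hsub i hv)
            nbr := fun u hu i => ?_ },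
    fun i j hij u hu v hv => ?_, hTS, hsub⟩
  · obtain ⟨p, hp, hadj⟩ := hsee u hu i
    exact IndPath.exists_adj_of_adjAt hp hadj
  · rcases lt_or_gt_of_ne hij with h | h
    · exact hanti h u hu v hv
    · exact fun huv => hanti h v hv u hu huv.symm

end Constellation

theorem stmt7_general (a d s l : ℕ) (ha : 0 < a) (hs : 0 < s) (hl : 0 < l)
    (V : Type u) (G : SimpleGraph V)
    (c₀ : Constellation G (a ^ (l - 1) * (s + d * (l - 1))) 1)
    (hm : c₀.Meager d) :
    (∃ A : PathAlignment G a, A.S ⊆ c₀.S ∧ (A.P 0).verts ⊆ (c₀.P 0).verts) ∨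
    (∃ c : Constellation G s l, c.Plain ∧ c.S ⊆ c₀.S ∧
      ∀ i : Fin l, (c.P i).verts ⊆ (c₀.P 0).verts) := by
  obtain ⟨l, rfl⟩ : ∃ l', l = l' + 1 := ⟨l - 1, by omega⟩
  have hcard : a ^ l * (s + d * l) ≤ #c₀.S := by simpa using c₀.card_S.ge
  rcases exists_aligned_or_separated_windows ha hs l c₀.S (c₀.P 0).n (fun p _ => hm.card_le 0 p)
      (fun x hx => c₀.exists_adjAt hx 0) hcard with
    ⟨hi, hhi, x, hxS, hx⟩ | ⟨T, hTS, hT, wlo, whi, hw⟩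
  · exact Or.inl (c₀.exists_pathAlignment ha hhi hxS hx)
  · exact Or.inr (c₀.exists_plain_of_seesSeparatedWindows hTS hT (card_pos.mp (hT ▸ hs)) hw)

/-- Lemma 4.2: from a `d`-meager `(a^(l-1)·(s + d(l-1)), 1)`-constellation
`(S₀, L₀)` one obtains either an `a`-alignment `(S, L, π)` with `S ⊆ S₀` and
`L` a subpath of `L₀`, or a plain `(s, l)`-constellation with stable side
inside `S₀` and every path a subpath of `L₀`. -/
theorem stmt7 (a d s l : ℕ) (ha : 0 < a) (hd : 0 < d) (hs : 0 < s) (hl : 0 < l)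
    (V : Type u) (G : SimpleGraph V)
    (c₀ : Constellation G (a ^ (l - 1) * (s + d * (l - 1))) 1)
    (hm : c₀.Meager d) :
    (∃ A : PathAlignment G a, A.S ⊆ c₀.S ∧ (A.P 0).verts ⊆ (c₀.P 0).verts) ∨
    (∃ c : Constellation G s l, c.Plain ∧ c.S ⊆ c₀.S ∧
      ∀ i : Fin l, (c.P i).verts ⊆ (c₀.P 0).verts) :=
  stmt7_general a d s l ha hs hl V G c₀ hm
end

section
/- Let a, c, d, h be positive integers and let G be a (c,h)-pinched graph. If there exists a d-meager (a^{2cdh−1} · d · (h + 2cdh − 1), 1)-constellation (S₀, L₀) in G, then there exists an a-alignment (S, L, π) in G with S ⊆ S₀ and L a subpath of L₀. -/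
open SimpleGraph

universe u

variable {V : Type u}

/-- `t` is (the index of) a neighbour of `s` on the path `L`. -/
def Nbr (G : SimpleGraph V) (L : IndPath G) (s : V) (t : ℕ) : Prop :=
  ∃ ht : t < L.n, G.Adj s (L.f ⟨t, ht⟩)

/-- A chain of `k` pairwise separated "big gaps" of `s` on `L`, all to the right of `hi`. -/
def GapChain (G : SimpleGraph V) (L : IndPath G) (s : V) (k hi h : ℕ) : Prop :=
  ∃ p q : Fin k → ℕ,
    (∀ i, q i < L.n) ∧
    (∀ i, p i + 2 * h ≤ q i) ∧
    (∀ i, Nbr G L s (p i)) ∧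
    (∀ i, Nbr G L s (q i)) ∧
    (∀ i t, p i < t → t < q i → ¬ Nbr G L s t) ∧
    (∀ i j : Fin k, i < j → q j ≤ p i) ∧
    (∀ i, hi ≤ q i)

lemma four_pow_ge (h : ℕ) : 2 * h + 1 ≤ 4 ^ h := by
  induction h with
  | zero => simp
  | succ k ih =>
    have : (4:ℕ) ^ (k+1) = 4 * 4 ^ k := by ring
    omega

lemma num_ineq (a d h e : ℕ) (ha : 2 ≤ a) (hd : 1 ≤ d) (hh : 1 ≤ h) (he : 2 * (h - 1) ≤ e) :
    (a - 1) * (a ^ e * d * (h + e) + (2 * h - 1) * d) ≤ a ^ (e + 1) * d * (h + e + 1) := by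
  have h1 : 2 * h - 1 ≤ a ^ e := by
    have h2 : 2 * h - 1 ≤ 4 ^ (h - 1) := by
      have := four_pow_ge (h - 1)
      omega
    have h3 : (4:ℕ) ^ (h-1) = 2 ^ (2 * (h - 1)) := by
      rw [pow_mul]; norm_num
    have h4 : (2:ℕ) ^ (2 * (h-1)) ≤ 2 ^ e := Nat.pow_le_pow_right (by norm_num) he
    have h5 : (2:ℕ) ^ e ≤ a ^ e := Nat.pow_le_pow_left ha e
    omega
  have key1 : (a - 1) * (a ^ e * d * (h + e)) ≤ a * (a ^ e * d * (h + e)) :=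
    Nat.mul_le_mul_right _ (by omega)
  have key2 : (a - 1) * ((2 * h - 1) * d) ≤ a * (a ^ e * d) :=
    Nat.mul_le_mul (by omega) (Nat.mul_le_mul_right _ h1)
  calc (a - 1) * (a ^ e * d * (h + e) + (2 * h - 1) * d)
      = (a - 1) * (a ^ e * d * (h + e)) + (a - 1) * ((2 * h - 1) * d) := by ring
    _ ≤ a * (a ^ e * d * (h + e)) + a * (a ^ e * d) := Nat.add_le_add key1 key2
    _ = a ^ (e + 1) * d * (h + e + 1) := by ring

lemma pierce {V : Type u} (j : ℕ) (T : Finset V) (A : V → Finset ℕ)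
    (hA : ∀ s ∈ T, (A s).Nonempty) :
    (∃ g : Fin j → V, (∀ i, g i ∈ T) ∧
        ∀ i i' : Fin j, i < i' → ∀ u ∈ A (g i), ∀ v ∈ A (g i'), u < v) ∨
      (∃ P : Finset ℕ, P.card + 1 ≤ j ∧
        ∀ s ∈ T, ∃ x ∈ P, (∃ u ∈ A s, u ≤ x) ∧ ∃ v ∈ A s, x ≤ v) := by
  classical
  induction j generalizing T with
  | zero => exact Or.inl ⟨Fin.elim0, fun i => i.elim0, fun i => i.elim0⟩
  | succ j ih =>
    rcases T.eq_empty_or_nonempty with rfl | hT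
    · exact Or.inr ⟨∅, by simp, by simp⟩
    obtain ⟨s₀, hs₀T, hs₀min⟩ := Finset.exists_min_image T (fun s => (A s).sup id) hT
    set x := (A s₀).sup id with hx
    set T' := T.filter (fun s => ∀ u ∈ A s, x < u) with hT'
    have hT'sub : T' ⊆ T := Finset.filter_subset _ _
    rcases ih T' (fun s hs => hA s (hT'sub hs)) with ⟨g', hg'T, hg'ord⟩ | ⟨P', hP'c, hP'cov⟩
    · left
      refine ⟨fun i => if hi : (i : ℕ) = 0 then s₀ else g' ⟨(i:ℕ) - 1, by omega⟩, ?_, ?_⟩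
      · intro i
        dsimp only
        by_cases hi : (i : ℕ) = 0
        · rw [dif_pos hi]; exact hs₀T
        · rw [dif_neg hi]; exact hT'sub (hg'T _)
      · intro i i' hii' u hu v hv
        dsimp only at hu hv
        have hi'0 : (i' : ℕ) ≠ 0 := by
          have : (i:ℕ) < i' := hii'
          omega
        rw [dif_neg hi'0] at hv
        by_cases hi0 : (i:ℕ) = 0
        · rw [dif_pos hi0] at hu
          have hux : u ≤ x := Finset.le_sup (f := id) hu
          have hg'mem := hg'T ⟨(i':ℕ) - 1, by omega⟩
          have hxv : x < v := (Finset.mem_filter.mp hg'mem).2 v hv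
          omega
        · rw [dif_neg hi0] at hu
          have : (i:ℕ) < (i':ℕ) := hii'
          exact hg'ord ⟨(i:ℕ) - 1, by omega⟩ ⟨(i':ℕ) - 1, by omega⟩
            (by rw [Fin.mk_lt_mk]; omega) u hu v hv
    · right
      refine ⟨insert x P', ?_, ?_⟩
      · have := Finset.card_insert_le x P'
        omega
      · intro s hs
        by_cases hs' : s ∈ T'
        · obtain ⟨x', hx'P, hcond⟩ := hP'cov s hs'
          exact ⟨x', Finset.mem_insert_of_mem hx'P, hcond⟩
        · have hnot : ¬ ∀ u ∈ A s, x < u := by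
            intro hcon
            exact hs' (Finset.mem_filter.mpr ⟨hs, hcon⟩)
          push_neg at hnot
          obtain ⟨u, huA, hux⟩ := hnot
          obtain ⟨b, hbA, hbsup⟩ := Finset.exists_mem_eq_sup (A s) (hA s hs) id
          refine ⟨x, Finset.mem_insert_self _ _, ⟨u, huA, by omega⟩, ⟨b, hbA, ?_⟩⟩
          have hmin := hs₀min s hs
          rw [hbsup] at hmin
          simpa using hmin

def IndPath.prefixPath {G : SimpleGraph V} (L : IndPath G) (hi : ℕ) (h1 : 0 < hi)
    (h2 : hi ≤ L.n) : IndPath G where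
  n := hi
  npos := h1
  f i := L.f ⟨(i : ℕ), lt_of_lt_of_le i.isLt h2⟩
  inj := by
    intro i j hij
    have := L.inj hij
    exact Fin.ext (by simpa [Fin.mk.injEq] using this)
  adj := fun i j => L.adj _ _

lemma cycle_of_gap (G : SimpleGraph V) (L : IndPath G) (s : V) (hs : s ∉ L.verts)
    {h P Q : ℕ} (hh : 0 < h) (hPQ : P + 2 * h ≤ Q)
    (hap : Nbr G L s P) (haq : Nbr G L s Q)
    (hint : ∀ t, P < t → t < Q → ¬ Nbr G L s t) :
    ∃ C : IndCycle G, C.n = Q - P + 2 ∧ C.f 0 = s ∧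
      Set.range C.f = {s} ∪ {v : V | ∃ t, P ≤ t ∧ t ≤ Q ∧ ∃ ht : t < L.n, v = L.f ⟨t, ht⟩} := by
  classical
  obtain ⟨hPn, hadjP⟩ := hap
  obtain ⟨hQn, hadjQ⟩ := haq
  obtain ⟨N, hNdef⟩ : ∃ N, N = Q - P + 2 := ⟨_, rfl⟩
  have hN4 : 4 ≤ N := by omega
  haveI : NeZero N := ⟨by omega⟩
  haveI : Fact (1 < N) := ⟨by omega⟩
  have hvlt : ∀ z : ZMod N, z.val < N := fun z => ZMod.val_lt z
  have hpf : ∀ z : ZMod N, P + z.val - 1 < L.n := fun z => by have := hvlt z; omega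
  set fC : ZMod N → V := fun z => if z.val = 0 then s else L.f ⟨P + z.val - 1, hpf z⟩ with hfC
  have hfC0 : ∀ z : ZMod N, z.val = 0 → fC z = s := by
    intro z hz; simp only [hfC, if_pos hz]
  have hfCne : ∀ z : ZMod N, z.val ≠ 0 → fC z = L.f ⟨P + z.val - 1, hpf z⟩ := by
    intro z hz; simp only [hfC, if_neg hz]
  have hone : (1 : ZMod N).val = 1 := ZMod.val_one N
  have hadd : ∀ z : ZMod N, (z + 1).val = if z.val + 1 = N then 0 else z.val + 1 := by
    intro z
    rw [ZMod.val_add, hone]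
    have := hvlt z
    by_cases hz : z.val + 1 = N
    · rw [if_pos hz, hz, Nat.mod_self]
    · rw [if_neg hz, Nat.mod_eq_of_lt (by omega)]
  have heq : ∀ z w : ZMod N, z = w ↔ z.val = w.val :=
    fun z w => ⟨fun hzw => by rw [hzw], fun hv => ZMod.val_injective N hv⟩
  have hadjchar : ∀ (t : ℕ) (ht : t < L.n), P ≤ t → t ≤ Q →
      (G.Adj s (L.f ⟨t, ht⟩) ↔ (t = P ∨ t = Q)) := by
    intro t ht h1 h2
    constructor
    · intro hadj
      by_contra hcon
      push_neg at hcon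
      exact hint t (by omega) (by omega) ⟨ht, hadj⟩
    · rintro (rfl | rfl)
      · exact hadjP
      · exact hadjQ
  have hsr : ∀ (t : ℕ) (ht : t < L.n), L.f ⟨t, ht⟩ ≠ s := by
    intro t ht heq'
    exact hs ⟨⟨t, ht⟩, heq'⟩
  refine ⟨⟨N, by omega, fC, ?_, ?_⟩, hNdef, hfC0 0 ZMod.val_zero, ?_⟩
  · -- injectivity
    intro z w hzw
    by_cases hz : z.val = 0 <;> by_cases hw : w.val = 0
    · exact (heq z w).mpr (by rw [hz, hw])
    · rw [hfC0 z hz, hfCne w hw] at hzw; exact absurd hzw.symm (hsr _ _)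
    · rw [hfCne z hz, hfC0 w hw] at hzw; exact absurd hzw (hsr _ _)
    · rw [hfCne z hz, hfCne w hw] at hzw
      have hval : P + z.val - 1 = P + w.val - 1 := by
        simpa [Fin.mk.injEq] using L.inj hzw
      exact (heq z w).mpr (by omega)
  · -- adjacency
    intro z w
    have hz' := hvlt z; have hw' := hvlt w
    have hR : (z = w + 1 ∨ w = z + 1) ↔
        ((z.val = if w.val + 1 = N then 0 else w.val + 1) ∨
         (w.val = if z.val + 1 = N then 0 else z.val + 1)) := by
      rw [heq z (w+1), heq w (z+1), hadd, hadd]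
    rw [hR]
    by_cases hz : z.val = 0 <;> by_cases hw : w.val = 0
    · rw [hfC0 z hz, hfC0 w hw, hz, hw, if_neg (show ¬ (0 + 1 = N) by omega)]
      exact iff_of_false (G.irrefl) (by omega)
    · rw [hfC0 z hz, hfCne w hw,
        hadjchar _ _ (by omega) (by have := hvlt w; omega), hz,
        if_neg (show ¬ (0 + 1 = N) by omega)]
      by_cases hB : w.val + 1 = N
      · rw [if_pos hB]; omega
      · rw [if_neg hB]; omega
    · rw [hfCne z hz, hfC0 w hw, SimpleGraph.adj_comm,
        hadjchar _ _ (by omega) (by have := hvlt z; omega), hw,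
        if_neg (show ¬ (0 + 1 = N) by omega)]
      by_cases hB : z.val + 1 = N
      · rw [if_pos hB]; omega
      · rw [if_neg hB]; omega
    · rw [hfCne z hz, hfCne w hw, L.adj]
      dsimp only
      by_cases hB1 : w.val + 1 = N <;> by_cases hB2 : z.val + 1 = N
      · rw [if_pos hB1, if_pos hB2]; omega
      · rw [if_pos hB1, if_neg hB2]; omega
      · rw [if_neg hB1, if_pos hB2]; omega
      · rw [if_neg hB1, if_neg hB2]; omega
  · -- range
    ext u
    simp only [Set.mem_range, Set.mem_union, Set.mem_singleton_iff, Set.mem_setOf_eq]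
    constructor
    · rintro ⟨z, rfl⟩
      by_cases hz : z.val = 0
      · left; exact hfC0 z hz
      · right
        refine ⟨P + z.val - 1, by omega, by have := hvlt z; omega, hpf z, hfCne z hz⟩
    · rintro (rfl | ⟨t, ht1, ht2, htn, rfl⟩)
      · exact ⟨0, hfC0 0 ZMod.val_zero⟩
      · refine ⟨((t - P + 1 : ℕ) : ZMod N), ?_⟩
        have hval : ((t - P + 1 : ℕ) : ZMod N).val = t - P + 1 :=
          ZMod.val_cast_of_lt (by omega)
        rw [hfCne _ (by rw [hval]; omega)]
        apply congrArg
        simp only [Fin.mk.injEq]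
        rw [hval]
        omega

lemma gapchain_contra (G : SimpleGraph V) (L : IndPath G) {c h : ℕ} (hc : 0 < c) (hh : 0 < h)
    (s : V) (hs : s ∉ L.verts) {hi : ℕ}
    (hchain : GapChain G L s (2 * c - 1) hi h) (hp : Pinched c h G) : False := by
  classical
  obtain ⟨p, q, hqn, hbig, hnp, hnq, hintr, hch, _⟩ := hchain
  have hidx : ∀ j : Fin c, 2 * (j : ℕ) < 2 * c - 1 := fun j => by have := j.isLt; omega
  let I : Fin c → Fin (2 * c - 1) := fun j => ⟨2 * (j : ℕ), hidx j⟩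
  have hsep : ∀ j j' : Fin c, j < j' → q (I j') + 2 * h ≤ p (I j) := by
    intro j j' hjj'
    have hlt : (j : ℕ) < (j' : ℕ) := hjj'
    have hj'le := j'.isLt
    have hw : 2 * (j : ℕ) + 1 < 2 * c - 1 := by omega
    have h1 : q ⟨2 * (j : ℕ) + 1, hw⟩ ≤ p (I j) :=
      hch (I j) ⟨2 * (j : ℕ) + 1, hw⟩ (by rw [Fin.mk_lt_mk]; omega)
    have h2 : q (I j') ≤ p ⟨2 * (j : ℕ) + 1, hw⟩ :=
      hch ⟨2 * (j : ℕ) + 1, hw⟩ (I j') (by rw [Fin.mk_lt_mk]; omega)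
    have h3 := hbig ⟨2 * (j : ℕ) + 1, hw⟩
    omega
  choose C hCn hC0 hCr using fun j : Fin c =>
    cycle_of_gap G L s hs hh (hbig (I j)) (hnp (I j)) (hnq (I j))
      (fun t h1 h2 => hintr (I j) t h1 h2)
  apply hp
  have key : ∀ j j' : Fin c, j < j' →
      (Set.range (C j).f ∩ Set.range (C j').f = {s}) ∧
      (∀ u ∈ Set.range (C j).f, ∀ v ∈ Set.range (C j').f, u ≠ s → v ≠ s → ¬ G.Adj u v) := by
    intro j j' hjj'
    have hsp := hsep j j' hjj'
    constructor
    · rw [hCr j, hCr j']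
      ext u
      simp only [Set.mem_inter_iff, Set.mem_union, Set.mem_singleton_iff, Set.mem_setOf_eq]
      constructor
      · rintro ⟨hu1, hu2⟩
        rcases hu1 with rfl | ⟨t, ht1, ht2, htn, rfl⟩
        · rfl
        · rcases hu2 with heq2 | ⟨t', ht1', ht2', htn', heq2⟩
          · exact heq2
          · exfalso
            have htt : t = t' := by simpa [Fin.mk.injEq] using L.inj heq2
            omega
      · rintro rfl
        exact ⟨Or.inl rfl, Or.inl rfl⟩
    · intro u hu v hv hu' hv'
      rw [hCr j] at hu
      rw [hCr j'] at hv
      simp only [Set.mem_union, Set.mem_singleton_iff, Set.mem_setOf_eq] at hu hv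
      rcases hu with rfl | ⟨t, ht1, ht2, htn, rfl⟩
      · exact absurd rfl hu'
      rcases hv with rfl | ⟨t', ht1', ht2', htn', rfl⟩
      · exact absurd rfl hv'
      intro hadj
      rw [L.adj] at hadj
      dsimp only at hadj
      omega
  refine ⟨s, C, ?_, hC0, ?_⟩
  · intro j
    rw [hCn j]
    have := hbig (I j)
    omega
  · intro i j hij
    rcases lt_or_gt_of_ne hij with hlt | hgt
    · exact key i j hlt
    · refine ⟨by rw [Set.inter_comm]; exact (key j i hgt).1, ?_⟩
      intro u hu v hv hu' hv'
      rw [G.adj_comm]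
      exact (key j i hgt).2 v hv u hu hv' hu'

/-- Lemma 4.3: in a `(c,h)`-pinched graph, a `d`-meager
`(a^(2cdh−1)·d·(h + 2cdh − 1), 1)`-constellation `(S₀, L₀)` yields an
`a`-alignment `(S, L, π)` with `S ⊆ S₀` and `L` a subpath of `L₀`. -/
theorem stmt8 (a c d h : ℕ) (ha : 0 < a) (hc : 0 < c) (hd : 0 < d) (hh : 0 < h)
    (V : Type u) (G : SimpleGraph V) (hG : Pinched c h G)
    (c₀ : Constellation G
      (a ^ (2 * c * d * h - 1) * d * (h + 2 * c * d * h - 1)) 1)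
    (hm : c₀.Meager d) :
    ∃ A : PathAlignment G a, A.S ⊆ c₀.S ∧ (A.P 0).verts ⊆ (c₀.P 0).verts := by
  classical
  set L : IndPath G := c₀.P 0 with hLdef
  -- degree bound from meagerness
  have hdeg : ∀ t : ℕ, ((c₀.S).filter (fun s => Nbr G L s t)).card ≤ d := by
    intro t
    by_cases htn : t < L.n
    · have hmt := hm 0 ⟨t, htn⟩
      have hset : (((c₀.S).filter (fun s => Nbr G L s t) : Finset V) : Set V) =
          (↑c₀.S : Set V) ∩ {x | G.Adj x ((c₀.P 0).f ⟨t, htn⟩)} := by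
        ext y
        simp only [Finset.coe_filter, Set.mem_setOf_eq, Set.mem_inter_iff, Finset.mem_coe]
        constructor
        · rintro ⟨hy, ht', hadj⟩; exact ⟨hy, hadj⟩
        · rintro ⟨hy, hadj⟩; exact ⟨hy, htn, hadj⟩
      have hnc := Set.ncard_coe_finset ((c₀.S).filter (fun s => Nbr G L s t))
      rw [hset] at hnc
      omega
    · have hempty : (c₀.S).filter (fun s => Nbr G L s t) = ∅ := by
        rw [Finset.filter_eq_empty_iff]
        rintro x hx ⟨ht, _⟩
        exact htn ht
      rw [hempty]
      simp
  -- near-window bound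
  have hnear : ∀ x : ℕ, ((Finset.Ico (x + 1 - h) (x + h)).biUnion
      (fun t => (c₀.S).filter (fun s => Nbr G L s t))).card ≤ (2 * h - 1) * d := by
    intro x
    have h1 := Finset.card_biUnion_le (s := Finset.Ico (x + 1 - h) (x + h))
      (t := fun t => (c₀.S).filter (fun s => Nbr G L s t))
    have h2 : ∑ t ∈ Finset.Ico (x + 1 - h) (x + h),
        ((c₀.S).filter (fun s => Nbr G L s t)).card ≤
        ∑ t ∈ Finset.Ico (x + 1 - h) (x + h), d :=
      Finset.sum_le_sum (fun t _ => hdeg t)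
    rw [Finset.sum_const, smul_eq_mul, Nat.card_Ico] at h2
    have h3 : (x + h - (x + 1 - h)) * d ≤ (2 * h - 1) * d :=
      Nat.mul_le_mul_right d (by omega)
    omega
  -- arithmetic facts
  have hchle : c + h ≤ c * h + 1 := by
    obtain ⟨c', rfl⟩ : ∃ c', c = c' + 1 := ⟨c - 1, by omega⟩
    have h2 : c' ≤ c' * h := Nat.le_mul_of_pos_right c' hh
    have h3 : (c' + 1) * h = c' * h + h := by ring
    omega
  have hWc : 2 * c ≤ 2 * c * d * h := by
    have h1 : 2 * c * d * h = 2 * c * (d * h) := by ring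
    have h2 : 0 < d * h := Nat.mul_pos hd hh
    have h3 : 2 * c ≤ 2 * c * (d * h) := Nat.le_mul_of_pos_right (2 * c) h2
    omega
  have hWch : 2 * h + 2 * c ≤ 2 * c * d * h + 2 := by
    have h2 : c * h ≤ c * (d * h) := Nat.mul_le_mul_left c (Nat.le_mul_of_pos_left h hd)
    have h3 : 2 * c * d * h = 2 * (c * (d * h)) := by ring
    omega
  obtain ⟨W, hW⟩ : ∃ W, 2 * c * d * h = W := ⟨_, rfl⟩
  rw [hW] at hWc hWch
  obtain ⟨M, hM⟩ : ∃ M, W - 1 = M := ⟨_, rfl⟩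
  have hM1 : 2 * c - 1 ≤ M := by omega
  have hM2 : 2 * (h - 1) + (2 * c - 1) ≤ M := by omega
  have hSbound : a ^ M * d * (h + M) ≤ c₀.S.card := by
    rw [c₀.card_S]
    have e1 : a ^ (2 * c * d * h - 1) = a ^ M := by rw [hW, hM]
    have e2 : h + 2 * c * d * h - 1 = h + M := by rw [hW]; omega
    rw [e1, e2]
  -- the main recursion
  have key : ∀ j : ℕ, j ≤ 2 * c - 1 → ∀ (hi : ℕ) (T : Finset V),
      hi ≤ L.n → T ⊆ c₀.S →
      (∀ s ∈ T, ∃ t, t < hi ∧ Nbr G L s t) →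
      (∀ s ∈ T, GapChain G L s (2 * c - 1 - j) hi h) →
      a ^ (M - (2 * c - 1 - j)) * d * (h + (M - (2 * c - 1 - j))) ≤ T.card →
      ∃ A : PathAlignment G a, A.S ⊆ c₀.S ∧ (A.P 0).verts ⊆ L.verts := by
    intro j
    induction j with
    | zero =>
      intro _ hi T hhi hTS hTnbr hTchain hTcard
      exfalso
      have hpow : 0 < a ^ (M - (2 * c - 1 - 0)) := pow_pos ha _
      have hpos : 0 < T.card := by
        have : 0 < a ^ (M - (2 * c - 1 - 0)) * d * (h + (M - (2 * c - 1 - 0))) :=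
          Nat.mul_pos (Nat.mul_pos hpow hd) (by omega)
        omega
      obtain ⟨s, hsT⟩ := Finset.card_pos.mp hpos
      have hchain := hTchain s hsT
      rw [Nat.sub_zero] at hchain
      exact gapchain_contra G L hc hh s (c₀.sep s (hTS hsT) 0) hchain hG
    | succ j ih =>
      intro hj hi T hhi hTS hTnbr hTchain hTcard
      obtain ⟨k, hk⟩ : ∃ k, 2 * c - 1 - (j + 1) = k := ⟨_, rfl⟩
      rw [hk] at hTchain hTcard
      obtain ⟨E, hE⟩ : ∃ E, M - (k + 1) = E := ⟨_, rfl⟩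
      have hEe : M - k = E + 1 := by omega
      rw [hEe] at hTcard
      have hpow : 0 < a ^ (E + 1) := pow_pos ha _
      have hTpos : 0 < T.card := by
        have : 0 < a ^ (E + 1) * d * (h + (E + 1)) :=
          Nat.mul_pos (Nat.mul_pos hpow hd) (by omega)
        omega
      set A : V → Finset ℕ := fun s => (Finset.range hi).filter (fun t => Nbr G L s t)
        with hAdef
      have hAne : ∀ s ∈ T, (A s).Nonempty := by
        intro s hs
        obtain ⟨t, ht1, ht2⟩ := hTnbr s hs
        exact ⟨t, Finset.mem_filter.mpr ⟨Finset.mem_range.mpr ht1, ht2⟩⟩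
      rcases pierce a T A hAne with ⟨g, hgT, hgord⟩ | ⟨Pp, hPpc, hPpcov⟩
      · -- found an alignment
        obtain ⟨t0, ht0⟩ := hAne _ (hgT ⟨0, ha⟩)
        have hhi0 : 0 < hi := by
          have := Finset.mem_range.mp (Finset.mem_filter.mp ht0).1
          omega
        have hginj : Function.Injective g := by
          intro i i' hii'
          by_contra hne
          have hne' : i ≠ i' := hne
          rcases lt_or_gt_of_ne hne' with hlt | hlt
          · obtain ⟨u, hu⟩ := hAne _ (hgT i)
            have h2 : u ∈ A (g i') := by rw [← hii']; exact hu
            exact absurd (hgord i i' hlt u hu u h2) (lt_irrefl u)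
          · obtain ⟨u, hu⟩ := hAne _ (hgT i')
            have h2 : u ∈ A (g i) := by rw [hii']; exact hu
            exact absurd (hgord i' i hlt u hu u h2) (lt_irrefl u)
        have hmemS : ∀ y ∈ Finset.image g Finset.univ, y ∈ c₀.S := by
          intro y hy
          obtain ⟨i, _, rfl⟩ := Finset.mem_image.mp hy
          exact hTS (hgT i)
        refine ⟨{ S := Finset.image g Finset.univ
                  card_S := by
                    rw [Finset.card_image_of_injective _ hginj, Finset.card_univ,
                      Fintype.card_fin]
                  stable := fun x hx y hy => c₀.stable x (hmemS x hx) y (hmemS y hy)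
                  P := fun _ => L.prefixPath hi hhi0 hhi
                  disj := fun i j hij => absurd (Subsingleton.elim i j) hij
                  sep := ?_
                  nbr := ?_
                  π := g
                  π_inj := hginj
                  π_mem := fun i => Finset.mem_image_of_mem g (Finset.mem_univ i)
                  order := ?_ }, ?_, ?_⟩
        · intro x hx i hver
          obtain ⟨w, hw⟩ := hver
          exact c₀.sep x (hmemS x hx) 0 ⟨⟨(w : ℕ), lt_of_lt_of_le w.isLt hhi⟩, hw⟩
        · intro x hx i
          obtain ⟨i', _, rfl⟩ := Finset.mem_image.mp hx
          obtain ⟨t, htA⟩ := hAne _ (hgT i')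
          have ht1 : t < hi := Finset.mem_range.mp (Finset.mem_filter.mp htA).1
          obtain ⟨htn, hadj⟩ := (Finset.mem_filter.mp htA).2
          exact ⟨(L.prefixPath hi hhi0 hhi).f ⟨t, ht1⟩, ⟨⟨t, ht1⟩, rfl⟩, hadj⟩
        · refine ⟨false, ?_⟩
          intro i j' hij pp qq hpp hqq
          rw [if_neg Bool.false_ne_true]
          have hppA : (pp : ℕ) ∈ A (g i) :=
            Finset.mem_filter.mpr ⟨Finset.mem_range.mpr pp.isLt,
              ⟨lt_of_lt_of_le pp.isLt hhi, hpp⟩⟩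
          have hqqA : (qq : ℕ) ∈ A (g j') :=
            Finset.mem_filter.mpr ⟨Finset.mem_range.mpr qq.isLt,
              ⟨lt_of_lt_of_le qq.isLt hhi, hqq⟩⟩
          exact hgord i j' hij _ hppA _ hqqA
        · intro y hy
          exact hmemS y hy
        · intro u hu
          obtain ⟨w, hw⟩ := hu
          exact ⟨⟨(w : ℕ), lt_of_lt_of_le w.isLt hhi⟩, hw⟩
      · -- pierced: pigeonhole and recurse
        have hPppos : 0 < Pp.card := by
          obtain ⟨s, hsT⟩ := Finset.card_pos.mp hTpos
          obtain ⟨x, hxP, _⟩ := hPpcov s hsT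
          exact Finset.card_pos.mpr ⟨x, hxP⟩
        have ha2 : 2 ≤ a := by omega
        set piercedAt : ℕ → Finset V := fun x => T.filter (fun s =>
          (∃ u ∈ A s, u ≤ x) ∧ ∃ v ∈ A s, x ≤ v) with hpadef
        have hcovsub : T ⊆ Pp.biUnion piercedAt := by
          intro s hsT
          obtain ⟨x, hxP, hcond⟩ := hPpcov s hsT
          exact Finset.mem_biUnion.mpr ⟨x, hxP, Finset.mem_filter.mpr ⟨hsT, hcond⟩⟩
        have hsum : T.card ≤ ∑ x ∈ Pp, (piercedAt x).card :=
          le_trans (Finset.card_le_card hcovsub) Finset.card_biUnion_le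
        have hbest : ∃ x ∈ Pp, T.card ≤ Pp.card * (piercedAt x).card := by
          by_contra hcon
          push_neg at hcon
          have h2 : Pp.card * T.card ≤ Pp.card * ∑ x ∈ Pp, (piercedAt x).card :=
            Nat.mul_le_mul_left _ hsum
          rw [Finset.mul_sum] at h2
          have h3 : ∑ x ∈ Pp, Pp.card * (piercedAt x).card ≤
              ∑ _x ∈ Pp, (T.card - 1) :=
            Finset.sum_le_sum (fun x hx => by have := hcon x hx; omega)
          rw [Finset.sum_const, smul_eq_mul] at h3
          have h4 : Pp.card * (T.card - 1) < Pp.card * T.card :=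
            mul_lt_mul_of_pos_left (by omega : T.card - 1 < T.card) hPppos
          omega
        obtain ⟨x, hxP, hxcard⟩ := hbest
        have hxc2 : T.card ≤ (a - 1) * (piercedAt x).card :=
          le_trans hxcard (Nat.mul_le_mul_right _ (by omega))
        have hnum := num_ineq a d h E ha2 hd hh (by omega)
        have hTx : a ^ E * d * (h + E) + (2 * h - 1) * d ≤ (piercedAt x).card := by
          have hchain2 : (a - 1) * (a ^ E * d * (h + E) + (2 * h - 1) * d) ≤
              (a - 1) * (piercedAt x).card := by
            calc (a - 1) * (a ^ E * d * (h + E) + (2 * h - 1) * d)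
                ≤ a ^ (E + 1) * d * (h + E + 1) := hnum
              _ ≤ T.card := by
                  have : h + (E + 1) = h + E + 1 := by omega
                  rw [this] at hTcard
                  exact hTcard
              _ ≤ (a - 1) * (piercedAt x).card := hxc2
          exact Nat.le_of_mul_le_mul_left hchain2 (by omega)
        -- split off near vertices
        set J : Finset V := (piercedAt x).filter (fun s =>
          ¬ ∃ t, t < hi ∧ (x < t + h ∧ t < x + h) ∧ Nbr G L s t) with hJdef
        have hJcard : a ^ E * d * (h + E) ≤ J.card := by
          have hsplit : piercedAt x ⊆ J ∪ (piercedAt x).filter (fun s =>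
              ∃ t, t < hi ∧ (x < t + h ∧ t < x + h) ∧ Nbr G L s t) := by
            intro s hs
            by_cases hp : ∃ t, t < hi ∧ (x < t + h ∧ t < x + h) ∧ Nbr G L s t
            · exact Finset.mem_union_right _ (Finset.mem_filter.mpr ⟨hs, hp⟩)
            · exact Finset.mem_union_left _ (Finset.mem_filter.mpr ⟨hs, hp⟩)
          have hnsub : (piercedAt x).filter (fun s =>
              ∃ t, t < hi ∧ (x < t + h ∧ t < x + h) ∧ Nbr G L s t) ⊆
              (Finset.Ico (x + 1 - h) (x + h)).biUnion
                (fun t => (c₀.S).filter (fun s => Nbr G L s t)) := by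
            intro s hs
            obtain ⟨hsx, t, ht1, ht2, ht3⟩ := Finset.mem_filter.mp hs
            exact Finset.mem_biUnion.mpr ⟨t, Finset.mem_Ico.mpr (by omega),
              Finset.mem_filter.mpr ⟨hTS (Finset.mem_filter.mp hsx).1, ht3⟩⟩
          have h5 := Finset.card_le_card hsplit
          have h6 := Finset.card_union_le J ((piercedAt x).filter (fun s =>
              ∃ t, t < hi ∧ (x < t + h ∧ t < x + h) ∧ Nbr G L s t))
          have h7 := Finset.card_le_card hnsub
          have h8 := hnear x
          omega
        have hJsubT : J ⊆ T := fun s hs =>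
          Finset.mem_filter.mp (Finset.mem_filter.mp hs).1 |>.1
        have hJpos : 0 < J.card := by
          have : 0 < a ^ E * d * (h + E) :=
            Nat.mul_pos (Nat.mul_pos (pow_pos ha _) hd) (by omega)
          omega
        have hxhi : x < hi := by
          obtain ⟨s₁, hs₁J⟩ := Finset.card_pos.mp hJpos
          have hs₁px := (Finset.mem_filter.mp (Finset.mem_filter.mp hs₁J).1).2
          obtain ⟨_, v, hvA, hvx⟩ := hs₁px
          have := Finset.mem_range.mp (Finset.mem_filter.mp hvA).1
          omega
        -- gap construction for members of J
        have gapOf : ∀ s ∈ J, ∃ pg qg : ℕ,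
            pg + h ≤ x ∧ x + h ≤ qg ∧ qg < hi ∧ Nbr G L s pg ∧ Nbr G L s qg ∧
            (∀ t, pg < t → t < qg → ¬ Nbr G L s t) := by
          intro s hsJ
          have hsmem := Finset.mem_filter.mp hsJ
          have hnotnear := hsmem.2
          have hspx := (Finset.mem_filter.mp hsmem.1).2
          obtain ⟨⟨u, huA, hux⟩, v, hvA, hvx⟩ := hspx
          have huR : u < hi := Finset.mem_range.mp (Finset.mem_filter.mp huA).1
          have huN : Nbr G L s u := (Finset.mem_filter.mp huA).2
          have hvR : v < hi := Finset.mem_range.mp (Finset.mem_filter.mp hvA).1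
          have hvN : Nbr G L s v := (Finset.mem_filter.mp hvA).2
          have hvgt : x < v := by
            rcases Nat.lt_or_ge x v with hlt | hge
            · exact hlt
            · exfalso
              have hveq : v = x := by omega
              exact hnotnear ⟨v, hvR, ⟨by omega, by omega⟩, hvN⟩
          set Pb : Finset ℕ := (Finset.range hi).filter
            (fun t => Nbr G L s t ∧ t ≤ x) with hPbdef
          have hPbne : Pb.Nonempty :=
            ⟨u, Finset.mem_filter.mpr ⟨Finset.mem_range.mpr huR, huN, hux⟩⟩
          set Qb : Finset ℕ := (Finset.range hi).filter
            (fun t => Nbr G L s t ∧ x < t) with hQbdef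
          have hQbne : Qb.Nonempty :=
            ⟨v, Finset.mem_filter.mpr ⟨Finset.mem_range.mpr hvR, hvN, hvgt⟩⟩
          set pg := Pb.max' hPbne with hpgdef
          set qg := Qb.min' hQbne with hqgdef
          have hpgmem := Finset.mem_filter.mp (Pb.max'_mem hPbne)
          have hqgmem := Finset.mem_filter.mp (Qb.min'_mem hQbne)
          have hpgR : pg < hi := Finset.mem_range.mp hpgmem.1
          have hqgR : qg < hi := Finset.mem_range.mp hqgmem.1
          have hpgx : pg + h ≤ x := by
            rcases Nat.lt_or_ge (pg + h) (x + 1) with hlt | hge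
            · omega
            · exfalso
              exact hnotnear ⟨pg, hpgR, ⟨by omega, by
                have := hpgmem.2.2; omega⟩, hpgmem.2.1⟩
          have hqgx : x + h ≤ qg := by
            rcases Nat.lt_or_ge qg (x + h) with hlt | hge
            · exfalso
              exact hnotnear ⟨qg, hqgR, ⟨by have := hqgmem.2.2; omega, hlt⟩, hqgmem.2.1⟩
            · omega
          refine ⟨pg, qg, hpgx, hqgx, hqgR, hpgmem.2.1, hqgmem.2.1, ?_⟩
          intro t hpt htq hNt
          rcases Nat.lt_or_ge x t with hlt | hge
          · have : qg ≤ t := Qb.min'_le t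
              (Finset.mem_filter.mpr ⟨Finset.mem_range.mpr (by omega), hNt, hlt⟩)
            omega
          · have : t ≤ pg := Pb.le_max' t
              (Finset.mem_filter.mpr ⟨Finset.mem_range.mpr (by omega), hNt, hge⟩)
            omega
        -- recurse
        have hfin := ih (by omega) (x + 1 - h) J (by omega) (fun s hs => hTS (hJsubT hs))
          ?_ ?_ ?_
        · exact hfin
        · intro s hs
          obtain ⟨pg, qg, h1, h2, h3, h4, h5, h6⟩ := gapOf s hs
          exact ⟨pg, by omega, h4⟩
        · intro s hs
          obtain ⟨pg, qg, hg1, hg2, hg3, hg4, hg5, hg6⟩ := gapOf s hs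
          obtain ⟨p, q, hqn, hbig, hnp, hnq, hintr, hch, hbd⟩ := hTchain s (hJsubT hs)
          have hk1 : 2 * c - 1 - j = k + 1 := by omega
          rw [hk1]
          have hqgn : qg < L.n := hg5.choose
          refine ⟨fun i => if hik : (i : ℕ) < k then p ⟨(i : ℕ), hik⟩ else pg,
                  fun i => if hik : (i : ℕ) < k then q ⟨(i : ℕ), hik⟩ else qg,
                  ?_, ?_, ?_, ?_, ?_, ?_, ?_⟩
          · intro i
            dsimp only
            by_cases hik : (i : ℕ) < k
            · rw [dif_pos hik]; exact hqn _
            · rw [dif_neg hik]; exact hqgn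
          · intro i
            dsimp only
            by_cases hik : (i : ℕ) < k
            · rw [dif_pos hik, dif_pos hik]; exact hbig _
            · rw [dif_neg hik, dif_neg hik]; omega
          · intro i
            dsimp only
            by_cases hik : (i : ℕ) < k
            · rw [dif_pos hik]; exact hnp _
            · rw [dif_neg hik]; exact hg4
          · intro i
            dsimp only
            by_cases hik : (i : ℕ) < k
            · rw [dif_pos hik]; exact hnq _
            · rw [dif_neg hik]; exact hg5
          · intro i t
            dsimp only
            by_cases hik : (i : ℕ) < k
            · rw [dif_pos hik, dif_pos hik]; exact hintr _ t
            · rw [dif_neg hik, dif_neg hik]; exact hg6 t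
          · intro i i' hii'
            dsimp only
            have hii'' : (i : ℕ) < (i' : ℕ) := hii'
            by_cases hik' : (i' : ℕ) < k
            · have hik : (i : ℕ) < k := by omega
              rw [dif_pos hik, dif_pos hik']
              exact hch _ _ (by rw [Fin.mk_lt_mk]; exact hii'')
            · have hik : (i : ℕ) < k := by have := i'.isLt; omega
              rw [dif_pos hik, dif_neg hik']
              by_contra hgt
              push_neg at hgt
              have hqi : hi ≤ q ⟨(i : ℕ), hik⟩ := hbd _
              exact hintr ⟨(i : ℕ), hik⟩ qg (by omega) (by omega) hg5
          · intro i
            dsimp only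
            by_cases hik : (i : ℕ) < k
            · rw [dif_pos hik]
              have := hbd ⟨(i : ℕ), hik⟩
              omega
            · rw [dif_neg hik]
              omega
        · have hk1 : 2 * c - 1 - j = k + 1 := by omega
          rw [hk1, hE]
          exact hJcard
  -- initial invocation
  have hzz : 2 * c - 1 - (2 * c - 1) = 0 := Nat.sub_self _
  have hinit : ∀ s ∈ c₀.S, ∃ t, t < L.n ∧ Nbr G L s t := by
    intro s hsS
    obtain ⟨v, hv, hadj⟩ := c₀.nbr s hsS 0
    obtain ⟨w, rfl⟩ := hv
    exact ⟨(w : ℕ), w.isLt, ⟨w.isLt, hadj⟩⟩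
  have hfinal := key (2 * c - 1) le_rfl L.n c₀.S le_rfl (fun _ hx => hx) hinit ?_ ?_
  · exact hfinal
  · intro s hs
    rw [hzz]
    exact ⟨Fin.elim0, Fin.elim0, fun i => i.elim0, fun i => i.elim0, fun i => i.elim0,
      fun i => i.elim0, fun i => i.elim0, fun i => i.elim0, fun i => i.elim0⟩
  · rw [hzz, Nat.sub_zero]
    exact hSbound
end

section
/- Let l, s, t be positive integers, let G be a graph, and let 𝔠 = (S, 𝓛) be an (s, l + (st)^t)-constellation in G. Then either G contains K_t or K_{t,t} as an induced subgraph, or there exists 𝓛' ⊆ 𝓛 with |𝓛'| = l such that (S, 𝓛') is a t-meager (s, l)-constellation in G (every vertex lying on a path of 𝓛' has at most t neighbors in S). -/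
open SimpleGraph

universe u

variable {V : Type u}

/-!
If at least `l` of the paths are `t`-meager, keep `l` of them. Otherwise more than `(st)^t`
paths contain a vertex with more than `t` neighbours in `S`. Pick `t` of these neighbours for each
such path; since there are at most `s^t` subsets of size `t` of `S`, some `T ⊆ S` is picked for
more than `t^t` paths. Their chosen vertices are distinct (the paths are disjoint) and complete to
`T`, and `t^t ≥ C(2t-2, t-1)`, so by Ramsey's theorem they contain a clique of size `t` or a stable
set of size `t`, which together with the stable set `T` induces `K_{t,t}`.
-/

open Finset

variable {α : Type*}

theorem Nat.centralBinom_le_succ_pow_succ (n : ℕ) : n.centralBinom ≤ (n + 1) ^ (n + 1) := by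
  refine (Nat.centralBinom_le_four_pow n).trans ?_
  rcases le_or_gt n 2 with h | h
  · interval_cases n <;> norm_num
  · calc 4 ^ n ≤ (n + 1) ^ n := Nat.pow_le_pow_left (by omega) n
      _ ≤ (n + 1) ^ (n + 1) := Nat.pow_le_pow_right (by omega) n.le_succ

theorem Finset.exists_subset_card_eq_of_le_ncard {S : Finset α} {p : α → Prop} {t : ℕ}
    (h : t ≤ ((S : Set α) ∩ {x | p x}).ncard) : ∃ T ⊆ S, #T = t ∧ ∀ x ∈ T, p x := by
  classical
  rw [show (S : Set α) ∩ {x | p x} = ↑(S.filter p) by ext; simp, Set.ncard_coe_finset] at h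
  obtain ⟨T, hT, rfl⟩ := exists_subset_card_eq h
  exact ⟨T, hT.trans (filter_subset _ _), rfl, fun x hx => (mem_filter.mp (hT hx)).2⟩

theorem Finset.exists_common_subset_of_choose_mul_lt {ι : Type*} {J : Finset ι} {S : Finset α}
    {R : ι → α → Prop} {t N : ℕ} (hJ : ∀ i ∈ J, ∃ T ⊆ S, #T = t ∧ ∀ x ∈ T, R i x)
    (hN : (#S).choose t * N < #J) :
    ∃ T ⊆ S, #T = t ∧ ∃ J' ⊆ J, N < #J' ∧ ∀ i ∈ J', ∀ x ∈ T, R i x := by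
  classical
  choose! T hTS hTcard hTR using hJ
  obtain ⟨T₀, hT₀, hfiber⟩ := exists_lt_card_fiber_of_mul_lt_card_of_maps_to
    (fun i hi => mem_powersetCard.mpr ⟨hTS i hi, hTcard i hi⟩) (by rwa [card_powersetCard])
  obtain ⟨hT₀S, hT₀card⟩ := mem_powersetCard.mp hT₀
  refine ⟨T₀, hT₀S, hT₀card, _, filter_subset _ J, hfiber, fun i hi => ?_⟩
  obtain ⟨hiJ, rfl⟩ := mem_filter.mp hi
  exact hTR i hiJ

namespace SimpleGraph

variable (G : SimpleGraph α)

/-- Ramsey's theorem with the Erdős–Szekeres bound. -/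
theorem exists_isNClique_or_isNIndepSet_of_choose_le (a b : ℕ) (F : Finset α)
    (hF : (a + b).choose a ≤ #F) :
    (∃ K ⊆ F, G.IsNClique (a + 1) K) ∨ ∃ I ⊆ F, G.IsNIndepSet (b + 1) I := by
  classical
  induction a generalizing b F with
  | zero =>
    obtain ⟨x, hx⟩ : F.Nonempty := card_pos.mp (by simpa using hF)
    exact Or.inl ⟨{x}, singleton_subset_iff.mpr hx, isNClique_one.mpr ⟨x, rfl⟩⟩
  | succ a iha =>
    induction b generalizing F with
    | zero =>
      obtain ⟨x, hx⟩ : F.Nonempty := card_pos.mp (by simpa using hF)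
      exact Or.inr ⟨{x}, singleton_subset_iff.mpr hx,
        (isNClique_compl G).mp (isNClique_one.mpr ⟨x, rfl⟩)⟩
    | succ b ihb =>
      obtain ⟨x, hx⟩ : F.Nonempty := card_pos.mp ((Nat.choose_pos (by omega)).trans_le hF)
      set N := (F.erase x).filter (G.Adj x)
      set M := (F.erase x).filter (fun y => ¬ G.Adj x y)
      have hNM : #N + #M + 1 = #F := by
        rw [card_filter_add_card_filter_not, card_erase_add_one hx]
      have pascal : (a + 1 + (b + 1)).choose (a + 1) =
          (a + (b + 1)).choose a + (a + 1 + b).choose (a + 1) := by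
        rw [show a + 1 + (b + 1) = a + (b + 1) + 1 by omega, Nat.choose_succ_succ',
          show a + (b + 1) = a + 1 + b by omega]
      have hNF : N ⊆ F := (filter_subset _ _).trans (erase_subset _ _)
      have hMF : M ⊆ F := (filter_subset _ _).trans (erase_subset _ _)
      rcases le_or_gt ((a + (b + 1)).choose a) #N with hN | hN
      · rcases iha (b + 1) N hN with ⟨K, hKN, hK⟩ | ⟨I, hIN, hI⟩
        · refine Or.inl ⟨insert x K, insert_subset hx (hKN.trans hNF), hK.insert ?_⟩
          exact fun y hy => (mem_filter.mp (hKN hy)).2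
        · exact Or.inr ⟨I, hIN.trans hNF, hI⟩
      · rcases ihb M (by omega) with ⟨K, hKM, hK⟩ | ⟨I, hIM, hI⟩
        · exact Or.inl ⟨K, hKM.trans hMF, hK⟩
        · refine Or.inr ⟨insert x I, insert_subset hx (hIM.trans hMF), ?_⟩
          refine (isNClique_compl G).mp (((isNClique_compl G).mpr hI).insert fun y hy => ?_)
          obtain ⟨hyx, hxy⟩ := mem_filter.mp (hIM hy)
          exact (compl_adj G x y).mpr ⟨(ne_of_mem_erase hyx).symm, hxy⟩

theorem exists_isClique_or_biclique_of_forall_adj {t : ℕ} (ht : 0 < t) {T W : Finset α}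
    (hT : ∀ x ∈ T, ∀ y ∈ T, ¬ G.Adj x y) (hTcard : #T = t) (hW : t ^ t ≤ #W)
    (hTW : ∀ x ∈ T, ∀ y ∈ W, G.Adj x y) :
    (∃ K : Finset α, G.IsClique (↑K : Set α) ∧ #K = t) ∨
    (∃ A B : Finset α, Disjoint A B ∧ #A = t ∧ #B = t ∧
      (∀ x ∈ A, ∀ y ∈ A, ¬ G.Adj x y) ∧ (∀ x ∈ B, ∀ y ∈ B, ¬ G.Adj x y) ∧
      (∀ x ∈ A, ∀ y ∈ B, G.Adj x y)) := by
  obtain ⟨n, rfl⟩ : ∃ n, t = n + 1 := ⟨t - 1, by omega⟩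
  have hW' : (n + n).choose n ≤ #W := by
    rw [← two_mul, ← Nat.centralBinom_eq_two_mul_choose]
    exact (Nat.centralBinom_le_succ_pow_succ n).trans hW
  rcases G.exists_isNClique_or_isNIndepSet_of_choose_le n n W hW' with ⟨K, -, hK⟩ | ⟨I, hIW, hI⟩
  · exact Or.inl ⟨K, hK.isClique, hK.card_eq⟩
  · refine Or.inr ⟨T, I, ?_, hTcard, hI.card_eq, hT, fun x hx y hy hxy => ?_,
      fun x hx y hy => hTW x hx y (hIW hy)⟩
    · exact Finset.disjoint_left.mpr fun x hxT hxI => G.irrefl (hTW x hxT x (hIW hxI))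
    · exact hI.isIndepSet hx hy (G.ne_of_adj hxy) hxy

end SimpleGraph

namespace Constellation

variable {G : SimpleGraph V} {s l m : ℕ}

def restrict (c : Constellation G s l) (σ : Fin m ↪ Fin l) : Constellation G s m where
  S := c.S
  card_S := c.card_S
  stable := c.stable
  P := c.P ∘ σ
  disj _ _ hij := c.disj _ _ (σ.injective.ne hij)
  sep x hx i := c.sep x hx (σ i)
  nbr x hx i := c.nbr x hx (σ i)

theorem injOn_of_mem_verts (c : Constellation G s l) {J : Set (Fin l)} {w : Fin l → V}
    (hw : ∀ i ∈ J, w i ∈ (c.P i).verts) : J.InjOn w := by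
  intro i hi j hj hij
  by_contra hne
  exact Set.disjoint_left.mp (c.disj i j hne) (hw i hi) (hij ▸ hw j hj)

theorem exists_subset_forall_adj_of_choose_mul_lt (c : Constellation G s l) {t N : ℕ}
    {J : Finset (Fin l)}
    (hJ : ∀ i ∈ J, ∃ p, t ≤ ((c.S : Set V) ∩ {x | G.Adj x ((c.P i).f p)}).ncard)
    (hN : s.choose t * N < #J) :
    ∃ T ⊆ c.S, #T = t ∧ ∃ W : Finset V, N < #W ∧ ∀ x ∈ T, ∀ y ∈ W, G.Adj x y := by
  classical
  have (i : Fin l) : Nonempty (Fin (c.P i).n) := ⟨⟨0, (c.P i).npos⟩⟩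
  choose! p hp using hJ
  obtain ⟨T, hTS, hTcard, J', -, hJ', hTJ'⟩ :=
    exists_common_subset_of_choose_mul_lt (R := fun i x => G.Adj x ((c.P i).f (p i)))
      (fun i hi => exists_subset_card_eq_of_le_ncard (hp i hi)) (by rwa [c.card_S])
  refine ⟨T, hTS, hTcard, J'.image fun i => (c.P i).f (p i), ?_, fun x hx y hy => ?_⟩
  · rwa [card_image_of_injOn (c.injOn_of_mem_verts fun i _ => ⟨p i, rfl⟩)]
  · obtain ⟨i, hi, rfl⟩ := mem_image.mp hy
    exact hTJ' i hi x hx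

end Constellation

theorem stmt9_general (l s t : ℕ) (ht : 0 < t)
    (V : Type u) (G : SimpleGraph V)
    (c₀ : Constellation G s (l + (s * t) ^ t)) :
    (∃ K : Finset V, G.IsClique (↑K : Set V) ∧ K.card = t) ∨
    (∃ A B : Finset V, Disjoint A B ∧ A.card = t ∧ B.card = t ∧
      (∀ x ∈ A, ∀ y ∈ A, ¬ G.Adj x y) ∧ (∀ x ∈ B, ∀ y ∈ B, ¬ G.Adj x y) ∧
      (∀ x ∈ A, ∀ y ∈ B, G.Adj x y)) ∨
    (∃ σ : Fin l ↪ Fin (l + (s * t) ^ t), ∃ c : Constellation G s l,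
      c.S = c₀.S ∧ (∀ i : Fin l, c.P i = c₀.P (σ i)) ∧ c.Meager t) := by
  classical
  set light : Finset (Fin (l + (s * t) ^ t)) := {i | ∀ p : Fin (c₀.P i).n,
    ((c₀.S : Set V) ∩ {x | G.Adj x ((c₀.P i).f p)}).ncard ≤ t}
  by_cases hlight : l ≤ #light
  · obtain ⟨g, hg, hgl⟩ := exists_subset_card_eq hlight
    let σ := (g.orderEmbOfFin hgl).toEmbedding
    exact Or.inr <| Or.inr ⟨σ, c₀.restrict σ, rfl, fun _ => rfl,
      fun i => (mem_filter.mp (hg (g.orderEmbOfFin_mem hgl i))).2⟩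
  · have hheavy : ∀ i ∈ lightᶜ, ∃ p : Fin (c₀.P i).n,
        t ≤ ((c₀.S : Set V) ∩ {x | G.Adj x ((c₀.P i).f p)}).ncard := by
      intro i hi
      obtain ⟨p, hp⟩ := by simpa [light] using hi
      exact ⟨p, hp.le⟩
    have hmany : s.choose t * t ^ t < #lightᶜ := by
      rw [card_compl, Fintype.card_fin]
      calc s.choose t * t ^ t ≤ s ^ t * t ^ t := Nat.mul_le_mul_right _ (Nat.choose_le_pow s t)
        _ = (s * t) ^ t := (mul_pow s t t).symm
        _ < l + (s * t) ^ t - #light := by omega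
    obtain ⟨T, hTS, hTcard, W, hW, hTW⟩ :=
      c₀.exists_subset_forall_adj_of_choose_mul_lt hheavy hmany
    exact (G.exists_isClique_or_biclique_of_forall_adj ht
      (fun x hx y hy => c₀.stable x (hTS hx) y (hTS hy)) hTcard hW.le hTW).imp_right Or.inl

/-- Lemma 4.5: given an `(s, l + (st)^t)`-constellation in `G`, either `G`
contains `K_t` or `K_{t,t}` (as induced subgraphs), or some `l` of the paths
form with `S` a `t`-meager `(s, l)`-constellation. -/
theorem stmt9 (l s t : ℕ) (hl : 0 < l) (hs : 0 < s) (ht : 0 < t)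
    (V : Type u) (G : SimpleGraph V)
    (c₀ : Constellation G s (l + (s * t) ^ t)) :
    (∃ K : Finset V, G.IsClique (↑K : Set V) ∧ K.card = t) ∨
    (∃ A B : Finset V, Disjoint A B ∧ A.card = t ∧ B.card = t ∧
      (∀ x ∈ A, ∀ y ∈ A, ¬ G.Adj x y) ∧ (∀ x ∈ B, ∀ y ∈ B, ¬ G.Adj x y) ∧
      (∀ x ∈ A, ∀ y ∈ B, G.Adj x y)) ∨
    (∃ σ : Fin l ↪ Fin (l + (s * t) ^ t), ∃ c : Constellation G s l,
      c.S = c₀.S ∧ (∀ i : Fin l, c.P i = c₀.P (σ i)) ∧ c.Meager t) :=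
  stmt9_general l s t ht V G c₀
end

section
/- Let h, s be positive integers, let G be a graph, and let 𝔞 = (S, 𝓛) be an (s,h)-array in G with associated bijection π. Then the induced subgraph J = G[S ∪ V(𝓛)] is (3,h)-pinched: J does not contain three induced cycles of length at least h+2 passing through a common vertex and otherwise pairwise disjoint and anticomplete. -/
open SimpleGraph

universe u

variable {V : Type u}

section Helpers
variable {V : Type u} {G : SimpleGraph V} {s h : ℕ}

private lemma zcast_inj {n i j : ℕ} (hij : i ≤ j) (hd : j - i < n) (hc : (i : ZMod n) = (j : ZMod n)) :
    i = j := by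
  have h1 : i ≡ j [MOD n] := (ZMod.natCast_eq_natCast_iff _ _ _).mp hc
  have h2 : n ∣ j - i := (Nat.modEq_iff_dvd' hij).mp h1
  have h3 := Nat.eq_zero_of_dvd_of_lt h2
  omega

private lemma zcast_eq_zero {n i : ℕ} (hi : i < n) (hc : (i : ZMod n) = 0) : i = 0 := by
  have : ((0:ℕ) : ZMod n) = ((i:ℕ) : ZMod n) := by simpa using hc.symm
  have h2 := zcast_inj (Nat.zero_le i) (by omega) this
  omega

private lemma induce_adj_iff {S : Set V} {u v : S} :
    (G.induce S).Adj u v ↔ G.Adj ↑u ↑v := Iff.rfl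

lemma PDArray.pi_surj (A : PDArray G s h) {v : V} (hv : v ∈ A.S) : ∃ i, A.π i = v := by
  classical
  have himg : (Finset.univ.image A.π) = A.S := by
    apply Finset.eq_of_subset_of_card_le
    · intro w hw
      simp only [Finset.mem_image] at hw
      obtain ⟨i, _, rfl⟩ := hw
      exact A.π_mem i
    · rw [Finset.card_image_of_injective _ A.π_inj, Finset.card_univ, Fintype.card_fin, A.card_S]
  rw [← himg] at hv
  simpa using Finset.mem_image.mp hv

lemma PDArray.vert_path (A : PDArray G s h) {v : V} (hv : v ∈ A.verts) (hvS : v ∉ A.S) :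
    ∃ (k : Fin s) (p : Fin (A.P k).n), v = (A.P k).f p := by
  rcases (Set.mem_union _ _ _).mp hv with hv' | hv'
  · exact absurd hv' hvS
  · simp only [Set.mem_iUnion, IndPath.verts, Set.mem_range] at hv'
    obtain ⟨k, p, hp⟩ := hv'
    exact ⟨k, p, hp.symm⟩

lemma PDArray.step (A : PDArray G s h) {k : Fin s} {p : Fin (A.P k).n} {v : V}
    (hv : v ∈ A.verts) (hvS : v ∉ A.S) (hadj : G.Adj ((A.P k).f p) v) :
    ∃ q : Fin (A.P k).n, v = (A.P k).f q ∧ ((p:ℕ)+1 = (q:ℕ) ∨ (q:ℕ)+1 = (p:ℕ)) := by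
  obtain ⟨k', p', rfl⟩ := A.vert_path hv hvS
  have hk : k = k' := by
    by_contra hne
    exact A.plain k k' hne _ ⟨p, rfl⟩ _ ⟨p', rfl⟩ hadj
  subst hk
  exact ⟨p', rfl, ((A.P k).adj p p').mp hadj⟩

lemma PDArray.snbr (A : PDArray G s h) {k : Fin s} {p : Fin (A.P k).n} {i j : Fin s}
    (hi : G.Adj (A.π i) ((A.P k).f p)) (hj : G.Adj (A.π j) ((A.P k).f p)) : i = j := by
  by_contra hne
  obtain ⟨rev, hrev⟩ := A.aligned k
  rcases lt_or_gt_of_ne hne with hlt | hlt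
  · have h2 := hrev i j hlt p p hi hj
    cases rev <;> simp at h2
  · have h2 := hrev j i hlt p p hj hi
    cases rev <;> simp at h2

lemma PDArray.between (A : PDArray G s h) (k : Fin s) {i j l : Fin s} (hil : i < l) (hlj : l < j)
    {p q u : Fin (A.P k).n}
    (hp : G.Adj (A.π i) ((A.P k).f p)) (hq : G.Adj (A.π j) ((A.P k).f q))
    (hu : G.Adj (A.π l) ((A.P k).f u)) :
    min (p:ℕ) (q:ℕ) < (u:ℕ) ∧ (u:ℕ) < max (p:ℕ) (q:ℕ) := by
  obtain ⟨rev, hrev⟩ := A.aligned k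
  have h1 := hrev i l hil p u hp hu
  have h2 := hrev l j hlj u q hu hq
  cases rev <;> simp at h1 h2 <;> omega

private lemma pm_mono (t : ℕ → ℕ) : ∀ (N : ℕ),
    (∀ i, i < N → t (i+1) = t i + 1 ∨ t i = t (i+1) + 1) →
    (∀ i j, i ≤ N → j ≤ N → t i = t j → i = j) →
    (∀ i, i ≤ N → t i = t 0 + i) ∨ (∀ i, i ≤ N → t i + i = t 0) := by
  intro N
  induction N with
  | zero =>
    intro _ _
    left
    intro i hi
    have : i = 0 := by omega
    subst this
    omega
  | succ N ih =>
    intro hstep hinj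
    have hd := ih (fun i hi => hstep i (by omega)) (fun i j hi hj => hinj i j (by omega) (by omega))
    rcases hd with hinc | hdec
    · rcases hstep N (by omega) with h1 | h2
      · left
        intro i hi
        rcases Nat.lt_succ_iff_lt_or_eq.mp (Nat.lt_succ_of_le hi) with h | h
        · exact hinc i (by omega)
        · subst h
          have := hinc N le_rfl
          omega
      · by_cases hN : N = 0
        · subst hN
          right
          intro i hi
          have h0 : t 0 = t 1 + 1 := by simpa using h2
          interval_cases i <;> omega
        · exfalso
          have e1 : t N = t 0 + N := hinc N le_rfl
          have e2 : t (N-1) = t 0 + (N-1) := hinc (N-1) (by omega)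
          have e3 : t (N+1) = t (N-1) := by omega
          have := hinj (N+1) (N-1) (by omega) (by omega) e3
          omega
    · rcases hstep N (by omega) with h1 | h2
      · by_cases hN : N = 0
        · subst hN
          left
          intro i hi
          have h0 : t 1 = t 0 + 1 := by simpa using h1
          interval_cases i <;> omega
        · exfalso
          have e1 : t N + N = t 0 := hdec N le_rfl
          have e2 : t (N-1) + (N-1) = t 0 := hdec (N-1) (by omega)
          have e3 : t (N+1) = t (N-1) := by omega
          have := hinj (N+1) (N-1) (by omega) (by omega) e3
          omega
      · right
        intro i hi
        rcases Nat.lt_succ_iff_lt_or_eq.mp (Nat.lt_succ_of_le hi) with hc | hc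
        · exact hdec i (by omega)
        · subst hc
          have := hdec N le_rfl
          omega

end Helpers
section Helpers2
variable {V : Type u} {G : SimpleGraph V} {s h : ℕ}

lemma PDArray.run (A : PDArray G s h) (C : IndCycle (G.induce A.verts)) (a b : ℕ)
    (hab : a + 1 < b) (hbn : b ≤ a + C.n)
    (hint : ∀ i : ℕ, a < i → i < b → (↑(C.f (i : ZMod C.n)) : V) ∉ A.S) :
    ∃ (k : Fin s) (t : ℕ → Fin (A.P k).n),
      (∀ i : ℕ, a < i → i < b → (↑(C.f (i : ZMod C.n)) : V) = (A.P k).f (t i)) ∧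
      ((∀ i : ℕ, a < i → i < b → (t i : ℕ) = (t (a+1) : ℕ) + (i - (a+1))) ∨
       (∀ i : ℕ, a < i → i < b → (t i : ℕ) + (i - (a+1)) = (t (a+1) : ℕ))) := by
  classical
  have hn3 := C.hn
  have hv : ∀ i : ℕ, (↑(C.f (i : ZMod C.n)) : V) ∈ A.verts := fun i => (C.f _).2
  have hadjc : ∀ i : ℕ, G.Adj (↑(C.f (i : ZMod C.n)) : V) (↑(C.f ((i+1 : ℕ) : ZMod C.n)) : V) := by
    intro i
    have h1 : ((i+1 : ℕ) : ZMod C.n) = (i : ZMod C.n) + 1 := by push_cast; ring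
    exact (C.adj (i : ZMod C.n) ((i+1 : ℕ) : ZMod C.n)).mpr (Or.inr h1)
  obtain ⟨k1, p1, hp1⟩ := A.vert_path (hv (a+1)) (hint (a+1) (by omega) (by omega))
  have main : ∀ i : ℕ, a + 1 ≤ i → i < b →
      ∃ q : Fin (A.P k1).n, (↑(C.f (i : ZMod C.n)) : V) = (A.P k1).f q := by
    intro i hi
    induction i, hi using Nat.le_induction with
    | base => exact fun _ => ⟨p1, hp1⟩
    | succ i hi ih =>
      intro hib
      obtain ⟨q, hq⟩ := ih (by omega)
      have hadj : G.Adj ((A.P k1).f q) (↑(C.f ((i+1 : ℕ) : ZMod C.n)) : V) := by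
        rw [← hq]; exact hadjc i
      obtain ⟨q', hq', _⟩ := A.step (hv (i+1)) (hint (i+1) (by omega) hib) hadj
      exact ⟨q', hq'⟩
  choose t' ht' using main
  let t : ℕ → Fin (A.P k1).n := fun i =>
    if hcond : a + 1 ≤ i ∧ i < b then t' i hcond.1 hcond.2 else ⟨0, (A.P k1).npos⟩
  have htv : ∀ i : ℕ, a < i → i < b → (↑(C.f (i : ZMod C.n)) : V) = (A.P k1).f (t i) := by
    intro i h1 h2
    have hcond : a + 1 ≤ i ∧ i < b := ⟨by omega, h2⟩
    simp only [t, dif_pos hcond]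
    exact ht' i hcond.1 hcond.2
  have hstep : ∀ i : ℕ, a < i → i + 1 < b →
      ((t i : ℕ) + 1 = (t (i+1) : ℕ) ∨ (t (i+1) : ℕ) + 1 = (t i : ℕ)) := by
    intro i h1 h2
    have hadj : G.Adj ((A.P k1).f (t i)) ((A.P k1).f (t (i+1))) := by
      rw [← htv i h1 (by omega), ← htv (i+1) (by omega) h2]
      exact hadjc i
    exact ((A.P k1).adj _ _).mp hadj
  have hinj : ∀ i j : ℕ, a < i → i < b → a < j → j < b → t i = t j → i = j := by
    intro i j hi1 hi2 hj1 hj2 hts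
    have h1 : (↑(C.f (i : ZMod C.n)) : V) = (↑(C.f (j : ZMod C.n)) : V) := by
      rw [htv i hi1 hi2, htv j hj1 hj2, hts]
    have h2 : C.f (i : ZMod C.n) = C.f (j : ZMod C.n) := Subtype.coe_injective h1
    have h3 := C.inj h2
    rcases le_or_gt i j with hle | hle
    · exact zcast_inj hle (by omega) h3
    · exact (zcast_inj hle.le (by omega) h3.symm).symm
  have hpm := pm_mono (fun d => (t (a+1+d) : ℕ)) (b - a - 2)
    (by
      intro d hd
      have := hstep (a+1+d) (by omega) (by omega)
      have e : a+1+(d+1) = (a+1+d)+1 := by omega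
      beta_reduce
      rw [e]
      omega)
    (by
      intro d e hd he hts
      have h1 : t (a+1+d) = t (a+1+e) := Fin.ext hts
      have := hinj (a+1+d) (a+1+e) (by omega) (by omega) (by omega) (by omega) h1
      omega)
  refine ⟨k1, t, htv, ?_⟩
  rcases hpm with hc | hc
  · left
    intro i h1 h2
    have := hc (i - (a+1)) (by omega)
    beta_reduce at this
    have e : a+1+(i-(a+1)) = i := by omega
    rw [e] at this
    simpa using this
  · right
    intro i h1 h2
    have := hc (i - (a+1)) (by omega)
    beta_reduce at this
    have e : a+1+(i-(a+1)) = i := by omega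
    rw [e] at this
    simpa using this

private lemma run_cover {M : ℕ} (t : ℕ → Fin M) (a b : ℕ) (hab : a + 1 < b)
    (hd : (∀ i : ℕ, a < i → i < b → (t i : ℕ) = (t (a+1) : ℕ) + (i - (a+1))) ∨
          (∀ i : ℕ, a < i → i < b → (t i : ℕ) + (i - (a+1)) = (t (a+1) : ℕ)))
    (u : ℕ) (h1 : min (t (a+1) : ℕ) (t (b-1) : ℕ) < u)
    (h2 : u < max (t (a+1) : ℕ) (t (b-1) : ℕ)) :
    ∃ i : ℕ, a < i ∧ i < b ∧ (t i : ℕ) = u := by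
  rcases hd with hd | hd
  · have hb := hd (b-1) (by omega) (by omega)
    refine ⟨a+1+(u - (t (a+1) : ℕ)), by omega, by omega, ?_⟩
    have := hd (a+1+(u - (t (a+1) : ℕ))) (by omega) (by omega)
    omega
  · have hb := hd (b-1) (by omega) (by omega)
    refine ⟨a+1+((t (a+1) : ℕ) - u), by omega, by omega, ?_⟩
    have := hd (a+1+((t (a+1) : ℕ) - u)) (by omega) (by omega)
    omega

end Helpers2
section Helpers3
variable {V : Type u} {G : SimpleGraph V} {s h : ℕ}

lemma PDArray.exists_second (A : PDArray G s h) (C : IndCycle (G.induce A.verts))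
    (hn : h + 2 ≤ C.n) (hx : (↑(C.f 0) : V) ∈ A.S) :
    ∃ z : ZMod C.n, (↑(C.f z) : V) ∈ A.S ∧ C.f z ≠ C.f 0 := by
  by_contra hcon
  push_neg at hcon
  have hn3 := C.hn
  have hint : ∀ i : ℕ, 0 < i → i < C.n → (↑(C.f (i : ZMod C.n)) : V) ∉ A.S := by
    intro i h1 h2 hs
    have h3 := hcon _ hs
    have h4 := C.inj h3
    have h5 : (i : ZMod C.n) = ((0 : ℕ) : ZMod C.n) := by simpa using h4
    have := zcast_eq_zero h2 (by simpa using h5)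
    omega
  obtain ⟨k, t, htv, hd⟩ := A.run C 0 C.n (by omega) (by omega) hint
  have hc0 : ((0 : ℕ) : ZMod C.n) = 0 := by simp
  have hc1 : ((1 : ℕ) : ZMod C.n) = 1 := by simp
  have hadj1 : G.Adj (↑(C.f 0) : V) ((A.P k).f (t 1)) := by
    have hJ : (G.induce A.verts).Adj (C.f 0) (C.f ((1:ℕ) : ZMod C.n)) := by
      refine (C.adj 0 _).mpr (Or.inr ?_)
      rw [hc1, zero_add]
    have := induce_adj_iff.mp hJ
    rwa [htv 1 (by omega) (by omega)] at this
  have hadj2 : G.Adj (↑(C.f 0) : V) ((A.P k).f (t (C.n - 1))) := by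
    have hJ : (G.induce A.verts).Adj (C.f 0) (C.f ((C.n - 1 : ℕ) : ZMod C.n)) := by
      refine (C.adj 0 _).mpr (Or.inl ?_)
      have : ((C.n - 1 : ℕ) : ZMod C.n) + 1 = ((C.n : ℕ) : ZMod C.n) := by
        have e : (C.n - 1 : ℕ) + 1 = C.n := by omega
        rw [← e]
        push_cast
        ring
      rw [this, ZMod.natCast_self]
    have := induce_adj_iff.mp hJ
    rwa [htv (C.n - 1) (by omega) (by omega)] at this
  have hlen : ((t (C.n - 1) : ℕ) = (t 1 : ℕ) + (C.n - 2)) ∨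
      ((t (C.n - 1) : ℕ) + (C.n - 2) = (t 1 : ℕ)) := by
    rcases hd with hd | hd
    · left
      have := hd (C.n - 1) (by omega) (by omega)
      simp only [Nat.zero_add] at this
      omega
    · right
      have := hd (C.n - 1) (by omega) (by omega)
      simp only [Nat.zero_add] at this
      omega
  have hnadj : ∀ r : Fin (A.P k).n,
      min (t 1 : ℕ) (t (C.n - 1) : ℕ) < (r : ℕ) → (r : ℕ) < max (t 1 : ℕ) (t (C.n - 1) : ℕ) →
      ¬ G.Adj (↑(C.f 0) : V) ((A.P k).f r) := by
    intro r hr1 hr2 hadj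
    obtain ⟨i, hi1, hi2, hti⟩ := run_cover t 0 C.n (by omega) hd (r : ℕ) (by simpa using hr1)
      (by simpa using hr2)
    have htir : t i = r := Fin.ext hti
    have hne1 : i ≠ 1 := by
      rintro rfl
      simp only [htir] at hr1 hr2
      omega
    have hne2 : i ≠ C.n - 1 := by
      rintro rfl
      simp only [htir] at hr1 hr2
      omega
    have hJ : (G.induce A.verts).Adj (C.f 0) (C.f (i : ZMod C.n)) := by
      apply induce_adj_iff.mpr
      rw [htv i (by omega) hi2, htir]
      exact hadj
    rcases (C.adj 0 _).mp hJ with h0 | h0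
    · have : ((i + 1 : ℕ) : ZMod C.n) = ((0:ℕ) : ZMod C.n) := by
        push_cast
        rw [← h0]
      have h5 := zcast_eq_zero (n := C.n) (i := i+1) (by omega) (by simpa using this)
      omega
    · have : ((1 : ℕ) : ZMod C.n) = ((i : ℕ) : ZMod C.n) := by
        rw [hc1, h0, zero_add]
      have h5 := zcast_inj (by omega) (by omega) this
      omega
  have hhol := A.hollow (↑(C.f 0)) hx k
  rcases le_or_gt (t 1 : ℕ) (t (C.n - 1) : ℕ) with hle | hle
  · have := hhol (t 1) (t (C.n - 1)) (by omega) hadj1 hadj2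
      (fun r h1 h2 => hnadj r (by omega) (by omega))
    omega
  · have := hhol (t (C.n - 1)) (t 1) (by omega) hadj2 hadj1
      (fun r h1 h2 => hnadj r (by omega) (by omega))
    omega

end Helpers3
section Helpers4
variable {V : Type u} {G : SimpleGraph V} {s h : ℕ}

lemma PDArray.consec (A : PDArray G s h) (D : IndCycle (G.induce A.verts)) (Pr : Fin s → Prop)
    (u w : ℕ) (huw : u < w) (_hwn : w < D.n)
    (hu : ∃ iu : Fin s, (↑(D.f (u : ZMod D.n)) : V) = A.π iu ∧ ¬ Pr iu)
    (hwp : ∃ iw : Fin s, (↑(D.f (w : ZMod D.n)) : V) = A.π iw ∧ Pr iw) :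
    ∃ a b : ℕ, u ≤ a ∧ a < b ∧ b ≤ w ∧
      (∀ i : ℕ, a < i → i < b → (↑(D.f (i : ZMod D.n)) : V) ∉ A.S) ∧
      (∃ ia : Fin s, (↑(D.f (a : ZMod D.n)) : V) = A.π ia ∧ ¬ Pr ia) ∧
      (∃ ib : Fin s, (↑(D.f (b : ZMod D.n)) : V) = A.π ib ∧ Pr ib) := by
  classical
  set Q : ℕ → Prop := fun i => u < i ∧ i ≤ w ∧ ∃ j : Fin s, (↑(D.f (i : ZMod D.n)) : V) = A.π j ∧ Pr j
    with hQdef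
  have hex : ∃ i, Q i := ⟨w, huw, le_rfl, hwp⟩
  set b := Nat.find hex with hbdef
  have hQb : Q b := Nat.find_spec hex
  have hbmin : ∀ i, i < b → ¬ Q i := fun i hi => Nat.find_min hex hi
  have hbw : b ≤ w := Nat.find_le ⟨huw, le_rfl, hwp⟩
  set Pa : ℕ → Prop := fun i => u ≤ i ∧ (↑(D.f (i : ZMod D.n)) : V) ∈ A.S with hPadef
  obtain ⟨iu, hiu, hniu⟩ := hu
  have hPau : Pa u := ⟨le_rfl, by rw [hiu]; exact A.π_mem iu⟩
  set a := Nat.findGreatest Pa (b-1) with hadef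
  have hub : u ≤ b - 1 := by
    have := hQb.1
    omega
  have hPaa : Pa a := Nat.findGreatest_spec hub hPau
  have hua : u ≤ a := Nat.le_findGreatest hub hPau
  have hab : a < b := by
    have := Nat.findGreatest_le (P := Pa) (b-1)
    have := hQb.1
    omega
  have hint : ∀ i : ℕ, a < i → i < b → (↑(D.f (i : ZMod D.n)) : V) ∉ A.S := by
    intro i h1 h2 hs
    exact Nat.findGreatest_is_greatest h1 (by omega) ⟨by omega, hs⟩
  obtain ⟨ja, hja⟩ := A.pi_surj hPaa.2
  have hnpa : ¬ Pr ja := by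
    by_cases hau : a = u
    · have : ja = iu := by
        apply A.π_inj
        rw [hja, hau, hiu]
      rw [this]
      exact hniu
    · intro hpr
      exact hbmin a hab ⟨by omega, by omega, ja, hja.symm, hpr⟩
  exact ⟨a, b, hua, hab, hbw, hint, ⟨ja, hja.symm, hnpa⟩, hQb.2.2⟩

lemma PDArray.pierce (A : PDArray G s h) {D : IndCycle (G.induce A.verts)}
    (x : ↥A.verts) (l : Fin s)
    (hxS : (x : V) ∈ A.S)
    (a b : ℕ) (hab : a < b) (hbn : b < D.n)
    (hintS : ∀ i : ℕ, a < i → i < b → (↑(D.f (i : ZMod D.n)) : V) ∉ A.S)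
    {ia ib : Fin s}
    (hva : (↑(D.f (a : ZMod D.n)) : V) = A.π ia) (hvb : (↑(D.f (b : ZMod D.n)) : V) = A.π ib)
    (hstrad : (ia < l ∧ l < ib) ∨ (ib < l ∧ l < ia))
    (hanti : ∀ v : ↥A.verts, v ∈ Set.range D.f → (v : V) ≠ (x : V) → ¬ G.Adj (A.π l) (v : V)) :
    False := by
  have hn3 := D.hn
  have hadjD : ∀ i : ℕ, (G.induce A.verts).Adj (D.f (i : ZMod D.n)) (D.f ((i+1 : ℕ) : ZMod D.n)) := by
    intro i
    refine (D.adj _ _).mpr (Or.inr ?_)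
    push_cast
    ring
  have hab2 : a + 2 ≤ b := by
    by_contra hcon
    have hb1 : b = a + 1 := by omega
    have hJ := hadjD a
    rw [← hb1] at hJ
    have hG : G.Adj (A.π ia) (A.π ib) := by
      have := induce_adj_iff.mp hJ
      rwa [hva, hvb] at this
    exact A.stable _ (A.π_mem ia) _ (A.π_mem ib) hG
  obtain ⟨k, t, htv, hd⟩ := A.run D a b (by omega) (by omega) hintS
  have ha1 : G.Adj (A.π ia) ((A.P k).f (t (a+1))) := by
    have := induce_adj_iff.mp (hadjD a)
    rwa [hva, htv (a+1) (by omega) (by omega)] at this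
  have hb1 : G.Adj (A.π ib) ((A.P k).f (t (b-1))) := by
    have hJ := hadjD (b-1)
    have e : (b - 1 : ℕ) + 1 = b := by omega
    rw [e] at hJ
    have := induce_adj_iff.mp hJ
    rw [hvb, htv (b-1) (by omega) (by omega)] at this
    exact this.symm
  obtain ⟨v, hv, hyv⟩ := A.nbr (A.π l) (A.π_mem l) k
  obtain ⟨uu, rfl⟩ := hv
  have hbet : min (t (a+1) : ℕ) (t (b-1) : ℕ) < (uu : ℕ) ∧
      (uu : ℕ) < max (t (a+1) : ℕ) (t (b-1) : ℕ) := by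
    rcases hstrad with ⟨h1, h2⟩ | ⟨h1, h2⟩
    · exact A.between k h1 h2 ha1 hb1 hyv
    · have := A.between k h1 h2 hb1 ha1 hyv
      omega
  obtain ⟨i0, hi01, hi02, hti0⟩ := run_cover t a b (by omega) hd (uu : ℕ) hbet.1 hbet.2
  have hval : (↑(D.f (i0 : ZMod D.n)) : V) = (A.P k).f uu := by
    rw [htv i0 hi01 hi02]
    congr 1
    exact Fin.ext hti0
  refine hanti (D.f (i0 : ZMod D.n)) ⟨_, rfl⟩ ?_ ?_
  · intro heq
    exact hintS i0 hi01 hi02 (heq ▸ hxS)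
  · rw [hval]
    exact hyv

end Helpers4
/-- If `𝔞 = (S, 𝓛)` is an `(s,h)`-array in `G`, then the subgraph induced on
`S ∪ V(𝓛)` is `(3,h)`-pinched. -/
theorem stmt11 (h s : ℕ) (hh : 0 < h) (hs : 0 < s)
    (V : Type u) (G : SimpleGraph V) (A : PDArray G s h) :
    Pinched 3 h (G.induce A.verts) := by
  classical
  rintro ⟨x, C, hlen, hx0, hdis⟩
  have hn3 : ∀ i : Fin 3, 3 ≤ (C i).n := fun i => (C i).hn
  have hadj1 : ∀ i : Fin 3, (G.induce A.verts).Adj x ((C i).f 1) := by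
    intro i
    have := ((C i).adj 0 1).mpr (Or.inr (by rw [zero_add]))
    rwa [hx0 i] at this
  have hadjm1 : ∀ i : Fin 3, (G.induce A.verts).Adj x ((C i).f (-1)) := by
    intro i
    have := ((C i).adj 0 (-1)).mpr (Or.inl (by ring))
    rwa [hx0 i] at this
  have hzm : ∀ i : Fin 3, ((1 : ZMod (C i).n) ≠ 0 ∧ (-1 : ZMod (C i).n) ≠ 0 ∧
      (1 : ZMod (C i).n) ≠ -1) := by
    intro i
    have h3 := hn3 i
    refine ⟨?_, ?_, ?_⟩
    · intro he
      have hc : ((0:ℕ) : ZMod (C i).n) = ((1:ℕ) : ZMod (C i).n) := by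
        push_cast
        linear_combination -he
      have := zcast_inj (by omega) (by omega) hc
      omega
    · intro he
      have hc : ((0:ℕ) : ZMod (C i).n) = ((1:ℕ) : ZMod (C i).n) := by
        push_cast
        linear_combination he
      have := zcast_inj (by omega) (by omega) hc
      omega
    · intro he
      have hc : ((0:ℕ) : ZMod (C i).n) = ((2:ℕ) : ZMod (C i).n) := by
        push_cast
        linear_combination -he
      have := zcast_inj (by omega) (by omega) hc
      omega
  have hne_x1 : ∀ i : Fin 3, (C i).f 1 ≠ x := by
    intro i he
    rw [← hx0 i] at he
    exact (hzm i).1 ((C i).inj he)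
  have hne_xm1 : ∀ i : Fin 3, (C i).f (-1) ≠ x := by
    intro i he
    rw [← hx0 i] at he
    exact (hzm i).2.1 ((C i).inj he)
  have hne_1m1 : ∀ i : Fin 3, (C i).f 1 ≠ (C i).f (-1) := fun i he => (hzm i).2.2 ((C i).inj he)
  have hcross : ∀ i j : Fin 3, i ≠ j → ∀ w : ↥A.verts,
      w ∈ Set.range (C i).f → w ∈ Set.range (C j).f → w = x := by
    intro i j hij w h1 h2
    have hw : w ∈ (Set.range (C i).f ∩ Set.range (C j).f) := ⟨h1, h2⟩
    rw [(hdis i j hij).1] at hw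
    exact hw
  by_cases hxS : (x : V) ∈ A.S
  · -- x is a vertex of S
    obtain ⟨m, hm⟩ := A.pi_surj hxS
    have hsec : ∀ i : Fin 3, ∃ (li : Fin s) (z : ZMod (C i).n),
        (↑((C i).f z) : V) = A.π li ∧ (C i).f z ≠ x ∧ li ≠ m := by
      intro i
      obtain ⟨z, hz1, hz2⟩ := A.exists_second (C i) (hlen i) (by rw [hx0 i]; exact hxS)
      obtain ⟨li, hli⟩ := A.pi_surj hz1
      rw [hx0 i] at hz2
      refine ⟨li, z, hli.symm, hz2, ?_⟩
      rintro rfl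
      exact hz2 (Subtype.ext (by rw [← hli, hm]))
    choose l z hlz hlne hlm using hsec
    have hlij : ∀ i j : Fin 3, i ≠ j → l i ≠ l j := by
      intro i j hij heq
      have hsame : (C i).f (z i) = (C j).f (z j) :=
        Subtype.ext (by rw [hlz i, hlz j, heq])
      have := hcross i j hij ((C i).f (z i)) ⟨_, rfl⟩ (by rw [hsame]; exact ⟨_, rfl⟩)
      exact hlne i this
    have main : ∀ i j : Fin 3, i ≠ j →
        ((l i < l j ∧ m < l i) ∨ (l j < l i ∧ l i < m)) → False := by
      intro i j hij hcase
      haveI : NeZero (C j).n := ⟨by have := hn3 j; omega⟩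
      have hz0 : ((0 : ℕ) : ZMod (C j).n) = 0 := by simp
      have hzval : (((z j).val : ℕ) : ZMod (C j).n) = z j := ZMod.natCast_rightInverse (z j)
      have hvne : (z j).val ≠ 0 := by
        intro he
        apply hlne j
        have hzz : z j = 0 := by rwa [ZMod.val_eq_zero] at he
        rw [hzz, hx0 j]
      have hv0 : (↑((C j).f ((0:ℕ) : ZMod (C j).n)) : V) = A.π m := by
        rw [hz0, hx0 j]
        exact hm.symm
      have hvz : (↑((C j).f (((z j).val : ℕ) : ZMod (C j).n)) : V) = A.π (l j) := by
        rw [hzval]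
        exact hlz j
      have hanti : ∀ v : ↥A.verts, v ∈ Set.range (C j).f → (v : V) ≠ (x : V) →
          ¬ G.Adj (A.π (l i)) (v : V) := by
        intro v hv hne hadj
        refine (hdis i j hij).2 ((C i).f (z i)) ⟨_, rfl⟩ v hv (hlne i)
          (fun he => hne (by rw [he])) ?_
        apply induce_adj_iff.mpr
        rw [hlz i]
        exact hadj
      rcases hcase with ⟨h1, h2⟩ | ⟨h1, h2⟩
      · obtain ⟨a, b, hua, hab, hbw, hint, ⟨ia, hia, hnia⟩, ⟨ib, hib, hpib⟩⟩ :=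
          A.consec (C j) (fun tt => l i < tt) 0 (z j).val (by omega) (ZMod.val_lt (z j))
            ⟨m, hv0, by omega⟩ ⟨l j, hvz, h1⟩
        have hia_ne : ia ≠ l i := by
          intro he
          apply hlne i
          have hsame : (C j).f ((a:ℕ) : ZMod (C j).n) = (C i).f (z i) :=
            Subtype.ext (by rw [hia, he, hlz i])
          exact hcross i j hij _ ⟨_, rfl⟩ (by rw [← hsame]; exact ⟨_, rfl⟩)
        have hialt : ia < l i := lt_of_le_of_ne (not_lt.mp hnia) hia_ne
        exact A.pierce x (l i) hxS a b hab (by have := ZMod.val_lt (z j); omega) hint hia hib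
          (Or.inl ⟨hialt, hpib⟩) hanti
      · obtain ⟨a, b, hua, hab, hbw, hint, ⟨ia, hia, hnia⟩, ⟨ib, hib, hpib⟩⟩ :=
          A.consec (C j) (fun tt => tt < l i) 0 (z j).val (by omega) (ZMod.val_lt (z j))
            ⟨m, hv0, by omega⟩ ⟨l j, hvz, h1⟩
        have hia_ne : ia ≠ l i := by
          intro he
          apply hlne i
          have hsame : (C j).f ((a:ℕ) : ZMod (C j).n) = (C i).f (z i) :=
            Subtype.ext (by rw [hia, he, hlz i])
          exact hcross i j hij _ ⟨_, rfl⟩ (by rw [← hsame]; exact ⟨_, rfl⟩)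
        have hialt : l i < ia := lt_of_le_of_ne (not_lt.mp hnia) (Ne.symm hia_ne)
        exact A.pierce x (l i) hxS a b hab (by have := ZMod.val_lt (z j); omega) hint hia hib
          (Or.inr ⟨hpib, hialt⟩) hanti
    obtain ⟨i, j, hij, hsame⟩ :=
      Fintype.exists_ne_map_eq_of_card_lt (fun i : Fin 3 => decide (m < l i)) (by simp)
    have hiff : (m < l i ↔ m < l j) := decide_eq_decide.mp hsame
    by_cases hcm : m < l i
    · have hcj : m < l j := hiff.mp hcm
      rcases lt_or_gt_of_ne (hlij i j hij) with hlt | hgt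
      · exact main i j hij (Or.inl ⟨hlt, hcm⟩)
      · exact main j i hij.symm (Or.inl ⟨hgt, hcj⟩)
    · have h1 : l i < m := lt_of_le_of_ne (not_lt.mp hcm) (hlm i)
      have h2 : l j < m := lt_of_le_of_ne (not_lt.mp (fun hc => hcm (hiff.mpr hc))) (hlm j)
      rcases lt_or_gt_of_ne (hlij i j hij) with hlt | hgt
      · exact main j i hij.symm (Or.inr ⟨hlt, h2⟩)
      · exact main i j hij (Or.inr ⟨hgt, h1⟩)
  · -- x is a path vertex
    obtain ⟨k0, p0, hp0⟩ := A.vert_path x.2 hxS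
    have hpick : ∀ i : Fin 3, ∃ (w : ↥A.verts) (q : Fin (A.P k0).n),
        w ∈ Set.range (C i).f ∧ w ≠ x ∧ (w : V) = (A.P k0).f q ∧
        ((p0 : ℕ) + 1 = (q : ℕ) ∨ (q : ℕ) + 1 = (p0 : ℕ)) := by
      intro i
      have hadjxu : G.Adj (x : V) (↑((C i).f 1) : V) := induce_adj_iff.mp (hadj1 i)
      have hadjxv : G.Adj (x : V) (↑((C i).f (-1)) : V) := induce_adj_iff.mp (hadjm1 i)
      by_cases hu1S : (↑((C i).f 1) : V) ∈ A.S
      · by_cases hv1S : (↑((C i).f (-1)) : V) ∈ A.S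
        · exfalso
          obtain ⟨iu, hiu⟩ := A.pi_surj hu1S
          obtain ⟨iv, hiv⟩ := A.pi_surj hv1S
          have hh1 : G.Adj (A.π iu) ((A.P k0).f p0) := by
            rw [hiu, ← hp0]
            exact hadjxu.symm
          have hh2 : G.Adj (A.π iv) ((A.P k0).f p0) := by
            rw [hiv, ← hp0]
            exact hadjxv.symm
          have heq := A.snbr hh1 hh2
          exact hne_1m1 i (Subtype.ext (by rw [← hiu, ← hiv, heq]))
        · obtain ⟨q, hq, hside⟩ := A.step ((C i).f (-1)).2 hv1S (by rw [← hp0]; exact hadjxv)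
          exact ⟨(C i).f (-1), q, ⟨_, rfl⟩, hne_xm1 i, hq, hside⟩
      · obtain ⟨q, hq, hside⟩ := A.step ((C i).f 1).2 hu1S (by rw [← hp0]; exact hadjxu)
        exact ⟨(C i).f 1, q, ⟨_, rfl⟩, hne_x1 i, hq, hside⟩
    choose w q hmem hwne hwq hside using hpick
    obtain ⟨i, j, hij, hsame⟩ :=
      Fintype.exists_ne_map_eq_of_card_lt (fun i : Fin 3 => decide ((p0:ℕ)+1 = (q i : ℕ)))
        (by simp)
    have hiff := decide_eq_decide.mp hsame
    have hqq : q i = q j := by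
      by_cases hc : (p0:ℕ)+1 = (q i : ℕ)
      · have := hiff.mp hc
        exact Fin.ext (by omega)
      · have hc1 : (q i : ℕ)+1 = (p0:ℕ) := (hside i).resolve_left hc
        have hc2 : (q j : ℕ)+1 = (p0:ℕ) := (hside j).resolve_left (fun hcc => hc (hiff.mpr hcc))
        exact Fin.ext (by omega)
    have hwij : w i = w j := Subtype.ext (by rw [hwq i, hwq j, hqq])
    exact hwne i (hcross i j hij (w i) (hmem i) (by rw [hwij]; exact hmem j))
end

section
/- Let h, s be positive integers and let 𝔞 = (S, 𝓛) be an (s,h)-array in a graph G. Then G[S ∪ V(𝓛)] contains K_{s,s} as a minor, and hence has treewidth at least s. -/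
open SimpleGraph

universe u

variable {V : Type u}

/-!
Contracting each path of the array to a vertex gives a `K_{s,s}` minor: the paths are connected,
pairwise disjoint, disjoint from `S`, and every vertex of `S` has a neighbour on each of them.

For the treewidth bound, the bags containing a vertex of a branch set form a subtree of the
decomposition tree, and the subtrees of two adjacent branch sets meet. If the `s` subtrees of one
side pairwise meet, the Helly property of subtrees puts a node in all of them and in one subtree of
the other side. Otherwise an edge of the tree separates two disjoint subtrees of the first side, and
every subtree of the other side, meeting both, contains this edge. Either way some bag meets
`s + 1` pairwise disjoint branch sets.
-/

lemma add_one_le_ncard_of_insert_range_subset {γ : Type*} [Finite γ] {n : ℕ} {e : Fin n → γ}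
    (he : Function.Injective e) {a : γ} (ha : a ∉ Set.range e) {K : Set γ}
    (hK : insert a (Set.range e) ⊆ K) : n + 1 ≤ K.ncard :=
  calc n + 1 = (insert a (Set.range e)).ncard := by
        rw [Set.ncard_insert_of_notMem ha, Set.ncard_range_of_injective he, Nat.card_fin]
    _ ≤ K.ncard := Set.ncard_le_ncard hK

namespace SimpleGraph

variable {ι : Type*} {T : SimpleGraph ι}

def WalkConnectedOn (T : SimpleGraph ι) (A : Set ι) : Prop :=
  ∀ x ∈ A, ∀ y ∈ A, ∃ p : T.Walk x y, ∀ v ∈ p.support, v ∈ A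

lemma walkConnectedOn_of_preconnected_induce {A : Set ι} (h : (T.induce A).Preconnected) :
    T.WalkConnectedOn A := by
  intro x hx y hy
  obtain ⟨p⟩ := h ⟨x, hx⟩ ⟨y, hy⟩
  refine ⟨p.map ⟨Subtype.val, id⟩, fun v hv => ?_⟩
  rw [Walk.support_map, List.mem_map] at hv
  obtain ⟨v', -, rfl⟩ := hv
  exact v'.2

lemma IsAcyclic.walkConnectedOn_inter (hT : T.IsAcyclic) {A B : Set ι}
    (hA : T.WalkConnectedOn A) (hB : T.WalkConnectedOn B) : T.WalkConnectedOn (A ∩ B) := by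
  classical
  intro x hx y hy
  obtain ⟨p, hpA⟩ := hA x hx.1 y hy.1
  obtain ⟨q, hqB⟩ := hB x hx.2 y hy.2
  have hpq : p.toPath = q.toPath := (hT.subsingleton_path x y).elim _ _
  refine ⟨p.toPath, fun v hv => ⟨hpA v (p.support_toPath_subset_support hv), ?_⟩⟩
  rw [hpq] at hv
  exact hqB v (q.support_toPath_subset_support hv)

lemma walkConnectedOn_biUnion {W : Type*} {H : SimpleGraph W} {t : W → Set ι}
    (ht : ∀ v, T.WalkConnectedOn (t v)) (hadj : ∀ u v, H.Adj u v → (t u ∩ t v).Nonempty)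
    {B : Set W} (hB : H.WalkConnectedOn B) : T.WalkConnectedOn (⋃ v ∈ B, t v) := by
  have walk_along : ∀ {u v : W} (p : H.Walk u v), (∀ w ∈ p.support, w ∈ B) →
      ∀ x ∈ t u, ∀ y ∈ t v, ∃ q : T.Walk x y, ∀ z ∈ q.support, z ∈ ⋃ v ∈ B, t v := by
    intro u v p
    induction p with
    | nil =>
      intro hp x hx y hy
      obtain ⟨q, hq⟩ := ht _ x hx y hy
      exact ⟨q, fun z hz => Set.mem_biUnion (hp _ (Walk.start_mem_support _)) (hq z hz)⟩
    | @cons u u' v huu' p ih =>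
      intro hp x hx y hy
      obtain ⟨m, hmu, hmu'⟩ := hadj _ _ huu'
      obtain ⟨q₁, hq₁⟩ := ht u x hx m hmu
      obtain ⟨q₂, hq₂⟩ := ih (fun w hw => hp w (List.mem_cons_of_mem _ hw)) m hmu' y hy
      refine ⟨q₁.append q₂, fun z hz => ?_⟩
      rcases (Walk.mem_support_append_iff _ _).mp hz with hz | hz
      · exact Set.mem_biUnion (hp _ (Walk.start_mem_support _)) (hq₁ z hz)
      · exact hq₂ z hz
  intro x hx y hy
  obtain ⟨u, hu, hxu⟩ := Set.mem_iUnion₂.mp hx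
  obtain ⟨v, hv, hyv⟩ := Set.mem_iUnion₂.mp hy
  obtain ⟨p, hp⟩ := hB u hu v hv
  exact walk_along p hp x hxu y hyv

lemma Walk.exists_last_exit {A : Set ι} {a b : ι} (p : T.Walk a b) (hb : b ∉ A)
    (hp : ∃ v ∈ p.support, v ∈ A) :
    ∃ x y, ∃ q : T.Walk y b, T.Adj x y ∧ x ∈ A ∧ ∀ v ∈ q.support, v ∉ A := by
  induction p with
  | nil =>
    obtain ⟨v, hv, hvA⟩ := hp
    rw [Walk.support_nil, List.mem_singleton] at hv
    exact absurd (hv ▸ hvA) hb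
  | @cons u c b huc q ih =>
    by_cases hq : ∃ v ∈ q.support, v ∈ A
    · exact ih hb hq
    · push Not at hq
      obtain ⟨v, hv, hvA⟩ := hp
      rcases List.mem_cons.mp (Walk.support_cons huc q ▸ hv) with rfl | hv
      · exact ⟨v, c, q, huc, hvA, hq⟩
      · exact absurd hvA (hq v hv)

-- `s(x, y)` is the last edge by which a walk from `D` to `C` leaves `D`. It is a bridge, so a
-- walk from `D` to `C` avoiding it would reconnect its ends.
lemma IsAcyclic.exists_edge_mem_of_meets_disjoint (hT : T.IsAcyclic) (hc : T.Connected)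
    {D C : Set ι} (hD : T.WalkConnectedOn D) (hC : T.WalkConnectedOn C)
    (hDne : D.Nonempty) (hCne : C.Nonempty) (hDC : Disjoint D C) :
    ∃ x y, x ∈ D ∧ y ∉ D ∧ ∀ E, T.WalkConnectedOn E → (E ∩ D).Nonempty → (E ∩ C).Nonempty →
      x ∈ E ∧ y ∈ E := by
  obtain ⟨a, ha⟩ := hDne
  obtain ⟨c, hcC⟩ := hCne
  obtain ⟨x, y, q, hxy, hxD, hqD⟩ := (hc.preconnected a c).some.exists_last_exit
    (Set.disjoint_right.mp hDC hcC) ⟨a, Walk.start_mem_support _, ha⟩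
  have hyD : y ∉ D := hqD y q.start_mem_support
  have hcut : ¬ (T.deleteEdges {s(x, y)}).Reachable x y :=
    isBridge_iff.mp (isAcyclic_iff_forall_adj_isBridge.mp hT hxy)
  have avoid : ∀ {u v} (w : T.Walk u v), s(x, y) ∉ w.edges →
      (T.deleteEdges {s(x, y)}).Reachable u v := fun w h => ⟨w.toDeleteEdge _ h⟩
  have reach_x : ∀ d ∈ D, (T.deleteEdges {s(x, y)}).Reachable d x := by
    intro d hd
    obtain ⟨w, hw⟩ := hD d hd x hxD
    exact avoid w fun he => hyD (hw y (w.snd_mem_support_of_mem_edges he))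
  have reach_y : ∀ c' ∈ C, (T.deleteEdges {s(x, y)}).Reachable c' y := by
    intro c' hc'
    obtain ⟨w, hw⟩ := hC c' hc' c hcC
    have hxC : x ∉ C := Set.disjoint_left.mp hDC hxD
    exact (avoid w fun he => hxC (hw x (w.fst_mem_support_of_mem_edges he))).trans
      (avoid q fun he => hqD x (q.fst_mem_support_of_mem_edges he) hxD).symm
  refine ⟨x, y, hxD, hyD, ?_⟩
  rintro E hE ⟨d, hdE, hdD⟩ ⟨c', hcE, hc'C⟩
  obtain ⟨w, hw⟩ := hE d hdE c' hcE
  by_cases he : s(x, y) ∈ w.edges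
  · exact ⟨hw x (w.fst_mem_support_of_mem_edges he), hw y (w.snd_mem_support_of_mem_edges he)⟩
  · exact (hcut (((reach_x d hdD).symm.trans (avoid w he)).trans (reach_y c' hc'C))).elim

lemma IsAcyclic.helly_three (hT : T.IsAcyclic) (hc : T.Connected) {A B C : Set ι}
    (hA : T.WalkConnectedOn A) (hB : T.WalkConnectedOn B) (hC : T.WalkConnectedOn C)
    (hAB : (A ∩ B).Nonempty) (hAC : (A ∩ C).Nonempty) (hBC : (B ∩ C).Nonempty) :
    (A ∩ B ∩ C).Nonempty := by
  by_contra hABC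
  obtain ⟨x, y, -, hy, hsep⟩ := hT.exists_edge_mem_of_meets_disjoint hc
    (hT.walkConnectedOn_inter hA hB) hC hAB (hBC.mono Set.inter_subset_right)
    (Set.disjoint_iff_inter_eq_empty.mpr (Set.not_nonempty_iff_eq_empty.mp hABC))
  exact hy ⟨(hsep A hA (hAB.mono fun z hz => ⟨hz.1, hz⟩) hAC).2,
    (hsep B hB (hAB.mono fun z hz => ⟨hz.2, hz⟩) hBC).2⟩

lemma IsAcyclic.helly (hT : T.IsAcyclic) (hc : T.Connected) {κ : Type*} {F : κ → Set ι}
    (hF : ∀ k, T.WalkConnectedOn (F k)) (hFF : ∀ k k', (F k ∩ F k').Nonempty)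
    {X : Set ι} (hX : T.WalkConnectedOn X) (hXne : X.Nonempty) (hXF : ∀ k, (X ∩ F k).Nonempty)
    (K : Finset κ) : ∃ z ∈ X, ∀ k ∈ K, z ∈ F k := by
  classical
  induction K using Finset.induction_on generalizing X with
  | empty =>
    obtain ⟨z, hz⟩ := hXne
    exact ⟨z, hz, by simp⟩
  | insert k K _ ih =>
    obtain ⟨z, ⟨hzX, hzk⟩, hzK⟩ := ih (hT.walkConnectedOn_inter hX (hF k)) (hXF k)
      fun k' => hT.helly_three hc hX (hF k) (hF k') (hXF k) (hXF k') (hFF k k')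
    exact ⟨z, hzX, Finset.forall_mem_insert _ _ _ |>.mpr ⟨hzk, hzK⟩⟩

lemma IsAcyclic.exists_add_one_le_ncard_of_completeBipartite (hT : T.IsAcyclic)
    (hc : T.Connected) {s : ℕ} (hs : 0 < s)
    {R : Fin s ⊕ Fin s → Set ι} (hR : ∀ a, T.WalkConnectedOn (R a)) (hRne : ∀ a, (R a).Nonempty)
    (hcross : ∀ i j, (R (.inl i) ∩ R (.inr j)).Nonempty) :
    ∃ z, s + 1 ≤ {a | z ∈ R a}.ncard := by
  by_cases hleft : ∀ i j, (R (.inl i) ∩ R (.inl j)).Nonempty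
  · obtain ⟨z, hz, hzL⟩ := hT.helly hc (fun i => hR (.inl i)) hleft (hR (.inr ⟨0, hs⟩)) (hRne _)
      (fun i => Set.inter_comm _ _ ▸ hcross i _) Finset.univ
    refine ⟨z, add_one_le_ncard_of_insert_range_subset Sum.inl_injective (a := .inr ⟨0, hs⟩)
      (by simp) ?_⟩
    rintro _ (rfl | ⟨i, rfl⟩)
    exacts [hz, hzL i (Finset.mem_univ i)]
  · push Not at hleft
    obtain ⟨i, j, hij⟩ := hleft
    obtain ⟨x, _, hx, -, hsep⟩ := hT.exists_edge_mem_of_meets_disjoint hc (hR _) (hR _)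
      (hRne _) (hRne _) (Set.disjoint_iff_inter_eq_empty.mpr hij)
    refine ⟨x, add_one_le_ncard_of_insert_range_subset Sum.inr_injective (a := .inl i)
      (by simp) ?_⟩
    rintro _ (rfl | ⟨m, rfl⟩)
    exacts [hx, (hsep _ (hR _) (Set.inter_comm _ _ ▸ hcross i m)
      (Set.inter_comm _ _ ▸ hcross j m)).1]

lemma connected_induce_range {α β : Type*} {H : SimpleGraph α} {G : SimpleGraph β}
    (φ : H →g G) (hH : H.Connected) : (G.induce (Set.range φ)).Connected :=
  hH.map ⟨fun a => ⟨φ a, a, rfl⟩, fun h => φ.map_adj h⟩ (by rintro ⟨_, a, rfl⟩; exact ⟨a, rfl⟩)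

end SimpleGraph

lemma isMinor_completeBipartiteGraph {α β : Type*} {G : SimpleGraph V} {x : α → V}
    (hx : Function.Injective x) {P : β → Set V} (hP : ∀ b, (G.induce (P b)).Connected)
    (hPdisj : Pairwise fun b b' => Disjoint (P b) (P b')) (hxP : ∀ a b, x a ∉ P b)
    (hxadj : ∀ a b, ∃ v ∈ P b, G.Adj (x a) v) :
    IsMinor (completeBipartiteGraph α β) G := by
  refine ⟨Sum.elim (fun a => {x a}) P, ?_, ?_, ?_, ?_⟩
  · rintro (a | b)
    exacts [Set.singleton_nonempty _, Set.nonempty_coe_sort.mp (hP b).nonempty]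
  · rintro (a | b)
    · simp only [Sum.elim_inl, induce_singleton_eq_top]
      exact connected_top
    · exact hP b
  · rintro (a | b) (a' | b') hne
    · exact Set.disjoint_singleton.mpr (hx.ne fun h => hne (h ▸ rfl))
    · exact Set.disjoint_singleton_left.mpr (hxP a b')
    · exact Set.disjoint_singleton_right.mpr (hxP a' b)
    · exact hPdisj fun h => hne (h ▸ rfl)
  · rintro (a | b) (a' | b') hadj
    · simp at hadj
    · obtain ⟨v, hv, hav⟩ := hxadj a b'
      exact ⟨x a, rfl, v, hv, hav⟩
    · obtain ⟨v, hv, hav⟩ := hxadj a' b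
      exact ⟨v, hv, x a', rfl, hav.symm⟩
    · simp at hadj

def IndPath.homInduce {G : SimpleGraph V} (L : IndPath G) {U : Set V} (hU : L.verts ⊆ U) :
    pathGraph L.n →g G.induce U :=
  ⟨fun p => ⟨L.f p, hU ⟨p, rfl⟩⟩, fun h => (L.adj _ _).mpr (pathGraph_adj.mp h)⟩

lemma Constellation.isMinor_completeBipartiteGraph {G : SimpleGraph V} {s l : ℕ}
    (c : Constellation G s l) {α : Type*} {π : α → V} (hπ : Function.Injective π)
    (hπS : ∀ a, π a ∈ c.S) :
    IsMinor (completeBipartiteGraph α (Fin l))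
      (G.induce ((↑c.S : Set V) ∪ ⋃ i, (c.P i).verts)) := by
  have hPU : ∀ i, (c.P i).verts ⊆ (↑c.S : Set V) ∪ ⋃ i, (c.P i).verts :=
    fun i => Set.subset_union_of_subset_right (Set.subset_iUnion (fun j => (c.P j).verts) i) _
  refine _root_.isMinor_completeBipartiteGraph (x := fun a => ⟨π a, Or.inl (hπS a)⟩)
    (P := fun i => Set.range ((c.P i).homInduce (hPU i)))
    (fun a b h => hπ (congrArg Subtype.val h))
    (fun i => connected_induce_range _ ((connected_iff _).mpr
      ⟨pathGraph_preconnected _, ⟨⟨0, (c.P i).npos⟩⟩⟩))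
    ?_ ?_ ?_
  · intro i j hij
    rw [Set.disjoint_left]
    rintro _ ⟨p, rfl⟩ ⟨q, hq⟩
    exact Set.disjoint_left.mp (c.disj i j hij) ⟨p, rfl⟩ ⟨q, congrArg Subtype.val hq⟩
  · rintro a i ⟨p, hp⟩
    exact c.sep _ (hπS a) i ⟨p, congrArg Subtype.val hp⟩
  · intro a i
    obtain ⟨_, ⟨p, rfl⟩, hadj⟩ := c.nbr _ (hπS a) i
    exact ⟨_, ⟨p, rfl⟩, hadj⟩

lemma TreewidthLe.le_of_isMinor_completeBipartiteGraph {W : Type u} [Finite W]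
    {G : SimpleGraph W} {s w : ℕ} (htw : TreewidthLe G w)
    (hm : IsMinor (completeBipartiteGraph (Fin s) (Fin s)) G) : s ≤ w := by
  rcases Nat.eq_zero_or_pos s with rfl | hs
  · exact Nat.zero_le w
  obtain ⟨ι, T, hT, hc, t, -, htconn, htadj, hbag⟩ := htw
  obtain ⟨B, hBne, hBconn, hBdisj, hBadj⟩ := hm
  have ht : ∀ v, T.WalkConnectedOn (t v) :=
    fun v => walkConnectedOn_of_preconnected_induce (htconn v).preconnected
  obtain ⟨z, hz⟩ := hT.exists_add_one_le_ncard_of_completeBipartite hc hs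
    (R := fun a => ⋃ v ∈ B a, t v)
    (fun a => walkConnectedOn_biUnion ht htadj
      (walkConnectedOn_of_preconnected_induce (hBconn a).preconnected))
    (fun a => by
      obtain ⟨v, hv⟩ := hBne a
      obtain ⟨y, hy⟩ := (htconn v).nonempty
      exact ⟨y, Set.mem_biUnion hv hy⟩)
    (fun i j => by
      obtain ⟨u, hu, v, hv, huv⟩ := hBadj (.inl i) (.inr j) (by simp)
      obtain ⟨y, hyu, hyv⟩ := htadj u v huv
      exact ⟨y, Set.mem_biUnion hu hyu, Set.mem_biUnion hv hyv⟩)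
  have : Nonempty W := ⟨(hBne (.inl ⟨0, hs⟩)).some⟩
  have hpick : ∀ a ∈ {a | z ∈ ⋃ v ∈ B a, t v}, ∃ v ∈ B a, z ∈ t v :=
    fun a ha => by simpa using ha
  choose! g hgB hgt using hpick
  have hg : Set.InjOn g {a | z ∈ ⋃ v ∈ B a, t v} := fun a ha b hb hab => by
    by_contra hne
    exact Set.disjoint_left.mp (hBdisj a b hne) (hgB a ha) (hab ▸ hgB b hb)
  have := Set.ncard_le_ncard_of_injOn g hgt hg (Set.toFinite {v | z ∈ t v})
  have := hbag z
  omega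

theorem stmt12_general (h s : ℕ)
    (V : Type u) (G : SimpleGraph V) (A : PDArray G s h) :
    IsMinor (completeBipartiteGraph (Fin s) (Fin s)) (G.induce A.verts) ∧
    ∀ w : ℕ, TreewidthLe (G.induce A.verts) w → s ≤ w := by
  have hminor : IsMinor (completeBipartiteGraph (Fin s) (Fin s)) (G.induce A.verts) :=
    A.toConstellation.isMinor_completeBipartiteGraph A.π_inj A.π_mem
  have : Finite A.verts :=
    (A.S.finite_toSet.union (Set.finite_iUnion fun i => Set.finite_range _)).to_subtype
  exact ⟨hminor, fun w hw => hw.le_of_isMinor_completeBipartiteGraph hminor⟩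

/-- If `𝔞 = (S, 𝓛)` is an `(s,h)`-array in `G`, then `G[S ∪ V(𝓛)]` contains
`K_{s,s}` as a minor and hence has treewidth at least `s`. -/
theorem stmt12 (h s : ℕ) (hh : 0 < h) (hs : 0 < s)
    (V : Type u) (G : SimpleGraph V) (A : PDArray G s h) :
    IsMinor (completeBipartiteGraph (Fin s) (Fin s)) (G.induce A.verts) ∧
    ∀ w : ℕ, TreewidthLe (G.induce A.verts) w → s ≤ w :=
  stmt12_general h s V G A
end
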